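/- arXiv:2605.20361 — 7 statements merged into one kernel-verified Lean document; each statement's English description precedes it below -/
import Mathlib

section
/- For integers 0 ≤ a < b, given a cycle C of length b, there exists a set U of a edges of C such that every arc (path contained in the cycle) A of C satisfies |E(A) ∩ U| ≤ |E(A)|·(a/b) + 1. -/
/-!
Take for `U` the positions `i` where `⌊i a / b⌋` jumps, i.e. `⌊(i + 1) a / b⌋ ≠ ⌊i a / b⌋`.
Since `a ≤ b`, the sequence `⌊n a / b⌋` grows by `0` or `1` at each step, so the jumps in
`[m, m + L)` number `⌊(m + L) a / b⌋ - ⌊m a / b⌋ ≤ ⌊L a / b⌋ + 1`; the whole cycle (`m = 0`,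
`L = b`) carries exactly `a` jumps. The jump condition is `b`-periodic in `i`, so `U` is a
well-defined set of edges of the cycle and the count applies to every arc.
-/

open Finset

theorem card_filter_range_succ_ne_add {g : ℕ → ℕ} (hmono : ∀ n, g n ≤ g (n + 1))
    (hstep : ∀ n, g (n + 1) ≤ g n + 1) (L : ℕ) :
    #{j ∈ range L | g (j + 1) ≠ g j} + g 0 = g L := by
  induction L with
  | zero => simp
  | succ L ih =>
    rw [range_add_one, filter_insert]
    split_ifs with hjump
    · rw [card_insert_of_notMem (by simp)]
      have := hmono L; have := hstep L
      omega
    · omega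

namespace Nat

theorem succ_mul_div_le_mul_div_add_one {a b : ℕ} (hab : a ≤ b) (n : ℕ) :
    (n + 1) * a / b ≤ n * a / b + 1 := by
  rcases b.eq_zero_or_pos with rfl | hb
  · simp
  calc (n + 1) * a / b ≤ (n * a + b) / b := by
        rw [add_one_mul]; exact Nat.div_le_div_right (by omega)
    _ = n * a / b + 1 := Nat.add_div_right _ hb

theorem periodic_mul_div_succ_ne (a b : ℕ) :
    Function.Periodic (fun n => (n + 1) * a / b ≠ n * a / b) b := by
  intro n
  rcases b.eq_zero_or_pos with rfl | hb
  · simp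
  have shift : ∀ m, (m + b) * a / b = m * a / b + a := fun m => by
    rw [add_mul, Nat.add_mul_div_left _ _ hb]
  simp only [add_right_comm n b 1, shift, ne_eq, Nat.add_right_cancel_iff]

end Nat

namespace ZMod

theorem card_filter_range_natCast_mem {b : ℕ} [NeZero b] (U : Finset (ZMod b)) :
    #((range b).filter fun j : ℕ => (j : ZMod b) ∈ U) = #U := by
  have : (range b).filter (fun j : ℕ => (j : ZMod b) ∈ U) = U.image val := by
    ext j
    simp only [mem_filter, mem_range, mem_image]
    constructor
    · rintro ⟨hj, hU⟩
      exact ⟨j, hU, val_natCast_of_lt hj⟩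
    · rintro ⟨u, hu, rfl⟩
      exact ⟨val_lt u, by rwa [natCast_zmod_val]⟩
  rw [this, card_image_of_injective _ (val_injective b)]

end ZMod

def jumpSet (a b : ℕ) [NeZero b] : Finset (ZMod b) :=
  {i | (i.val + 1) * a / b ≠ i.val * a / b}

variable {a b : ℕ} [NeZero b]

theorem add_natCast_mem_jumpSet (x : ZMod b) (j : ℕ) :
    x + (j : ZMod b) ∈ jumpSet a b ↔ (x.val + j + 1) * a / b ≠ (x.val + j) * a / b := by
  simp only [jumpSet, mem_filter, mem_univ, true_and, ZMod.val_add, ZMod.val_natCast,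
    Nat.add_mod_mod]
  exact iff_of_eq ((Nat.periodic_mul_div_succ_ne a b).map_mod_nat _)

theorem card_filter_range_add_natCast_mem_jumpSet (hab : a ≤ b) (x : ZMod b) (L : ℕ) :
    #((range L).filter fun j : ℕ => x + (j : ZMod b) ∈ jumpSet a b) + x.val * a / b =
      (x.val + L) * a / b := by
  simp only [add_natCast_mem_jumpSet]
  exact card_filter_range_succ_ne_add (g := fun j => (x.val + j) * a / b)
    (fun n => Nat.div_le_div_right (Nat.mul_le_mul_right _ (by omega)))
    (fun n => Nat.succ_mul_div_le_mul_div_add_one hab _) L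

theorem card_jumpSet (hab : a ≤ b) : #(jumpSet a b) = a := by
  have h := card_filter_range_add_natCast_mem_jumpSet hab 0 b
  simp only [ZMod.val_zero, zero_mul, Nat.zero_div, add_zero, zero_add,
    Nat.mul_div_cancel_left _ (NeZero.pos b)] at h
  rwa [ZMod.card_filter_range_natCast_mem] at h

/-- For integers `0 ≤ a < b`, given a cycle `C` of length `b`
(vertices `c_1, …, c_b` indexed by `ZMod b`, with the edge `{c_i, c_{i+1}}`
identified with its starting index `i`), there is a set `U` of `a` edges of `C`
such that every arc `A` of `C` (the `L` consecutive edges starting at position `x`,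
`L ≤ b`) satisfies `|E(A) ∩ U| ≤ |E(A)| · (a/b) + 1`. -/
theorem stmt_0 (a b : ℕ) (hab : a < b) :
    ∃ U : Finset (ZMod b), U.card = a ∧
      ∀ (x : ZMod b) (L : ℕ), L ≤ b →
        ((((Finset.range L).filter (fun j : ℕ => x + (j : ZMod b) ∈ U)).card : ℚ)
          ≤ (L : ℚ) * a / b + 1) := by
  have : NeZero b := ⟨by omega⟩
  refine ⟨jumpSet a b, card_jumpSet hab.le, fun x L _ => ?_⟩
  set arc := (range L).filter fun j : ℕ => x + (j : ZMod b) ∈ jumpSet a b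
  have hcount : #arc + x.val * a / b = (x.val + L) * a / b :=
    card_filter_range_add_natCast_mem_jumpSet hab.le x L
  have hsplit := Nat.add_div_le_div_add_div_add_one (x.val * a) (L * a) b
  have hcard : #arc ≤ L * a / b + 1 := by
    rw [add_mul] at hcount; omega
  calc (#arc : ℚ) ≤ ((L * a / b : ℕ) : ℚ) + 1 := by exact_mod_cast hcard
    _ ≤ (L : ℚ) * a / b + 1 := by gcongr; exact_mod_cast Nat.cast_div_le (α := ℚ)
end

section
/- Let n!·2^{4m}·((1/12)·n^{−1/(3−k/n)})^m with m = 3n−3−k and 3 ≤ k ≤ n. Then this quantity is at most n^{O(1)}·((4/3)^3/e)^n, and in particular tends to 0 as n → ∞. -/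
/-!
Stirling's bound `n! ≤ e √n (n/e)^n` leaves a factor `n^n`, which `p^m`, `p = n^{-1/(3-k/n)}/12`,
almost cancels: `m/(3-k/n) = n - 3n/(3n-k) ≥ n - 3/2`. What remains of `16^m 12^{-m}` is
`(4/3)^m ≤ (4/3)^{3n}`, so the quantity is at most `e n² ((4/3)³/e)^n`, and `(4/3)³ = 64/27 < e`.
-/

open Real Filter

noncomputable def scaledProb (n k : ℕ) : ℝ :=
  (1 / 12) * (n : ℝ) ^ (-(1 / (3 - (k : ℝ) / n)))

lemma Stirling.stirlingSeq_le_exp_one_div_sqrt_two {n : ℕ} (hn : n ≠ 0) :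
    Stirling.stirlingSeq n ≤ exp 1 / √2 := by
  obtain ⟨n, rfl⟩ := Nat.exists_eq_succ_of_ne_zero hn
  simpa using Stirling.stirlingSeq'_antitone (Nat.zero_le n)

lemma factorial_le_exp_one_mul_sqrt_mul_div_pow {n : ℕ} (hn : n ≠ 0) :
    (n.factorial : ℝ) ≤ exp 1 * √n * (n / exp 1) ^ n := by
  have hpos : 0 < √(2 * n : ℝ) * (n / exp 1) ^ n := by positivity
  have h := Stirling.stirlingSeq_le_exp_one_div_sqrt_two hn
  rw [Stirling.stirlingSeq, div_le_iff₀ hpos] at h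
  calc (n.factorial : ℝ) ≤ exp 1 / √2 * (√(2 * n : ℝ) * (n / exp 1) ^ n) := h
    _ = exp 1 * √n * (n / exp 1) ^ n := by
      rw [sqrt_mul zero_le_two]; field_simp

lemma sub_div_three_sub_div_le {n k : ℝ} (hn : 0 < n) (hkn : k ≤ n) :
    n - (3 * n - 3 - k) / (3 - k / n) ≤ 3 / 2 := by
  have hD : 3 - k / n = (3 * n - k) / n := by field_simp
  have h3nk : 0 < 3 * n - k := by linarith
  rw [hD, div_div_eq_mul_div, sub_le_comm, le_div_iff₀ h3nk]
  nlinarith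

lemma two_pow_mul_scaledProb_pow {n k m : ℕ} :
    (2 : ℝ) ^ (4 * m) * scaledProb n k ^ m
      = (4 / 3) ^ m * (n : ℝ) ^ (-(m / (3 - (k : ℝ) / n))) := by
  rw [scaledProb, mul_pow, ← rpow_mul_natCast (Nat.cast_nonneg n), pow_mul]
  rw [show -(1 / (3 - (k : ℝ) / n)) * m = -(m / (3 - (k : ℝ) / n)) by ring]
  rw [show (4 / 3 : ℝ) ^ m = (2 ^ 4) ^ m * (1 / 12) ^ m by rw [← mul_pow]; norm_num]
  ring

lemma factorial_mul_two_pow_mul_scaledProb_pow_le {n k : ℕ} (hn : 2 ≤ n) (hkn : k ≤ n) :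
    (n.factorial : ℝ) * 2 ^ (4 * (3 * n - 3 - k)) * scaledProb n k ^ (3 * n - 3 - k)
      ≤ exp 1 * n ^ 2 * ((4 / 3 : ℝ) ^ 3 / exp 1) ^ n := by
  set m := 3 * n - 3 - k with hm
  have hn0 : (0 : ℝ) < n := by positivity
  have hmR : (m : ℝ) = 3 * n - 3 - k := by
    rw [hm, Nat.cast_sub (by omega), Nat.cast_sub (by omega)]; push_cast; ring
  have hexp : (n : ℝ) - m / (3 - (k : ℝ) / n) ≤ 3 / 2 :=
    hmR ▸ sub_div_three_sub_div_le hn0 (by exact_mod_cast hkn)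
  have hpow : (n : ℝ) ^ n * (n : ℝ) ^ (-(m / (3 - (k : ℝ) / n))) ≤ (n : ℝ) ^ (3 / 2 : ℝ) := by
    rw [← rpow_natCast, ← rpow_add hn0, ← sub_eq_add_neg]
    exact rpow_le_rpow_of_exponent_le (by exact_mod_cast (by omega : 1 ≤ n)) hexp
  have hsqrt : √(n : ℝ) * (n : ℝ) ^ (3 / 2 : ℝ) = n ^ 2 := by
    rw [sqrt_eq_rpow, ← rpow_add hn0]; norm_num
  have h43 : (4 / 3 : ℝ) ^ m ≤ (4 / 3) ^ (3 * n) := pow_le_pow_right₀ (by norm_num) (by omega)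
  calc (n.factorial : ℝ) * 2 ^ (4 * m) * scaledProb n k ^ m
      = n.factorial * (4 / 3) ^ m * (n : ℝ) ^ (-(m / (3 - (k : ℝ) / n))) := by
        rw [mul_assoc, two_pow_mul_scaledProb_pow, mul_assoc]
    _ ≤ (exp 1 * √n * (n / exp 1) ^ n) * (4 / 3) ^ (3 * n)
          * (n : ℝ) ^ (-(m / (3 - (k : ℝ) / n))) := by
        gcongr
        exact factorial_le_exp_one_mul_sqrt_mul_div_pow (by omega)
    _ = exp 1 * √n * ((n : ℝ) ^ n * (n : ℝ) ^ (-(m / (3 - (k : ℝ) / n))))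
          * ((4 / 3 : ℝ) ^ 3 / exp 1) ^ n := by
        rw [pow_mul, div_pow (n : ℝ), div_pow ((4 / 3 : ℝ) ^ 3)]; ring
    _ ≤ exp 1 * √n * (n : ℝ) ^ (3 / 2 : ℝ) * ((4 / 3 : ℝ) ^ 3 / exp 1) ^ n := by
        gcongr
    _ = exp 1 * n ^ 2 * ((4 / 3 : ℝ) ^ 3 / exp 1) ^ n := by
        rw [mul_assoc (exp 1), hsqrt]

lemma four_thirds_cube_div_exp_one_lt_one : (4 / 3 : ℝ) ^ 3 / exp 1 < 1 := by
  rw [div_lt_one (exp_pos 1)]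
  linarith [exp_one_gt_d9]

/-- With `m = 3n - 3 - k` and `3 ≤ k ≤ n`, the quantity
`n!·2^(4m)·((1/12)·n^(-1/(3-k/n)))^m` is at most `n^{O(1)}·((4/3)^3/e)^n`,
and in particular tends to `0` as `n → ∞`. -/
theorem stmt_6 (k : ℕ → ℕ) (hk : ∀ n, 3 ≤ n → 3 ≤ k n ∧ k n ≤ n) :
    (∃ C : ℝ, 0 < C ∧ ∀ n : ℕ, 3 ≤ n →
      (n.factorial : ℝ) * 2 ^ (4 * (3 * n - 3 - k n)) *
          ((1 / 12) * (n : ℝ) ^ (-(1 / (3 - (k n : ℝ) / n)))) ^ (3 * n - 3 - k n)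
        ≤ C * (n : ℝ) ^ C * ((4 / 3 : ℝ) ^ (3 : ℕ) / Real.exp 1) ^ n) ∧
    Filter.Tendsto
      (fun n : ℕ => (n.factorial : ℝ) * 2 ^ (4 * (3 * n - 3 - k n)) *
        ((1 / 12) * (n : ℝ) ^ (-(1 / (3 - (k n : ℝ) / n)))) ^ (3 * n - 3 - k n))
      Filter.atTop (nhds 0) := by
  have hbound (n : ℕ) (hn : 3 ≤ n) :=
    factorial_mul_two_pow_mul_scaledProb_pow_le (by omega : 2 ≤ n) (hk n hn).2
  refine ⟨⟨3, by norm_num, fun n hn => ?_⟩, ?_⟩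
  · refine (hbound n hn).trans ?_
    rw [rpow_ofNat]
    gcongr
    · linarith [exp_one_lt_d9]
    · exact_mod_cast (by omega : 1 ≤ n)
    · norm_num
  · refine squeeze_zero' (Eventually.of_forall fun n => ?_)
      ((eventually_ge_atTop 3).mono fun n hn => hbound n hn) ?_
    · positivity
    · simpa [mul_assoc] using (tendsto_pow_const_mul_const_pow_of_lt_one 2 (by positivity)
        four_thirds_cube_div_exp_one_lt_one).const_mul (exp 1)
end

section
/- Let T be a plane triangulation of an n-gon (outer cycle of length n, all internal vertices on the boundary, i.e., s = 0, triangulated by a 'comb' path so that T is the square of a Hamilton path). Then every subgraph J of T that contains no copy of K_4 is 2-degenerate, and hence every connected subgraph J of T with no K_4 satisfies |E(J)| ≤ 2|V(J)| − 3. -/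
/-- The comb triangulation of an `n`-gon with no interior vertices: the square of a
Hamilton path, i.e. (after relabelling along the path) vertices `0, …, n-1` with
`u ~ v` iff `|u - v| ∈ {1, 2}`. -/
def combTriangulation (n : ℕ) : SimpleGraph (Fin n) :=
  SimpleGraph.fromRel (fun u v => v.val = u.val + 1 ∨ v.val = u.val + 2)

/-- A graph is 2-degenerate: every non-empty (induced) subgraph has a vertex of degree
at most `2`. -/
def TwoDegenerate {V : Type} (G : SimpleGraph V) : Prop :=
  ∀ A : Set V, A.Nonempty → ∃ v ∈ A, ({u | u ∈ A ∧ G.Adj v u}).ncard ≤ 2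

lemma comb_adj {n : ℕ} {a b : Fin n} (h : (combTriangulation n).Adj a b) :
    a ≠ b ∧ (b.val = a.val + 1 ∨ b.val = a.val + 2 ∨ a.val = b.val + 1 ∨ a.val = b.val + 2) := by
  rw [combTriangulation, SimpleGraph.fromRel_adj] at h
  tauto

lemma fin_val_max {n : ℕ} (a b : Fin n) : (max a b).val = max a.val b.val := by
  rcases le_total a b with h | h
  · rw [max_eq_right h, max_eq_right (by exact_mod_cast h)]
  · rw [max_eq_left h, max_eq_left (by exact_mod_cast h)]

lemma fin_val_min {n : ℕ} (a b : Fin n) : (min a b).val = min a.val b.val := by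
  rcases le_total a b with h | h
  · rw [min_eq_left h, min_eq_left (by exact_mod_cast h)]
  · rw [min_eq_right h, min_eq_right (by exact_mod_cast h)]

noncomputable def fmap (n : ℕ) : Sym2 (Fin n) → Fin n × Bool :=
  Sym2.lift ⟨fun a b => (max a b, decide (a.val + 1 = b.val ∨ b.val + 1 = a.val)),
    by intro a b; simp only []; rw [max_comm]; congr 1; rw [decide_eq_decide]; tauto⟩

lemma fmap_apply {n : ℕ} (a b : Fin n) :
    fmap n s(a, b) = (max a b, decide (a.val + 1 = b.val ∨ b.val + 1 = a.val)) := rfl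

lemma fmap_inj {n : ℕ} {a b c d : Fin n} (hab : (combTriangulation n).Adj a b)
    (hcd : (combTriangulation n).Adj c d) (h : fmap n s(a,b) = fmap n s(c,d)) :
    s(a,b) = s(c,d) := by
  obtain ⟨hne1, h1⟩ := comb_adj hab
  obtain ⟨hne2, h2⟩ := comb_adj hcd
  rw [fmap_apply, fmap_apply, Prod.mk.injEq] at h
  obtain ⟨hm, hfl⟩ := h
  have hm' : max a.val b.val = max c.val d.val := by
    rw [← fin_val_max, ← fin_val_max, hm]
  rw [decide_eq_decide] at hfl
  have hne1' : a.val ≠ b.val := fun h => hne1 (Fin.val_injective h)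
  have hne2' : c.val ≠ d.val := fun h => hne2 (Fin.val_injective h)
  have : (a.val = c.val ∧ b.val = d.val) ∨ (a.val = d.val ∧ b.val = c.val) := by omega
  rw [Sym2.eq_iff]
  rcases this with ⟨h1, h2⟩ | ⟨h1, h2⟩
  · exact Or.inl ⟨Fin.val_injective h1, Fin.val_injective h2⟩
  · exact Or.inr ⟨Fin.val_injective h1, Fin.val_injective h2⟩

/-- Let `T` be the plane triangulation of an `n`-gon with all vertices
on the boundary (`s = 0`), triangulated by a comb path, so that `T` is the square of a
Hamilton path. Then every subgraph `J` of `T` containing no `K₄` is 2-degenerate, and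
hence every connected subgraph of `T` with at least one edge and no `K₄` satisfies
`|E(J)| ≤ 2|V(J)| - 3`. -/
theorem stmt_8 (n : ℕ) :
    (∀ J : SimpleGraph (Fin n), J ≤ combTriangulation n → J.CliqueFree 4 →
      TwoDegenerate J) ∧
    (∀ J : (combTriangulation n).Subgraph, J.Connected → J.coe.CliqueFree 4 →
      J.edgeSet.Nonempty → (J.edgeSet.ncard : ℤ) ≤ 2 * J.verts.ncard - 3) := by
  constructor
  · -- 2-degeneracy
    intro J hJ _ A hA
    obtain ⟨v, hvA, hmax⟩ := Set.exists_max_image A id (Set.toFinite A) hA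
    refine ⟨v, hvA, ?_⟩
    set S : Set (Fin n) := {u | u ∈ A ∧ J.Adj v u} with hS
    have himg : Fin.val '' S ⊆ ({v.val - 1, v.val - 2} : Set ℕ) := by
      rintro x ⟨u, ⟨huA, hadj⟩, rfl⟩
      obtain ⟨hne, hd⟩ := comb_adj (hJ hadj)
      have hle : u.val ≤ v.val := hmax u huA
      have hne' : v.val ≠ u.val := fun h => hne (Fin.val_injective h)
      simp only [Set.mem_insert_iff, Set.mem_singleton_iff]
      omega
    calc S.ncard = (Fin.val '' S).ncard :=
          (Set.ncard_image_of_injective S Fin.val_injective).symm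
      _ ≤ ({v.val - 1, v.val - 2} : Set ℕ).ncard :=
          Set.ncard_le_ncard himg (Set.toFinite _)
      _ ≤ 2 := by
          refine le_trans (Set.ncard_insert_le _ _) ?_
          simp [Set.ncard_singleton]
  · -- edge bound
    intro J _ _ hE
    classical
    set V : Finset (Fin n) := J.verts.toFinite.toFinset with hVdef
    set E : Finset (Sym2 (Fin n)) := J.edgeSet.toFinite.toFinset with hEdef
    obtain ⟨e, he⟩ := hE
    have heE : ∀ {e' : Sym2 (Fin n)}, e' ∈ E ↔ e' ∈ J.edgeSet := by
      intro e'; rw [hEdef, Set.Finite.mem_toFinset]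
    have hvV : ∀ {w : Fin n}, w ∈ V ↔ w ∈ J.verts := by
      intro w; rw [hVdef, Set.Finite.mem_toFinset]
    -- endpoints of any edge are in V and adjacent in comb
    have hend : ∀ {a b : Fin n}, s(a,b) ∈ E →
        a ∈ V ∧ b ∈ V ∧ (combTriangulation n).Adj a b := by
      intro a b hab
      rw [heE, SimpleGraph.Subgraph.mem_edgeSet] at hab
      exact ⟨hvV.2 hab.fst_mem, hvV.2 hab.snd_mem, J.adj_sub hab⟩
    induction e using Sym2.ind with
    | _ a b =>
    have habE : s(a,b) ∈ E := heE.2 he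
    obtain ⟨haV, hbV, hadj⟩ := hend habE
    have hne : a ≠ b := (comb_adj hadj).1
    have hVne : V.Nonempty := ⟨a, haV⟩
    set m0 : Fin n := V.min' hVne with hm0
    have hm0V : m0 ∈ V := V.min'_mem hVne
    have hVe : (V.erase m0).Nonempty := by
      rcases eq_or_ne a m0 with rfl | h
      · exact ⟨b, Finset.mem_erase.2 ⟨hne.symm, hbV⟩⟩
      · exact ⟨a, Finset.mem_erase.2 ⟨h, haV⟩⟩
    set m1 : Fin n := (V.erase m0).min' hVe with hm1
    have hm1V : m1 ∈ V.erase m0 := Finset.min'_mem _ hVe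
    -- key subset
    have hsub : E.image (fmap n) ⊆
        insert (m1, decide (m0.val + 1 = m1.val))
          (((V.erase m0).erase m1) ×ˢ (Finset.univ : Finset Bool)) := by
      intro p hp
      obtain ⟨e', he'E, hpe⟩ := Finset.mem_image.1 hp
      induction e' using Sym2.ind with
      | _ c d =>
      obtain ⟨hcV, hdV, hcd⟩ := hend he'E
      obtain ⟨hnecd, hdiff⟩ := comb_adj hcd
      rw [fmap_apply] at hpe
      set y : Fin n := max c d with hy
      set x : Fin n := min c d with hx
      have hxV : x ∈ V := by
        rcases le_total c d with h | h
        · rw [hx, min_eq_left h]; exact hcV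
        · rw [hx, min_eq_right h]; exact hdV
      have hyV : y ∈ V := by
        rcases le_total c d with h | h
        · rw [hy, max_eq_right h]; exact hdV
        · rw [hy, max_eq_left h]; exact hcV
      have hne' : c.val ≠ d.val := fun h => hnecd (Fin.val_injective h)
      have h1x : x.val = min c.val d.val := fin_val_min c d
      have h2y : y.val = max c.val d.val := fin_val_max c d
      have hxy : x.val < y.val := by omega
      have hm0x : m0.val ≤ x.val := by
        have := V.min'_le x hxV
        exact_mod_cast this
      have hym0 : y ≠ m0 := by
        intro h
        have : y.val = m0.val := by rw [h]
        omega
      have hyVe : y ∈ V.erase m0 := Finset.mem_erase.2 ⟨hym0, hyV⟩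
      rcases eq_or_ne y m1 with hy1 | hy1
      · -- y = m1: then x = m0 and the flag is determined
        have hxm0 : x = m0 := by
          by_contra hxm0
          have hxVe : x ∈ V.erase m0 := Finset.mem_erase.2 ⟨hxm0, hxV⟩
          have h5 := (V.erase m0).min'_le x hxVe
          rw [← hm1] at h5
          have h6 : m1.val ≤ x.val := by exact_mod_cast h5
          have h7 : y.val = m1.val := by rw [hy1]
          omega
        have hflag : decide (c.val + 1 = d.val ∨ d.val + 1 = c.val)
            = decide (m0.val + 1 = m1.val) := by
          rw [decide_eq_decide]
          have h3 : m0.val = x.val := by rw [hxm0]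
          have h4 : m1.val = y.val := by rw [hy1]
          omega
        rw [← hpe, hy1, hflag]
        exact Finset.mem_insert_self _ _
      · refine Finset.mem_insert_of_mem (Finset.mem_product.2 ⟨?_, Finset.mem_univ _⟩)
        have : p.1 = y := by rw [← hpe]
        rw [← hpe]
        exact Finset.mem_erase.2 ⟨hy1, hyVe⟩
    -- injectivity
    have hinjOn : Set.InjOn (fmap n) E := by
      intro e₁ he₁ e₂ he₂ h
      induction e₁ using Sym2.ind with
      | _ a₁ b₁ =>
      induction e₂ using Sym2.ind with
      | _ a₂ b₂ =>
      exact fmap_inj (hend (Finset.mem_coe.1 he₁)).2.2 (hend (Finset.mem_coe.1 he₂)).2.2 h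
    have hcard1 : E.card = (E.image (fmap n)).card :=
      (Finset.card_image_of_injOn hinjOn).symm
    have hcard2 : (E.image (fmap n)).card ≤
        (((V.erase m0).erase m1) ×ˢ (Finset.univ : Finset Bool)).card + 1 :=
      le_trans (Finset.card_le_card hsub) (Finset.card_insert_le _ _)
    have hprod : (((V.erase m0).erase m1) ×ˢ (Finset.univ : Finset Bool)).card
        = ((V.erase m0).erase m1).card * 2 := by
      rw [Finset.card_product, Finset.card_univ, Fintype.card_bool]
    have hc1 : (V.erase m0).card = V.card - 1 := Finset.card_erase_of_mem hm0V
    have hc2 : ((V.erase m0).erase m1).card = (V.erase m0).card - 1 :=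
      Finset.card_erase_of_mem hm1V
    have hV2 : 2 ≤ V.card := by
      have hm1V' : m1 ∈ V := (Finset.mem_erase.1 hm1V).2
      have hne01 : m0 ≠ m1 := fun h => (Finset.mem_erase.1 hm1V).1 h.symm
      exact Finset.one_lt_card.2 ⟨m0, hm0V, m1, hm1V', hne01⟩
    have hEcard : E.card + 3 ≤ 2 * V.card := by omega
    have hE' : J.edgeSet.ncard = E.card := Set.ncard_eq_toFinset_card _ _
    have hV' : J.verts.ncard = V.card := Set.ncard_eq_toFinset_card _ _
    rw [hE', hV']
    omega
end

section
/- Let T be a graph such that every connected subgraph without a K_4 is 2-degenerate, and suppose every K_4 in T arises from a 'center' vertex of degree 3 whose deletion from any subgraph preserves connectivity of components. Then every non-empty subgraph I ⊆ T with c connected components and r(I) copies of K_4 satisfies |E(I)| ≤ 2|V(I)| + r(I) − 3c. -/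
namespace SimpleGraph

variable {V : Type} {G : SimpleGraph V}

theorem IsNClique.exists_adj_of_mem {n : ℕ} {s : Finset V} (hs : G.IsNClique n s) (hn : 2 ≤ n)
    {x : V} (hx : x ∈ s) : ∃ y ∈ s, G.Adj x y := by
  obtain ⟨y, hy, hyx⟩ := s.exists_mem_ne (by rw [hs.card_eq]; omega) x
  exact ⟨y, hy, hs.isClique (Finset.mem_coe.mpr hx) (Finset.mem_coe.mpr hy) hyx.symm⟩

namespace Subgraph

theorem ncard_edgeSet_coe (H : G.Subgraph) : H.coe.edgeSet.ncard = H.edgeSet.ncard := by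
  rw [← H.image_coe_edgeSet_coe,
    Set.ncard_image_of_injective _ (Sym2.map.injective Subtype.val_injective)]

theorem mem_verts_of_isNClique {I : G.Subgraph} {n : ℕ} (hn : 2 ≤ n) {s : Finset V}
    (hs : I.spanningCoe.IsNClique n s) {x : V} (hx : x ∈ s) : x ∈ I.verts := by
  obtain ⟨y, -, hxy : I.Adj x y⟩ := hs.exists_adj_of_mem hn hx
  exact hxy.fst_mem

theorem coeSubgraph_toSubgraph_adj {H : G.Subgraph} (C : H.coe.ConnectedComponent) {u w : V}
    (hu : u ∈ (Subgraph.coeSubgraph C.toSubgraph).verts) (h : H.Adj u w) :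
    (Subgraph.coeSubgraph C.toSubgraph).Adj u w := by
  obtain ⟨⟨u, hu'⟩, huC, rfl⟩ := hu
  have hadj : H.coe.Adj ⟨u, hu'⟩ ⟨w, h.snd_mem⟩ := h
  rw [coeSubgraph_adj]
  refine ⟨hu', h.snd_mem, huC, ?_, hadj⟩
  change ⟨u, hu'⟩ ∈ C.supp at huC
  rw [ConnectedComponent.mem_supp_iff] at huC ⊢
  rw [← huC, ConnectedComponent.connectedComponentMk_eq_of_adj hadj.symm]

theorem exists_connected_closed_le {I : G.Subgraph} {v₀ : V} (hv₀ : v₀ ∈ I.verts) :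
    ∃ P ≤ I, P.Connected ∧ v₀ ∈ P.verts ∧ ∀ u ∈ P.verts, ∀ w, I.Adj u w → P.Adj u w :=
  let C := I.coe.connectedComponentMk ⟨v₀, hv₀⟩
  ⟨Subgraph.coeSubgraph C.toSubgraph, coeSubgraph_le _, C.connected_toSubgraph.coeSubgraph,
    ⟨⟨v₀, hv₀⟩, rfl, rfl⟩, fun _ hu _ => coeSubgraph_toSubgraph_adj C hu⟩

theorem forall_exists_adj_deleteVerts_of_closed {I P : G.Subgraph}
    (hI : ∀ v ∈ I.verts, ∃ u, I.Adj v u) (hclosed : ∀ u ∈ P.verts, ∀ w, I.Adj u w → P.Adj u w) :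
    ∀ v ∈ (I.deleteVerts P.verts).verts, ∃ u, (I.deleteVerts P.verts).Adj v u := by
  rintro v ⟨hv, hvP⟩
  obtain ⟨u, hvu⟩ := hI v hv
  have huP : u ∉ P.verts := fun huP => hvP (hclosed u huP v hvu.symm).snd_mem
  exact ⟨u, ⟨hv, hvP⟩, ⟨hvu.snd_mem, huP⟩, hvu⟩

/-- `|E(I)| + 3c(I) ≤ 2|V(I)| + r(I)`: the inequality of the theorem with `3c` moved to the left,
so that it can be stated in `ℕ`. -/
def EdgeBound (I : G.Subgraph) : Prop :=
  I.edgeSet.ncard + 3 * Nat.card I.coe.ConnectedComponent ≤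
    2 * I.verts.ncard + (I.spanningCoe.cliqueSet 4).ncard

theorem edgeBound_bot : (⊥ : G.Subgraph).EdgeBound := by
  have : IsEmpty (⊥ : G.Subgraph).verts := Set.isEmpty_coe_sort.mpr rfl
  simp [EdgeBound]

end Subgraph

variable [Finite V]

theorem IsNClique.neighborSet_eq_of_ncard_le {n : ℕ} {s : Finset V} (hs : G.IsNClique (n + 1) s)
    {x : V} (hx : x ∈ s) (hdeg : (G.neighborSet x).ncard ≤ n) :
    G.neighborSet x = ↑s \ {x} := by
  have hsub : ↑s \ {x} ⊆ G.neighborSet x := fun y ⟨hy, hyx⟩ =>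
    hs.isClique (Finset.mem_coe.mpr hx) hy (Ne.symm hyx)
  refine (Set.eq_of_subset_of_ncard_le hsub ?_).symm
  rw [Set.ncard_sdiff_singleton_of_mem (Finset.mem_coe.mpr hx), Set.ncard_coe_finset, hs.card_eq]
  omega

theorem Subgraph.ncard_edgeSet_le_deleteVerts_add (H : G.Subgraph) (v : V) :
    H.edgeSet.ncard ≤ (H.deleteVerts {v}).edgeSet.ncard + (H.neighborSet v).ncard := by
  have hsub : H.edgeSet ⊆
      (H.deleteVerts {v}).edgeSet ∪ (fun u => s(v, u)) '' H.neighborSet v := by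
    intro e he
    induction e with
    | h a b =>
      rw [Subgraph.mem_edgeSet] at he
      by_cases ha : a = v
      · subst ha; exact Or.inr ⟨b, he, rfl⟩
      by_cases hb : b = v
      · subst hb; exact Or.inr ⟨a, he.symm, Sym2.eq_swap⟩
      · exact Or.inl ⟨⟨he.fst_mem, ha⟩, ⟨he.snd_mem, hb⟩, he⟩
  calc H.edgeSet.ncard ≤ _ := Set.ncard_le_ncard hsub
    _ ≤ _ := Set.ncard_union_le _ _
    _ ≤ _ := by gcongr; exact Set.ncard_image_le

theorem _root_.TwoDegenerate.ncard_edgeSet_induce_add_three_le (hG : TwoDegenerate G)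
    {A : Set V} (hA : 2 ≤ A.ncard) :
    ((⊤ : G.Subgraph).induce A).edgeSet.ncard + 3 ≤ 2 * A.ncard := by
  induction h : A.ncard using Nat.strong_induction_on generalizing A with
  | _ n ih =>
  rcases hA.eq_or_lt with h2 | h3
  · obtain ⟨p, q, hpq, rfl⟩ := Set.ncard_eq_two.mp h2.symm
    have hsub : ((⊤ : G.Subgraph).induce {p, q}).edgeSet ⊆ {s(p, q)} := by
      intro e he
      induction e with
      | h a b =>
        simp only [Subgraph.mem_edgeSet, Subgraph.induce_adj, Set.mem_insert_iff,
          Set.mem_singleton_iff, Subgraph.top_adj] at he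
        obtain ⟨ha | ha, hb | hb, hab⟩ := he <;> subst ha hb
        · exact absurd rfl hab.ne
        · rfl
        · exact Sym2.eq_swap
        · exact absurd rfl hab.ne
    have := Set.ncard_le_ncard hsub
    rw [Set.ncard_singleton] at this
    omega
  · obtain ⟨v, hvA, hv⟩ := hG A (Set.nonempty_of_ncard_ne_zero (by omega))
    have hdel := ((⊤ : G.Subgraph).induce A).ncard_edgeSet_le_deleteVerts_add v
    have hdelete : ((⊤ : G.Subgraph).induce A).deleteVerts {v} =
        (⊤ : G.Subgraph).induce (A \ {v}) := by
      ext <;> simp; tauto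
    have hnbr : ((⊤ : G.Subgraph).induce A).neighborSet v = {u | u ∈ A ∧ G.Adj v u} := by
      ext; simp [hvA]
    have hcard := Set.ncard_sdiff_singleton_add_one hvA
    have := ih (A \ {v}).ncard (by omega) (by omega) rfl
    rw [hdelete, hnbr] at hdel
    omega

theorem _root_.TwoDegenerate.ncard_edgeSet_add_three_le (hG : TwoDegenerate G)
    (hV : 2 ≤ Nat.card V) : G.edgeSet.ncard + 3 ≤ 2 * Nat.card V := by
  have h := hG.ncard_edgeSet_induce_add_three_le (A := (⊤ : G.Subgraph).verts) (by simpa)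
  rwa [Subgraph.induce_self_verts, Subgraph.edgeSet_top, Subgraph.verts_top,
    Set.ncard_univ] at h

namespace Subgraph

theorem ncard_edgeSet_add_three_le (H : G.Subgraph) (hH : TwoDegenerate H.coe)
    (h2 : 2 ≤ H.verts.ncard) : H.edgeSet.ncard + 3 ≤ 2 * H.verts.ncard := by
  have h := hH.ncard_edgeSet_add_three_le (by rwa [Nat.card_coe_set_eq])
  rwa [ncard_edgeSet_coe, Nat.card_coe_set_eq] at h

theorem card_connectedComponent_le_of_forall_reachable {H J : G.Subgraph} (hle : J ≤ H)
    (h : ∀ v (hv : v ∈ H.verts), ∃ w, ∃ hw : w ∈ J.verts,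
      H.coe.Reachable ⟨v, hv⟩ ⟨w, hle.1 hw⟩) :
    Nat.card H.coe.ConnectedComponent ≤ Nat.card J.coe.ConnectedComponent := by
  refine Nat.card_le_card_of_surjective (ConnectedComponent.map (inclusion hle)) fun C => ?_
  induction C using ConnectedComponent.ind with
  | h v =>
    obtain ⟨w, hw, hvw⟩ := h v v.2
    exact ⟨J.coe.connectedComponentMk ⟨w, hw⟩, ConnectedComponent.sound hvw.symm⟩

theorem card_connectedComponent_le_succ {H J : G.Subgraph} (hle : J ≤ H) {v₀ : V}
    (hv₀ : v₀ ∈ H.verts)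
    (h : ∀ v (hv : v ∈ H.verts), v ∈ J.verts ∨ H.coe.Reachable ⟨v, hv⟩ ⟨v₀, hv₀⟩) :
    Nat.card H.coe.ConnectedComponent ≤ Nat.card J.coe.ConnectedComponent + 1 := by
  rw [← Finite.card_option]
  refine Nat.card_le_card_of_surjective
    (fun o => o.elim (H.coe.connectedComponentMk ⟨v₀, hv₀⟩)
      (ConnectedComponent.map (inclusion hle))) fun C => ?_
  induction C using ConnectedComponent.ind with
  | h v =>
    rcases h v v.2 with hv | hv
    · exact ⟨some (J.coe.connectedComponentMk ⟨v, hv⟩), rfl⟩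
    · exact ⟨none, ConnectedComponent.sound hv.symm⟩

theorem ncard_verts_deleteVerts_lt {I : G.Subgraph} {S : Set V} {v : V} (hv : v ∈ I.verts)
    (hvS : v ∈ S) : (I.deleteVerts S).verts.ncard < I.verts.ncard :=
  Set.ncard_lt_ncard (Set.sdiff_ssubset_left_iff.mpr ⟨v, hv, hvS⟩)

theorem ncard_cliqueSet_le_of_le {H J : G.Subgraph} (hle : J ≤ H) (n : ℕ) :
    (J.spanningCoe.cliqueSet n).ncard ≤ (H.spanningCoe.cliqueSet n).ncard :=
  Set.ncard_le_ncard (cliqueSet_mono (spanningCoe_le_of_le hle))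

theorem ncard_cliqueSet_lt_of_le {H J : G.Subgraph} (hle : J ≤ H) {n : ℕ} (hn : 2 ≤ n)
    {s : Finset V} (hs : H.spanningCoe.IsNClique n s) {x : V} (hx : x ∈ s)
    (hxJ : x ∉ J.verts) :
    (J.spanningCoe.cliqueSet n).ncard < (H.spanningCoe.cliqueSet n).ncard := by
  refine Set.ncard_lt_ncard ⟨cliqueSet_mono (spanningCoe_le_of_le hle), fun hsJ => ?_⟩
  exact hxJ (mem_verts_of_isNClique hn (hsJ hs) hx)

theorem forall_exists_adj_deleteVerts_of_isNClique {I : G.Subgraph}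
    (hI : ∀ v ∈ I.verts, ∃ u, I.Adj v u) {s : Finset V} (hs : I.spanningCoe.IsNClique 4 s)
    {x : V} (hx : x ∈ s) (hdeg : (I.neighborSet x).ncard ≤ 3) :
    ∀ v ∈ (I.deleteVerts {x}).verts, ∃ u, (I.deleteVerts {x}).Adj v u := by
  classical
  rintro v ⟨hv, hvx⟩
  obtain ⟨u, hvu⟩ := hI v hv
  by_cases hux : u = x
  · subst hux
    have hvs : v ∈ s := ((hs.neighborSet_eq_of_ncard_le hx hdeg).subset hvu.symm).1
    obtain ⟨w, hws, hw⟩ := Finset.exists_mem_notMem_of_card_lt_card (s := {u, v}) (t := s)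
      (Finset.card_le_two.trans_lt (show 2 < s.card by rw [hs.card_eq]; norm_num))
    simp only [Finset.mem_insert, Finset.mem_singleton, not_or] at hw
    have hvw : I.Adj v w :=
      hs.isClique (Finset.mem_coe.mpr hvs) (Finset.mem_coe.mpr hws) (Ne.symm hw.2)
    exact ⟨w, ⟨hv, hvx⟩, ⟨hvw.snd_mem, hw.1⟩, hvw⟩
  · exact ⟨u, ⟨hv, hvx⟩, ⟨hvu.snd_mem, hux⟩, hvu⟩

theorem EdgeBound.of_deleteVerts_isNClique {I : G.Subgraph} {s : Finset V}
    (hs : I.spanningCoe.IsNClique 4 s) {x : V} (hx : x ∈ s) (hdeg : (I.neighborSet x).ncard ≤ 3)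
    (hJ : (I.deleteVerts {x}).EdgeBound) : I.EdgeBound := by
  obtain ⟨y, -, hxy : I.Adj x y⟩ := hs.exists_adj_of_mem (by norm_num) hx
  have hverts : (I.deleteVerts {x}).verts.ncard + 1 = I.verts.ncard :=
    Set.ncard_sdiff_singleton_add_one hxy.fst_mem
  have hedges := I.ncard_edgeSet_le_deleteVerts_add x
  have hcomp := card_connectedComponent_le_of_forall_reachable (deleteVerts_le (s := {x}))
    fun v hv => by
      by_cases hvx : v = x
      · subst hvx
        exact ⟨y, ⟨hxy.snd_mem, hxy.ne.symm⟩, Adj.reachable hxy⟩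
      · exact ⟨v, ⟨hv, hvx⟩, Reachable.refl _⟩
  have hcliques := ncard_cliqueSet_lt_of_le deleteVerts_le (by norm_num) hs hx
    (by simp : x ∉ (I.deleteVerts {x}).verts)
  unfold EdgeBound at hJ ⊢
  omega

theorem EdgeBound.of_deleteVerts_connected {I P : G.Subgraph} (hle : P ≤ I)
    (hconn : P.Connected) (hclosed : ∀ u ∈ P.verts, ∀ w, I.Adj u w → P.Adj u w)
    (hP : P.edgeSet.ncard + 3 ≤ 2 * P.verts.ncard) (hJ : (I.deleteVerts P.verts).EdgeBound) :
    I.EdgeBound := by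
  obtain ⟨v₀, hv₀⟩ := hconn.nonempty
  have hverts : (I.deleteVerts P.verts).verts.ncard + P.verts.ncard = I.verts.ncard :=
    Set.ncard_sdiff_add_ncard_of_subset hle.1
  have hsplit : I.edgeSet ⊆ P.edgeSet ∪ (I.deleteVerts P.verts).edgeSet := by
    intro e he
    induction e with
    | h u w =>
      rw [Subgraph.mem_edgeSet] at he
      by_cases hu : u ∈ P.verts
      · exact Or.inl (hclosed u hu w he)
      by_cases hw : w ∈ P.verts
      · exact Or.inl (hclosed w hw u he.symm).symm
      · exact Or.inr ⟨⟨he.fst_mem, hu⟩, ⟨he.snd_mem, hw⟩, he⟩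
  have hedges := (Set.ncard_le_ncard hsplit).trans (Set.ncard_union_le _ _)
  have hcomp := card_connectedComponent_le_succ deleteVerts_le (hle.1 hv₀) fun v hv => by
    by_cases hvP : v ∈ P.verts
    · exact Or.inr ((hconn.coe.preconnected ⟨v, hvP⟩ ⟨v₀, hv₀⟩).map (inclusion hle))
    · exact Or.inl ⟨hv, hvP⟩
  have hcliques := ncard_cliqueSet_le_of_le (deleteVerts_le (G' := I) (s := P.verts)) 4
  unfold EdgeBound at hJ ⊢
  omega

theorem edgeBound_of_forall_exists_adj
    (h2deg : ∀ H : G.Subgraph, H.Connected → H.coe.CliqueFree 4 → TwoDegenerate H.coe)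
    (hcenter : ∀ s : Finset V, G.IsNClique 4 s → ∃ x ∈ s, (G.neighborSet x).ncard = 3)
    (I : G.Subgraph) (hI : ∀ v ∈ I.verts, ∃ u, I.Adj v u) : I.EdgeBound := by
  induction h : I.verts.ncard using Nat.strong_induction_on generalizing I with
  | _ n ih =>
  by_cases hK4 : I.spanningCoe.CliqueFree 4
  · rcases I.verts.eq_empty_or_nonempty with hempty | ⟨v₀, hv₀⟩
    · rw [(eq_bot_iff_verts_eq_empty I).mpr hempty]
      exact edgeBound_bot
    obtain ⟨P, hle, hconn, hv₀P, hclosed⟩ := exists_connected_closed_le hv₀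
    have hfree : P.coe.CliqueFree 4 :=
      (hK4.anti (spanningCoe_le_of_le hle)).comap ⟨P.coeEmbeddingSpanningCoe.toCopy⟩
    have hP2 : 2 ≤ P.verts.ncard := by
      obtain ⟨u₀, hu₀⟩ := hI v₀ hv₀
      rw [← Set.ncard_pair hu₀.ne]
      exact Set.ncard_le_ncard (Set.pair_subset hv₀P (hclosed v₀ hv₀P u₀ hu₀).snd_mem)
    refine .of_deleteVerts_connected hle hconn hclosed
      (P.ncard_edgeSet_add_three_le (h2deg P hconn hfree) hP2)
      (ih _ (h ▸ ncard_verts_deleteVerts_lt hv₀ hv₀P) _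
        (forall_exists_adj_deleteVerts_of_closed hI hclosed) rfl)
  · obtain ⟨s, hs⟩ : ∃ s, I.spanningCoe.IsNClique 4 s := by simpa [CliqueFree] using hK4
    obtain ⟨x, hx, hdeg⟩ := hcenter s (hs.mono I.spanningCoe_le)
    have hdeg' : (I.neighborSet x).ncard ≤ 3 := hdeg ▸ Set.ncard_le_ncard (I.neighborSet_subset x)
    exact .of_deleteVerts_isNClique hs hx hdeg'
      (ih _ (h ▸ ncard_verts_deleteVerts_lt (mem_verts_of_isNClique (by norm_num) hs hx) rfl) _
        (forall_exists_adj_deleteVerts_of_isNClique hI hs hx hdeg') rfl)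

end Subgraph

end SimpleGraph

theorem stmt_9_general {V : Type} [Fintype V] (T : SimpleGraph V)
    (h2deg : ∀ H : T.Subgraph, H.Connected → H.coe.CliqueFree 4 →
      TwoDegenerate H.coe)
    (hcenter : ∀ s : Finset V, T.IsNClique 4 s →
      ∃ x ∈ s, (T.neighborSet x).ncard = 3) :
    ∀ I : T.Subgraph, I.verts.Nonempty → (∀ v ∈ I.verts, ∃ u, I.Adj v u) →
      (I.edgeSet.ncard : ℤ) ≤ 2 * I.verts.ncard
        + ({s : Finset V | I.spanningCoe.IsNClique 4 s}).ncard
        - 3 * Nat.card I.coe.ConnectedComponent := by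
  intro I _ hI
  have h := SimpleGraph.Subgraph.edgeBound_of_forall_exists_adj h2deg hcenter I hI
  unfold SimpleGraph.Subgraph.EdgeBound SimpleGraph.cliqueSet at h
  omega

/-- Let `T` be a graph such that every connected subgraph without a
`K₄` is 2-degenerate, every `K₄` in `T` contains a 'center' vertex of degree 3, and
deleting the degree-3 vertices from any connected subgraph preserves connectivity.
Then every non-empty subgraph `I ⊆ T` (with no isolated vertices) having `c`
connected components and `r(I)` copies of `K₄` satisfies
`|E(I)| ≤ 2|V(I)| + r(I) - 3c`. -/
theorem stmt_9 {V : Type} [Fintype V] (T : SimpleGraph V)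
    (h2deg : ∀ H : T.Subgraph, H.Connected → H.coe.CliqueFree 4 →
      TwoDegenerate H.coe)
    (hcenter : ∀ s : Finset V, T.IsNClique 4 s →
      ∃ x ∈ s, (T.neighborSet x).ncard = 3)
    (hdel : ∀ H : T.Subgraph, H.Connected →
      ((H.deleteVerts {x | (T.neighborSet x).ncard = 3}).coe).Preconnected) :
    ∀ I : T.Subgraph, I.verts.Nonempty → (∀ v ∈ I.verts, ∃ u, I.Adj v u) →
      (I.edgeSet.ncard : ℤ) ≤ 2 * I.verts.ncard
        + ({s : Finset V | I.spanningCoe.IsNClique 4 s}).ncard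
        - 3 * Nat.card I.coe.ConnectedComponent :=
  stmt_9_general T h2deg hcenter
end

section
/- Let F be a spanning subgraph of K_n with maximum degree at most d, and let I be a subgraph of K_n with c connected components I₁,...,I_c, all contained in at least one copy of F. Then the number of copies of F in K_n containing I is at most (2d)^{|E(I)|}/|Aut(F)| · (n − v(I) + c)!. -/
/-!
A copy of `F` containing `I` together with an automorphism of `F` gives a permutation of the
vertices sending every edge of `I` to an edge of `F`, distinct pairs giving distinct
permutations. List each of the `κ` connected components of `I` (isolated vertices included)
along a spanning tree and place the components one after another, largest first: when `j`
components of size at most `k` remain, the root of the current one, of size `k`, has at most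
`j k ≤ j 2 ^ (k - 1)` free images, and every further vertex at most `d`, being adjacent to a
vertex already placed. This gives at most `κ! (2d) ^ (n - κ)` permutations; the spanning trees
show `n - κ ≤ |E(I)|`, and `κ ≤ n - v(I) + c` since every component not meeting the support of
`I` is an isolated vertex.
-/

/-- The number of connected components of a graph `I` on `[n]` viewed as an edge set
(isolated vertices are not counted). -/
noncomputable def graphComponents {n : ℕ} (I : SimpleGraph (Fin n)) : ℕ :=
  ({C : I.ConnectedComponent |
    ∃ v ∈ I.support, I.connectedComponentMk v = C}).ncard

open Finset

namespace List

variable {α : Type*} {LL : List (List α)}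

theorem length_le_length_flatten (h : ∀ B ∈ LL, 0 < B.length) : LL.length ≤ LL.flatten.length := by
  rw [length_flatten, ← length_map length]
  exact length_le_sum_of_one_le _ fun k hk => by
    obtain ⟨B, hB, rfl⟩ := mem_map.mp hk
    exact h B hB

theorem length_flatten_cons_le_length_mul_two_pow {B : List α} (hB : 0 < B.length)
    (hLL : ∀ B' ∈ LL, B'.length ≤ B.length) :
    (B :: LL).flatten.length ≤ (B :: LL).length * 2 ^ (B.length - 1) := by
  have hLLle : LL.flatten.length ≤ LL.length * B.length := by
    rw [length_flatten, ← length_map length, ← smul_eq_mul]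
    exact sum_le_card_nsmul _ _ (by simpa using hLL)
  have := @Nat.lt_two_pow_self (B.length - 1)
  calc (B :: LL).flatten.length ≤ (B :: LL).length * B.length := by
        rw [flatten_cons, length_append, length_cons, add_mul]
        omega
    _ ≤ (B :: LL).length * 2 ^ (B.length - 1) := Nat.mul_le_mul_left _ (by omega)

end List

namespace SimpleGraph

variable {V : Type*}

/-- Read from right to left, `l` attaches one vertex at a time to a growing tree of `G`. -/
inductive IsTreeOrder (G : SimpleGraph V) : List V → Prop
  | singleton (x : V) : IsTreeOrder G [x]
  | cons {x w : V} {l : List V} : x ∉ l → w ∈ l → G.Adj x w → IsTreeOrder G l →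
      IsTreeOrder G (x :: l)

namespace IsTreeOrder

variable {G : SimpleGraph V} {l : List V}

theorem nodup (h : G.IsTreeOrder l) : l.Nodup := by
  induction h with
  | singleton x => exact List.nodup_singleton x
  | cons hx _ _ _ ih => exact List.nodup_cons.mpr ⟨hx, ih⟩

theorem length_pos (h : G.IsTreeOrder l) : 0 < l.length := by
  cases h <;> simp

theorem length_le_ncard_edges_add_one [Finite V] (h : G.IsTreeOrder l) :
    l.length ≤ {e ∈ G.edgeSet | ∀ y ∈ e, y ∈ l}.ncard + 1 := by
  induction h with
  | singleton x => simp
  | @cons x w l hx hw hadj _ ih =>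
    have hnew : s(x, w) ∉ {e ∈ G.edgeSet | ∀ y ∈ e, y ∈ l} := fun he => hx (he.2 x (by simp))
    have hsub : insert s(x, w) {e ∈ G.edgeSet | ∀ y ∈ e, y ∈ l} ⊆
        {e ∈ G.edgeSet | ∀ y ∈ e, y ∈ x :: l} := by
      rintro e (rfl | ⟨he, hel⟩)
      · exact ⟨hadj, by simp [hw]⟩
      · exact ⟨he, fun y hy => List.mem_cons_of_mem x (hel y hy)⟩
    have := Set.ncard_le_ncard hsub
    rw [Set.ncard_insert_of_notMem hnew] at this
    simp only [List.length_cons]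
    omega

end IsTreeOrder

theorem length_flatten_le_ncard_edges_add_length [Finite V] {G : SimpleGraph V} :
    ∀ LL : List (List V), (∀ B ∈ LL, G.IsTreeOrder B) → LL.flatten.Nodup →
      LL.flatten.length ≤ {e ∈ G.edgeSet | ∀ y ∈ e, y ∈ LL.flatten}.ncard + LL.length
  | [], _, _ => by simp
  | B :: T, hLL, hnd => by
    rw [List.flatten_cons, List.nodup_append] at hnd
    obtain ⟨-, hndT, hBT⟩ := hnd
    have hB := (hLL B List.mem_cons_self).length_le_ncard_edges_add_one
    have hT := length_flatten_le_ncard_edges_add_length T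
      (fun B' hB' => hLL B' (List.mem_cons_of_mem B hB')) hndT
    have hdisj : Disjoint {e ∈ G.edgeSet | ∀ y ∈ e, y ∈ B}
        {e ∈ G.edgeSet | ∀ y ∈ e, y ∈ T.flatten} := by
      refine Set.disjoint_left.mpr fun e h₁ h₂ => ?_
      exact hBT _ (h₁.2 _ (Sym2.out_fst_mem e)) _ (h₂.2 _ (Sym2.out_fst_mem e)) rfl
    have hsub : {e ∈ G.edgeSet | ∀ y ∈ e, y ∈ B} ∪ {e ∈ G.edgeSet | ∀ y ∈ e, y ∈ T.flatten} ⊆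
        {e ∈ G.edgeSet | ∀ y ∈ e, y ∈ B ++ T.flatten} := by
      rintro e (⟨he, h⟩ | ⟨he, h⟩) <;> exact ⟨he, fun y hy => by simp [h y hy]⟩
    have := Set.ncard_le_ncard hsub
    rw [Set.ncard_union_eq hdisj] at this
    simp only [List.flatten_cons, List.length_append, List.length_cons]
    omega

theorem ConnectedComponent.exists_isTreeOrder [Finite V] {G : SimpleGraph V}
    (C : G.ConnectedComponent) :
    ∃ l, G.IsTreeOrder l ∧ ∀ x, x ∈ l ↔ G.connectedComponentMk x = C := by
  classical
  have := Fintype.ofFinite V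
  induction C using ConnectedComponent.ind with | h r => ?_
  let P : ℕ → Prop := fun k => ∃ l, G.IsTreeOrder l ∧ (∀ x ∈ l, G.Reachable r x) ∧ l.length = k
  have hP : ∀ k, P k → k ≤ Fintype.card V := by
    rintro k ⟨l, hl, -, rfl⟩
    exact hl.nodup.length_le_card
  have hP₁ : P 1 := ⟨[r], .singleton r, by simp, rfl⟩
  obtain ⟨l, hl, hlr, hlen⟩ := Nat.findGreatest_spec (hP 1 hP₁) hP₁
  refine ⟨l, hl, fun x => ⟨fun hx => ConnectedComponent.eq.mpr (hlr x hx).symm, fun hx => ?_⟩⟩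
  by_contra hxl
  obtain ⟨y, hy⟩ := List.exists_mem_of_length_pos hl.length_pos
  obtain ⟨p⟩ := (hlr y hy).symm.trans (ConnectedComponent.eq.mp hx).symm
  obtain ⟨dt, -, hin, hout⟩ := p.exists_boundary_dart {z | z ∈ l} hy hxl
  have hlonger : P (l.length + 1) :=
    ⟨dt.snd :: l, .cons hout hin dt.adj.symm hl, by
      simpa [(hlr _ hin).trans dt.adj.reachable] using hlr, rfl⟩
  have := Nat.le_findGreatest (hP _ hlonger) hlonger
  omega

section Components

variable [Fintype V]

theorem exists_isTreeOrder_blocks (G : SimpleGraph V) :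
    ∃ LL : List (List V), (∀ B ∈ LL, G.IsTreeOrder B) ∧
      LL.Pairwise (fun B B' => B'.length ≤ B.length) ∧ LL.flatten.Nodup ∧
      LL.flatten.length = Fintype.card V ∧ LL.length = Nat.card G.ConnectedComponent := by
  classical
  choose L hL hmem using fun C : G.ConnectedComponent => C.exists_isTreeOrder
  let le : List V → List V → Bool := fun B B' => B'.length ≤ B.length
  let LL₀ := (Finset.univ : Finset G.ConnectedComponent).toList.map L
  have hperm : (LL₀.mergeSort le).Perm LL₀ := List.mergeSort_perm _ _
  have hnd : LL₀.flatten.Nodup := by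
    refine List.nodup_flatten.mpr ⟨by simpa [LL₀] using fun C => (hL C).nodup, ?_⟩
    refine List.Pairwise.map L (fun C C' hne => List.disjoint_left.mpr fun _ hx hx' => ?_)
      (Finset.nodup_toList _)
    exact hne (((hmem C _).mp hx).symm.trans ((hmem C' _).mp hx'))
  have hcover : LL₀.flatten.toFinset = univ := eq_univ_of_forall fun x =>
    List.mem_toFinset.mpr (List.mem_flatten.mpr ⟨L (G.connectedComponentMk x), by simp [LL₀],
      (hmem _ x).mpr rfl⟩)
  refine ⟨LL₀.mergeSort le, fun B hB => ?_, ?_, hperm.flatten.nodup_iff.mpr hnd, ?_, ?_⟩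
  · obtain ⟨C, -, rfl⟩ := List.mem_map.mp (hperm.mem_iff.mp hB)
    exact hL C
  · refine (List.pairwise_mergeSort (fun a b c hab hbc => ?_) (fun a b => ?_) LL₀).imp ?_
    · simp only [le, decide_eq_true_eq] at hab hbc ⊢
      omega
    · simp only [le, Bool.or_eq_true, decide_eq_true_eq]
      omega
    · simp [le]
  · rw [hperm.flatten.length_eq, ← List.toFinset_card_of_nodup hnd, hcover, card_univ]
  · rw [hperm.length_eq, Nat.card_eq_fintype_card]
    simp [LL₀]

theorem card_le_ncard_edgeSet_add_card_connectedComponent (G : SimpleGraph V) :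
    Fintype.card V ≤ G.edgeSet.ncard + Nat.card G.ConnectedComponent := by
  obtain ⟨LL, hLL, -, hnd, hV, hκ⟩ := G.exists_isTreeOrder_blocks
  rw [← hV, ← hκ]
  exact (length_flatten_le_ncard_edges_add_length LL hLL hnd).trans
    (Nat.add_le_add_right (Set.ncard_le_ncard (Set.sep_subset _ _)) _)

theorem card_connectedComponent_lt_of_adj {G : SimpleGraph V} {x y : V} (h : G.Adj x y) :
    Nat.card G.ConnectedComponent < Fintype.card V := by
  classical
  rw [Nat.card_eq_fintype_card]
  exact Fintype.card_lt_of_surjective_not_injective _ (fun C => C.ind fun v => ⟨v, rfl⟩)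
    fun hinj => h.ne (hinj (ConnectedComponent.eq.mpr h.reachable))

theorem pow_card_sub_card_connectedComponent_le (G : SimpleGraph V) (k : ℕ) :
    k ^ (Fintype.card V - Nat.card G.ConnectedComponent) ≤ k ^ G.edgeSet.ncard := by
  obtain rfl | hk := Nat.eq_zero_or_pos k
  · obtain he | he := eq_or_ne G.edgeSet.ncard 0
    · rw [he, pow_zero]
      exact pow_le_one₀ le_rfl zero_le_one
    · obtain ⟨e, he⟩ := Set.nonempty_of_ncard_ne_zero he
      induction e using Sym2.ind with | h x y => ?_
      rw [zero_pow (Nat.sub_ne_zero_of_lt (card_connectedComponent_lt_of_adj he))]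
      exact Nat.zero_le _
  · have := G.card_le_ncard_edgeSet_add_card_connectedComponent
    exact Nat.pow_le_pow_right hk (by omega)

theorem card_connectedComponent_le (G : SimpleGraph V) :
    Nat.card G.ConnectedComponent ≤ Fintype.card V - G.support.ncard +
      {C | ∃ v ∈ G.support, G.connectedComponentMk v = C}.ncard := by
  have hcover : (Set.univ : Set G.ConnectedComponent) ⊆ G.connectedComponentMk '' G.supportᶜ ∪
      {C | ∃ v ∈ G.support, G.connectedComponentMk v = C} := by
    rintro C -
    induction C using ConnectedComponent.ind with | h v => ?_
    by_cases hv : v ∈ G.support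
    · exact Or.inr ⟨v, hv, rfl⟩
    · exact Or.inl ⟨v, hv, rfl⟩
  calc Nat.card G.ConnectedComponent = (Set.univ : Set G.ConnectedComponent).ncard :=
        (Set.ncard_univ _).symm
    _ ≤ (G.connectedComponentMk '' G.supportᶜ).ncard +
          {C | ∃ v ∈ G.support, G.connectedComponentMk v = C}.ncard :=
        (Set.ncard_le_ncard hcover).trans (Set.ncard_union_le _ _)
    _ ≤ G.supportᶜ.ncard + {C | ∃ v ∈ G.support, G.connectedComponentMk v = C}.ncard :=
        Nat.add_le_add_right (Set.ncard_image_le (Set.toFinite _)) _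
    _ = _ := by rw [Set.ncard_compl, Nat.card_eq_fintype_card]

theorem ncard_copies_mul_card_aut_le (F I : SimpleGraph V) :
    {G' : SimpleGraph V | Nonempty (F ≃g G') ∧ I ≤ G'}.ncard * Nat.card (F ≃g F) ≤
      {σ : Equiv.Perm V | ∀ a b, I.Adj a b → F.Adj (σ a) (σ b)}.ncard := by
  set copies := {G' : SimpleGraph V | Nonempty (F ≃g G') ∧ I ≤ G'}
  let σ : copies × (F ≃g F) → Equiv.Perm V := fun p => (p.1.2.1.some.symm.trans p.2).toEquiv
  have hσ : ∀ p x y, (p.1 : SimpleGraph V).Adj x y ↔ F.Adj (σ p x) (σ p y) := fun p _ _ =>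
    (Iso.map_adj_iff (p.1.2.1.some.symm.trans p.2)).symm
  rw [← Nat.card_coe_set_eq, ← Nat.card_coe_set_eq, ← Nat.card_prod]
  refine Nat.card_le_card_of_injective (fun p => ⟨σ p, fun a b h => (hσ p a b).mp (p.1.2.2 h)⟩) ?_
  rintro ⟨⟨G₁, h₁⟩, a₁⟩ ⟨⟨G₂, h₂⟩, a₂⟩ h
  have hσeq : σ ⟨⟨G₁, h₁⟩, a₁⟩ = σ ⟨⟨G₂, h₂⟩, a₂⟩ := congrArg Subtype.val h
  obtain rfl : G₁ = G₂ := by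
    ext x y
    rw [hσ ⟨⟨G₁, h₁⟩, a₁⟩, hσ ⟨⟨G₂, h₂⟩, a₂⟩, hσeq]
  obtain rfl : a₁ = a₂ := RelIso.ext fun z => by
    simpa [σ] using congrArg (· (h₁.1.some z)) hσeq
  rfl

end Components

section Embeddings

variable [Fintype V] [DecidableEq V] (I F : SimpleGraph V)

/-- Normalised to be the identity off `s`, so that an embedding is determined by its values on
`s`. -/
noncomputable def embeddingsOn (s : Finset V) : Finset (V → V) :=
  open scoped Classical in
  {φ | Set.InjOn φ s ∧ (∀ a ∈ s, ∀ b ∈ s, I.Adj a b → F.Adj (φ a) (φ b)) ∧ ∀ x ∉ s, φ x = x}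

variable {I F}

theorem mem_embeddingsOn {s : Finset V} {φ : V → V} :
    φ ∈ I.embeddingsOn F s ↔
      Set.InjOn φ s ∧ (∀ a ∈ s, ∀ b ∈ s, I.Adj a b → F.Adj (φ a) (φ b)) ∧ ∀ x ∉ s, φ x = x := by
  simp [embeddingsOn]

theorem embeddingsOn_empty : I.embeddingsOn F ∅ = {id} := by
  ext φ
  simp [mem_embeddingsOn, funext_iff]

theorem update_mem_embeddingsOn {s : Finset V} {u : V} {φ : V → V} (hu : u ∉ s)
    (hφ : φ ∈ I.embeddingsOn F (insert u s)) : Function.update φ u u ∈ I.embeddingsOn F s := by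
  obtain ⟨hinj, hadj, hid⟩ := mem_embeddingsOn.mp hφ
  have heq : ∀ x ∈ s, Function.update φ u u x = φ x := fun x hx =>
    Function.update_of_ne (ne_of_mem_of_not_mem hx hu) _ _
  refine mem_embeddingsOn.mpr ⟨fun a ha b hb hab => ?_, fun a ha b hb hab => ?_, fun x hx => ?_⟩
  · rw [heq a ha, heq b hb] at hab
    exact hinj (by simp [Finset.mem_coe.mp ha]) (by simp [Finset.mem_coe.mp hb]) hab
  · rw [heq a ha, heq b hb]
    exact hadj a (mem_insert_of_mem ha) b (mem_insert_of_mem hb) hab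
  · obtain rfl | hxu := eq_or_ne x u
    · simp
    · rw [Function.update_of_ne hxu]
      exact hid x (by simp [hx, hxu])

/-- An embedding on `insert u s` is determined by its restriction to `s` and its value at `u`. -/
theorem card_embeddingsOn_insert_le {s : Finset V} {u : V} (hu : u ∉ s) {k : ℕ}
    (t : (V → V) → Set V) (ht : ∀ ψ ∈ I.embeddingsOn F s, (t ψ).ncard ≤ k)
    (hmem : ∀ φ ∈ I.embeddingsOn F (insert u s), φ u ∈ t (Function.update φ u u)) :
    #(I.embeddingsOn F (insert u s)) ≤ k * #(I.embeddingsOn F s) := by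
  rw [card_eq_sum_card_fiberwise fun φ hφ => update_mem_embeddingsOn hu hφ, mul_comm,
    ← smul_eq_mul, ← sum_const]
  refine sum_le_sum fun ψ hψ => ?_
  rw [← Set.ncard_coe_finset]
  refine (Set.ncard_le_ncard_of_injOn (fun φ => φ u) (fun φ hφ => ?_) ?_).trans (ht ψ hψ)
  · obtain ⟨hφ', rfl⟩ := mem_filter.mp (mem_coe.mp hφ)
    exact hmem φ hφ'
  · intro φ₁ h₁ φ₂ h₂ h
    calc φ₁ = Function.update (Function.update φ₁ u u) u (φ₁ u) := by simp
      _ = Function.update (Function.update φ₂ u u) u (φ₂ u) := by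
        rw [(mem_filter.mp (mem_coe.mp h₁)).2, (mem_filter.mp (mem_coe.mp h₂)).2]
        exact congrArg _ h
      _ = φ₂ := by simp

theorem card_embeddingsOn_insert_le_card_sub {s : Finset V} {u : V} (hu : u ∉ s) :
    #(I.embeddingsOn F (insert u s)) ≤ (Fintype.card V - #s) * #(I.embeddingsOn F s) := by
  refine card_embeddingsOn_insert_le hu (fun ψ => (ψ '' s)ᶜ) (fun ψ hψ => ?_) fun φ hφ => ?_
  · rw [Set.ncard_compl, (mem_embeddingsOn.mp hψ).1.ncard_image,
      Set.ncard_coe_finset, Nat.card_eq_fintype_card]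
  · rintro ⟨x, hx, hxu⟩
    have hxu' : x ≠ u := ne_of_mem_of_not_mem hx hu
    rw [Function.update_of_ne hxu'] at hxu
    exact hxu' ((mem_embeddingsOn.mp hφ).1 (by simp [Finset.mem_coe.mp hx]) (by simp) hxu)

theorem card_embeddingsOn_insert_le_of_adj {d : ℕ} (hdeg : ∀ v, (F.neighborSet v).ncard ≤ d)
    {s : Finset V} {u w : V} (hu : u ∉ s) (hw : w ∈ s) (huw : I.Adj u w) :
    #(I.embeddingsOn F (insert u s)) ≤ d * #(I.embeddingsOn F s) := by
  refine card_embeddingsOn_insert_le hu (fun ψ => F.neighborSet (ψ w)) (fun ψ _ => hdeg _)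
    fun φ hφ => ?_
  rw [mem_neighborSet, Function.update_of_ne (ne_of_mem_of_not_mem hw hu)]
  exact ((mem_embeddingsOn.mp hφ).2.1 u (mem_insert_self u s) w (mem_insert_of_mem hw) huw).symm

theorem IsTreeOrder.card_embeddingsOn_union_le {d : ℕ} (hdeg : ∀ v, (F.neighborSet v).ncard ≤ d)
    {l : List V} (hl : I.IsTreeOrder l) {s : Finset V} (hs : ∀ x ∈ l, x ∉ s) :
    #(I.embeddingsOn F (l.toFinset ∪ s)) ≤
      (Fintype.card V - #s) * d ^ (l.length - 1) * #(I.embeddingsOn F s) := by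
  induction hl with
  | singleton x =>
    simpa using card_embeddingsOn_insert_le_card_sub (hs x (List.mem_singleton_self x))
  | @cons x w l hx hw hadj hl ih =>
    have hx' : x ∉ l.toFinset ∪ s := by
      simpa [hx] using hs x List.mem_cons_self
    calc #(I.embeddingsOn F ((x :: l).toFinset ∪ s))
        = #(I.embeddingsOn F (insert x (l.toFinset ∪ s))) := by
          rw [List.toFinset_cons, insert_union]
      _ ≤ d * #(I.embeddingsOn F (l.toFinset ∪ s)) :=
        card_embeddingsOn_insert_le_of_adj hdeg hx' (by simp [hw]) hadj
      _ ≤ d * ((Fintype.card V - #s) * d ^ (l.length - 1) * #(I.embeddingsOn F s)) :=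
        Nat.mul_le_mul_left d (ih fun y hy => hs y (List.mem_cons_of_mem x hy))
      _ = (Fintype.card V - #s) * d ^ ((x :: l).length - 1) * #(I.embeddingsOn F s) := by
        rw [List.length_cons, Nat.add_sub_cancel, ← Nat.sub_add_cancel hl.length_pos, pow_succ,
          Nat.add_sub_cancel]
        ring

/-- The head block, the largest, is embedded first: the free images of its root are the vertices
of all the blocks. -/
theorem card_embeddingsOn_flatten_union_le {d : ℕ}
    (hdeg : ∀ v, (F.neighborSet v).ncard ≤ d) :
    ∀ (LL : List (List V)) (s : Finset V), (∀ B ∈ LL, I.IsTreeOrder B) →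
      LL.Pairwise (fun B B' => B'.length ≤ B.length) → LL.flatten.Nodup →
      (∀ x ∈ LL.flatten, x ∉ s) → Fintype.card V = #s + LL.flatten.length →
      #(I.embeddingsOn F (LL.flatten.toFinset ∪ s)) ≤
        LL.length.factorial * (2 * d) ^ (LL.flatten.length - LL.length) * #(I.embeddingsOn F s)
  | [], s, _, _, _, _, _ => by simp
  | B :: T, s, hLL, hsort, hnd, hs, hcard => by
    rw [List.pairwise_cons] at hsort
    rw [List.flatten_cons, List.nodup_append] at hnd
    obtain ⟨hndB, hndT, hBT⟩ := hnd
    have hB := hLL B List.mem_cons_self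
    have hT : ∀ B' ∈ T, I.IsTreeOrder B' := fun B' h => hLL B' (List.mem_cons_of_mem B h)
    have hTpos := List.length_le_length_flatten fun B' h => (hT B' h).length_pos
    have hroot : Fintype.card V - #s ≤ (B :: T).length * 2 ^ (B.length - 1) := by
      rw [hcard, Nat.add_sub_cancel_left]
      exact List.length_flatten_cons_le_length_mul_two_pow hB.length_pos hsort.1
    have hBs : Disjoint B.toFinset s := Finset.disjoint_left.mpr fun x hx =>
      hs x (List.mem_flatten_of_mem List.mem_cons_self (List.mem_toFinset.mp hx))
    have ih := card_embeddingsOn_flatten_union_le hdeg T (B.toFinset ∪ s) hT hsort.2 hndT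
      (fun x hx hxs => (mem_union.mp hxs).elim
        (fun h => hBT x (List.mem_toFinset.mp h) x hx rfl)
        (hs x (by simp [hx])))
      (by rw [card_union_of_disjoint hBs, List.toFinset_card_of_nodup hndB, hcard,
        List.flatten_cons, List.length_append]; ring)
    have hexp : (B ++ T.flatten).length - (T.length + 1) =
        (B.length - 1) + (T.flatten.length - T.length) := by
      have := hB.length_pos
      rw [List.length_append]; omega
    calc #(I.embeddingsOn F ((B :: T).flatten.toFinset ∪ s))
        = #(I.embeddingsOn F (T.flatten.toFinset ∪ (B.toFinset ∪ s))) := by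
          rw [List.flatten_cons, List.toFinset_append, union_comm B.toFinset, union_assoc]
      _ ≤ T.length.factorial * (2 * d) ^ (T.flatten.length - T.length) *
            #(I.embeddingsOn F (B.toFinset ∪ s)) := ih
      _ ≤ T.length.factorial * (2 * d) ^ (T.flatten.length - T.length) *
            ((Fintype.card V - #s) * d ^ (B.length - 1) * #(I.embeddingsOn F s)) :=
          Nat.mul_le_mul_left _ (hB.card_embeddingsOn_union_le hdeg fun x hx =>
            hs x (List.mem_flatten_of_mem List.mem_cons_self hx))
      _ ≤ T.length.factorial * (2 * d) ^ (T.flatten.length - T.length) *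
            ((B :: T).length * 2 ^ (B.length - 1) * d ^ (B.length - 1) *
              #(I.embeddingsOn F s)) := by
          gcongr
      _ = (B :: T).length.factorial * (2 * d) ^ ((B :: T).flatten.length - (B :: T).length) *
            #(I.embeddingsOn F s) := by
          rw [List.flatten_cons, List.length_cons, hexp, Nat.factorial_succ, pow_add, mul_pow]
          ring

theorem ncard_perms_preserving_adj_le {d : ℕ} (hdeg : ∀ v, (F.neighborSet v).ncard ≤ d) :
    {σ : Equiv.Perm V | ∀ a b, I.Adj a b → F.Adj (σ a) (σ b)}.ncard ≤
      (Nat.card I.ConnectedComponent).factorial *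
        (2 * d) ^ (Fintype.card V - Nat.card I.ConnectedComponent) := by
  obtain ⟨LL, hLL, hsort, hnd, hV, hκ⟩ := I.exists_isTreeOrder_blocks
  have hcount := card_embeddingsOn_flatten_union_le hdeg LL ∅ hLL hsort hnd (by simp)
    (by simp [hV])
  have huniv : LL.flatten.toFinset = univ :=
    eq_univ_of_card _ (by rw [List.toFinset_card_of_nodup hnd, hV])
  rw [union_empty, huniv, embeddingsOn_empty, card_singleton, mul_one, hV, hκ] at hcount
  refine le_trans ?_ hcount
  rw [← Set.ncard_coe_finset]
  refine Set.ncard_le_ncard_of_injOn (fun σ => ⇑σ) (fun σ hσ => ?_)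
    (fun σ _ τ _ h => Equiv.ext (congrFun h))
  exact mem_embeddingsOn.mpr ⟨σ.injective.injOn, fun a _ b _ h => hσ a b h, by simp⟩

end Embeddings

end SimpleGraph

theorem stmt_12_general (n d : ℕ) (F : SimpleGraph (Fin n))
    (hdeg : ∀ v : Fin n, (F.neighborSet v).ncard ≤ d)
    (I : SimpleGraph (Fin n)) :
    (({G' : SimpleGraph (Fin n) | Nonempty (F ≃g G') ∧ I ≤ G'}).ncard : ℝ)
      ≤ (2 * d : ℝ) ^ I.edgeSet.ncard / (Nat.card (F ≃g F) : ℝ)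
        * (Nat.factorial (n - I.support.ncard + graphComponents I) : ℝ) := by
  have : Finite (F ≃g F) := Finite.of_injective _ RelIso.toEquiv_injective
  have : Nonempty (F ≃g F) := ⟨.refl⟩
  have hperm := (SimpleGraph.ncard_copies_mul_card_aut_le F I).trans
    (SimpleGraph.ncard_perms_preserving_adj_le hdeg)
  have hpow := I.pow_card_sub_card_connectedComponent_le (2 * d)
  have hκ := I.card_connectedComponent_le
  rw [Fintype.card_fin] at hperm hpow hκ
  rw [div_mul_eq_mul_div, le_div_iff₀ (by exact_mod_cast Nat.card_pos)]
  exact_mod_cast hperm.trans ((Nat.mul_le_mul (Nat.factorial_le hκ) hpow).trans_eq (mul_comm _ _))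

/-- Let `F` be a spanning subgraph of `K_n` with maximum degree at
most `d`, and let `I` be a subgraph of `K_n` with `c` connected components, contained
in at least one copy of `F`. Then the number of copies of `F` in `K_n` containing `I`
is at most `(2d)^{|E(I)|}/|Aut(F)| · (n - v(I) + c)!`, where `v(I)` is the number of
non-isolated vertices of `I`. -/
theorem stmt_12 (n d : ℕ) (F : SimpleGraph (Fin n))
    (hdeg : ∀ v : Fin n, (F.neighborSet v).ncard ≤ d)
    (I : SimpleGraph (Fin n))
    (hI : ∃ G' : SimpleGraph (Fin n), Nonempty (F ≃g G') ∧ I ≤ G') :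
    (({G' : SimpleGraph (Fin n) | Nonempty (F ≃g G') ∧ I ≤ G'}).ncard : ℝ)
      ≤ (2 * d : ℝ) ^ I.edgeSet.ncard / (Nat.card (F ≃g F) : ℝ)
        * (Nat.factorial (n - I.support.ncard + graphComponents I) : ℝ) :=
  stmt_12_general n d F hdeg I
end

section
/- In the nested-cycle triangulation T(n,k) constructed for n ≥ 2k (with c = ⌊n/k⌋ nested k-cycles and r = n − ck residual vertices evenly inserted into the innermost cycle, annuli triangulated evenly, and the innermost cycle triangulated by a comb path), the maximum degree satisfies Δ(T) ≤ 7. -/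
/-- A combinatorial plane triangulation of a `k`-gon on `n` vertices:
a graph together with a boundary `k`-cycle and a collection of inner faces,
each of which is a triangle, such that every non-boundary edge lies in exactly
two inner faces, every boundary edge lies in exactly one inner face, the graph
is connected, and Euler's formula `V - E + F = 2` holds (the outer face
contributes the `+1`). -/
structure PolyTri (n k : ℕ) where
  G : SimpleGraph (Fin n)
  boundary : ZMod k → Fin n
  boundary_inj : Function.Injective boundary
  boundary_adj : ∀ i : ZMod k, G.Adj (boundary i) (boundary (i + 1))
  faces : Finset (Finset (Fin n))
  faces_card : ∀ f ∈ faces, f.card = 3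
  faces_clique : ∀ f ∈ faces, ∀ u ∈ f, ∀ v ∈ f, u ≠ v → G.Adj u v
  edge_two_faces : ∀ u v : Fin n, G.Adj u v →
    (¬ ∃ i : ZMod k, ({u, v} : Finset (Fin n)) = {boundary i, boundary (i + 1)}) →
    (faces.filter (fun f => u ∈ f ∧ v ∈ f)).card = 2
  boundary_one_face : ∀ i : ZMod k,
    (faces.filter (fun f => boundary i ∈ f ∧ boundary (i + 1) ∈ f)).card = 1
  connected : G.Connected
  euler : (n : ℤ) - (G.edgeSet.ncard : ℤ) + ((faces.card : ℤ) + 1) = 2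


open Finset

namespace NCT


structure Ctx where
  n : ℕ
  k : ℕ
  c : ℕ
  r : ℕ
  hk : 3 ≤ k
  hc : 2 ≤ c
  hr : r < k
  hn : n = c * k + r

namespace Ctx

variable (X : Ctx)

/-- length of inner polygon -/
def m : ℕ := X.k + X.r

lemma ck_le : 2 * 3 ≤ X.c * X.k := Nat.mul_le_mul X.hc X.hk

lemma npos : 0 < X.n := by have := X.ck_le; have := X.hn; omega

/-- cast a code to a vertex -/
def cast (x : ℕ) : Fin X.n := ⟨x % X.n, Nat.mod_lt _ X.npos⟩

/-- code of grid vertex row i column j -/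
def g (i j : ℕ) : ℕ := i * X.k + j

/-- code of residual vertex t -/
def q (t : ℕ) : ℕ := X.c * X.k + t

def gv (i j : ℕ) : Fin X.n := X.cast (X.g i j)
def qv (t : ℕ) : Fin X.n := X.cast (X.q t)

lemma g_lt {i j : ℕ} (hi : i < X.c) (hj : j < X.k) : X.g i j < X.c * X.k := by
  unfold g
  calc i * X.k + j < i * X.k + X.k := by omega
  _ = (i+1) * X.k := by ring
  _ ≤ X.c * X.k := Nat.mul_le_mul_right _ (by omega)

lemma g_lt_n {i j : ℕ} (hi : i < X.c) (hj : j < X.k) : X.g i j < X.n := by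
  have := X.g_lt hi hj; have := X.hn; omega

lemma q_lt_n {t : ℕ} (ht : t < X.r) : X.q t < X.n := by
  unfold q; have := X.hn; omega

lemma cast_inj {x y : ℕ} (hx : x < X.n) (hy : y < X.n) : X.cast x = X.cast y ↔ x = y := by
  unfold cast
  rw [Fin.mk.injEq, Nat.mod_eq_of_lt hx, Nat.mod_eq_of_lt hy]

lemma div_key (i j : ℕ) (hj : j < X.k) : (i * X.k + j) / X.k = i := by
  rw [Nat.add_comm, Nat.add_mul_div_right _ _ (by have := X.hk; omega : 0 < X.k),
    Nat.div_eq_of_lt hj]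
  omega

lemma g_cases {i j i' j' : ℕ} (hj : j < X.k) (hj' : j' < X.k) :
    X.g i j = X.g i' j' ↔ i = i' ∧ j = j' := by
  unfold g
  constructor
  · intro h
    have h1 := X.div_key i j hj
    have h2 := X.div_key i' j' hj'
    have hii : i = i' := by rw [← h1, ← h2, h]
    subst hii
    exact ⟨rfl, by omega⟩
  · rintro ⟨rfl, rfl⟩; rfl

lemma gv_eq_gv {i j i' j' : ℕ} (hi : i < X.c) (hj : j < X.k) (hi' : i' < X.c) (hj' : j' < X.k) :
    X.gv i j = X.gv i' j' ↔ i = i' ∧ j = j' := by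
  rw [gv, gv, X.cast_inj (X.g_lt_n hi hj) (X.g_lt_n hi' hj'), X.g_cases hj hj']

lemma gv_ne_qv {i j t : ℕ} (hi : i < X.c) (hj : j < X.k) (ht : t < X.r) :
    X.gv i j ≠ X.qv t := by
  rw [gv, qv, Ne, X.cast_inj (X.g_lt_n hi hj) (X.q_lt_n ht)]
  have := X.g_lt hi hj; unfold q; omega

lemma qv_eq_qv {t t' : ℕ} (ht : t < X.r) (ht' : t' < X.r) :
    X.qv t = X.qv t' ↔ t = t' := by
  rw [qv, qv, X.cast_inj (X.q_lt_n ht) (X.q_lt_n ht')]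
  unfold q; omega

/-- snake order: position in the polygon of the s-th vertex of the comb path -/
def f (s : ℕ) : ℕ := if s % 2 = 0 then s / 2 else X.m - 1 - s / 2

/-- code of polygon position: even positions < 2r are grid row c-1, odd are residuals,
positions ≥ 2r are grid row c-1 shifted -/
def pc (a : ℕ) : ℕ :=
  if a < 2 * X.r then (if a % 2 = 0 then X.g (X.c - 1) (a / 2) else X.q (a / 2))
  else X.g (X.c - 1) (a - X.r)

def pv (a : ℕ) : Fin X.n := X.cast (X.pc a)

lemma m_pos : 3 ≤ X.m := by have := X.hk; unfold m; omega

lemma hm_eq : X.m = X.k + X.r := rfl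

/-- linearized polygon code -/
def pw (a : ℕ) : ℕ :=
  if a < 2 * X.r then (if a % 2 = 0 then a / 2 else X.k + a / 2) else a - X.r

lemma ckk : (X.c - 1) * X.k + X.k = X.c * X.k := by
  have hc := X.hc
  have : X.c - 1 + 1 = X.c := by omega
  calc (X.c - 1) * X.k + X.k = (X.c - 1 + 1) * X.k := by ring
  _ = X.c * X.k := by rw [this]

lemma pc_eq (a : ℕ) : X.pc a = (X.c - 1) * X.k + X.pw a := by
  unfold pc pw g q
  have := X.ckk
  split_ifs <;> omega

lemma pw_lt {a : ℕ} (ha : a < X.m) : X.pw a < X.k + X.r := by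
  unfold pw
  have := X.hm_eq
  split_ifs <;> omega

lemma pc_lt_n {a : ℕ} (ha : a < X.m) : X.pc a < X.n := by
  rw [X.pc_eq]
  have h1 := X.pw_lt ha
  have h2 := X.ckk
  have h3 := X.hn
  omega

lemma pw_inj {a b : ℕ} (ha : a < X.m) (hb : b < X.m) (h : X.pw a = X.pw b) : a = b := by
  unfold pw at h
  have := X.hm_eq
  have := X.hr
  split_ifs at h <;> omega

/-- polygon positions decode injectively -/
lemma pc_inj {a b : ℕ} (ha : a < X.m) (hb : b < X.m) : X.pc a = X.pc b ↔ a = b := by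
  rw [X.pc_eq, X.pc_eq]
  constructor
  · intro h
    exact X.pw_inj ha hb (by omega)
  · rintro rfl; rfl

lemma pv_inj {a b : ℕ} (ha : a < X.m) (hb : b < X.m) : X.pv a = X.pv b ↔ a = b := by
  rw [pv, pv, X.cast_inj (X.pc_lt_n ha) (X.pc_lt_n hb), X.pc_inj ha hb]

/-- position of grid vertex (c-1, j) in the polygon -/
def posW (j : ℕ) : ℕ := if j < X.r then 2 * j else j + X.r

lemma posW_lt {j : ℕ} (hj : j < X.k) : X.posW j < X.m := by
  unfold posW m; have := X.hr; split_ifs <;> omega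

lemma pv_posW {j : ℕ} (hj : j < X.k) : X.pv (X.posW j) = X.gv (X.c - 1) j := by
  unfold pv posW pc gv
  have := X.hr
  split_ifs with h1 h2 h3 h4 h5 <;> first
    | (congr 1; unfold g; omega)
    | omega

lemma pv_res {t : ℕ} (ht : t < X.r) : X.pv (2 * t + 1) = X.qv t := by
  unfold pv pc qv
  have h1 : 2 * t + 1 < 2 * X.r := by omega
  have h2 : ¬ ((2 * t + 1) % 2 = 0) := by omega
  have h3 : (2 * t + 1) / 2 = t := by omega
  rw [if_pos h1, if_neg h2, h3]


lemma mod_cases {j : ℕ} (hj : j < X.k) :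
    (j+1) % X.k = j+1 ∧ j+1 < X.k ∨ (j+1) % X.k = 0 ∧ j+1 = X.k := by
  rcases (by omega : j+1 < X.k ∨ j + 1 = X.k) with h|h
  · exact Or.inl ⟨Nat.mod_eq_of_lt h, h⟩
  · exact Or.inr ⟨by rw [h]; exact Nat.mod_self _, h⟩

lemma mod_cases_m {a : ℕ} (ha : a < X.m) :
    (a+1) % X.m = a+1 ∧ a+1 < X.m ∨ (a+1) % X.m = 0 ∧ a+1 = X.m := by
  rcases (by omega : a+1 < X.m ∨ a + 1 = X.m) with h|h
  · exact Or.inl ⟨Nat.mod_eq_of_lt h, h⟩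
  · exact Or.inr ⟨by rw [h]; exact Nat.mod_self _, h⟩

/-- classification of polygon vertices -/
lemma pv_cases {a : ℕ} (ha : a < X.m) :
    (∃ j, j < X.k ∧ a = X.posW j ∧ X.pv a = X.gv (X.c - 1) j) ∨
    (∃ t, t < X.r ∧ a = 2 * t + 1 ∧ X.pv a = X.qv t) := by
  have hm := X.hm_eq
  have hrk := X.hr
  by_cases h1 : a < 2 * X.r
  · by_cases h2 : a % 2 = 0
    · left
      refine ⟨a / 2, by omega, by unfold posW; rw [if_pos (by omega)]; omega, ?_⟩
      unfold pv pc gv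
      rw [if_pos h1, if_pos h2]
    · right
      refine ⟨a / 2, by omega, by omega, ?_⟩
      unfold pv pc qv
      rw [if_pos h1, if_neg h2]
  · left
    refine ⟨a - X.r, by omega, by unfold posW; rw [if_neg (by omega)]; omega, ?_⟩
    unfold pv pc gv
    rw [if_neg h1]

lemma posW_inj {j j' : ℕ} (hj : j < X.k) (hj' : j' < X.k) (h : X.posW j = X.posW j') :
    j = j' := by
  unfold posW at h
  have := X.hr
  split_ifs at h <;> omega

/-! ### Edge families -/

def E1 : Finset (Sym2 (Fin X.n)) :=
  ((range (X.c-1)) ×ˢ (range X.k)).image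
    (fun ij => s(X.gv ij.1 ij.2, X.gv ij.1 ((ij.2+1) % X.k)))

def E2a : Finset (Sym2 (Fin X.n)) :=
  ((range (X.c-1)) ×ˢ (range X.k)).image
    (fun ij => s(X.gv ij.1 ij.2, X.gv (ij.1+1) ij.2))

def E2b : Finset (Sym2 (Fin X.n)) :=
  ((range (X.c-1)) ×ˢ (range X.k)).image
    (fun ij => s(X.gv ij.1 ij.2, X.gv (ij.1+1) ((ij.2+1) % X.k)))

def EP : Finset (Sym2 (Fin X.n)) :=
  (range X.m).image (fun a => s(X.pv a, X.pv ((a+1) % X.m)))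

def E5 : Finset (Sym2 (Fin X.n)) :=
  (range X.r).image (fun t => s(X.qv t, X.gv (X.c-2) t))

def E6 : Finset (Sym2 (Fin X.n)) :=
  (range (X.m-3)).image (fun a => s(X.pv (X.f (a+1)), X.pv (X.f (a+2))))

def ED : Finset (Sym2 (Fin X.n)) := X.E1 ∪ X.E2a ∪ X.E2b ∪ X.EP ∪ X.E5 ∪ X.E6

def G : SimpleGraph (Fin X.n) := SimpleGraph.fromEdgeSet ↑X.ED

lemma adj_iff {u v : Fin X.n} : X.G.Adj u v ↔ s(u,v) ∈ X.ED ∧ u ≠ v := by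
  unfold G
  rw [SimpleGraph.fromEdgeSet_adj]
  simp

lemma f_lt {s : ℕ} (hs : s < X.m) : X.f s < X.m := by
  unfold f
  have := X.m_pos
  split_ifs <;> omega

lemma f_inj {s s' : ℕ} (hs : s < X.m) (hs' : s' < X.m) (h : X.f s = X.f s') : s = s' := by
  unfold f at h
  split_ifs at h <;> omega


/-! ### Cards of edge families -/

lemma E1_card : X.E1.card = (X.c - 1) * X.k := by
  unfold E1
  rw [Finset.card_image_of_injOn, Finset.card_product, Finset.card_range, Finset.card_range]
  rintro ⟨i,j⟩ hmem ⟨i',j'⟩ hmem' h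
  simp only [coe_product, Set.mem_prod, mem_coe, mem_range] at hmem hmem'
  obtain ⟨hi, hj⟩ := hmem; obtain ⟨hi', hj'⟩ := hmem'
  have hk := X.hk; have hc := X.hc
  have hb : (j+1) % X.k < X.k := Nat.mod_lt _ (by omega)
  have hb' : (j'+1) % X.k < X.k := Nat.mod_lt _ (by omega)
  rw [Sym2.eq_iff] at h
  rcases X.mod_cases hj with ⟨e1,h1⟩|⟨e1,h1⟩ <;> rcases X.mod_cases hj' with ⟨e2,h2⟩|⟨e2,h2⟩ <;>
    rw [e1, e2] at h <;>
    rcases h with ⟨hA,hB⟩|⟨hA,hB⟩ <;>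
    rw [X.gv_eq_gv (by omega) (by omega) (by omega) (by omega)] at hA <;>
    rw [X.gv_eq_gv (by omega) (by omega) (by omega) (by omega)] at hB <;>
    simp only [Prod.mk.injEq] <;> omega

lemma E2a_card : X.E2a.card = (X.c - 1) * X.k := by
  unfold E2a
  rw [Finset.card_image_of_injOn, Finset.card_product, Finset.card_range, Finset.card_range]
  rintro ⟨i,j⟩ hmem ⟨i',j'⟩ hmem' h
  simp only [coe_product, Set.mem_prod, mem_coe, mem_range] at hmem hmem'
  obtain ⟨hi, hj⟩ := hmem; obtain ⟨hi', hj'⟩ := hmem'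
  have hk := X.hk; have hc := X.hc
  rw [Sym2.eq_iff] at h
  rcases h with ⟨hA,hB⟩|⟨hA,hB⟩ <;>
    rw [X.gv_eq_gv (by omega) (by omega) (by omega) (by omega)] at hA <;>
    rw [X.gv_eq_gv (by omega) (by omega) (by omega) (by omega)] at hB <;>
    simp only [Prod.mk.injEq] <;> omega

lemma E2b_card : X.E2b.card = (X.c - 1) * X.k := by
  unfold E2b
  rw [Finset.card_image_of_injOn, Finset.card_product, Finset.card_range, Finset.card_range]
  rintro ⟨i,j⟩ hmem ⟨i',j'⟩ hmem' h
  simp only [coe_product, Set.mem_prod, mem_coe, mem_range] at hmem hmem'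
  obtain ⟨hi, hj⟩ := hmem; obtain ⟨hi', hj'⟩ := hmem'
  have hk := X.hk; have hc := X.hc
  have hb : (j+1) % X.k < X.k := Nat.mod_lt _ (by omega)
  have hb' : (j'+1) % X.k < X.k := Nat.mod_lt _ (by omega)
  rw [Sym2.eq_iff] at h
  rcases X.mod_cases hj with ⟨e1,h1⟩|⟨e1,h1⟩ <;> rcases X.mod_cases hj' with ⟨e2,h2⟩|⟨e2,h2⟩ <;>
    rw [e1, e2] at h <;>
    rcases h with ⟨hA,hB⟩|⟨hA,hB⟩ <;>
    rw [X.gv_eq_gv (by omega) (by omega) (by omega) (by omega)] at hA <;>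
    rw [X.gv_eq_gv (by omega) (by omega) (by omega) (by omega)] at hB <;>
    simp only [Prod.mk.injEq] <;> omega

lemma EP_card : X.EP.card = X.m := by
  unfold EP
  rw [Finset.card_image_of_injOn, Finset.card_range]
  intro a ha a' ha' h
  simp only [mem_coe, mem_range] at ha ha'
  have hm := X.m_pos
  have hb : (a+1) % X.m < X.m := Nat.mod_lt _ (by omega)
  have hb' : (a'+1) % X.m < X.m := Nat.mod_lt _ (by omega)
  rw [Sym2.eq_iff] at h
  rcases X.mod_cases_m ha with ⟨e1,h1⟩|⟨e1,h1⟩ <;> rcases X.mod_cases_m ha' with ⟨e2,h2⟩|⟨e2,h2⟩ <;>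
    rw [e1, e2] at h <;>
    rcases h with ⟨hA,hB⟩|⟨hA,hB⟩ <;>
    rw [X.pv_inj (by omega) (by omega)] at hA <;>
    rw [X.pv_inj (by omega) (by omega)] at hB <;>
    omega

lemma E5_card : X.E5.card = X.r := by
  unfold E5
  rw [Finset.card_image_of_injOn, Finset.card_range]
  intro t ht t' ht' h
  simp only [mem_coe, mem_range] at ht ht'
  have hc := X.hc; have hk := X.hk; have hr := X.hr
  rw [Sym2.eq_iff] at h
  rcases h with ⟨hA,hB⟩|⟨hA,hB⟩
  · rw [X.qv_eq_qv (by omega) (by omega)] at hA; omega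
  · exact absurd hA.symm (X.gv_ne_qv (by omega) (by omega) (by omega))

lemma E6_card : X.E6.card = X.m - 3 := by
  unfold E6
  rw [Finset.card_image_of_injOn, Finset.card_range]
  intro a ha a' ha' h
  simp only [mem_coe, mem_range] at ha ha'
  have hm := X.m_pos
  rw [Sym2.eq_iff] at h
  rcases h with ⟨hA,hB⟩|⟨hA,hB⟩ <;>
    rw [X.pv_inj (X.f_lt (by omega)) (X.f_lt (by omega))] at hA <;>
    rw [X.pv_inj (X.f_lt (by omega)) (X.f_lt (by omega))] at hB
  · exact Nat.succ_injective (X.f_inj (by omega) (by omega) hA)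
  · have h1 := X.f_inj (by omega : a+1 < X.m) (by omega : a'+2 < X.m) hA
    have h2 := X.f_inj (by omega : a+2 < X.m) (by omega : a'+1 < X.m) hB
    omega

/-! ### Disjointness helpers -/

lemma low_ne_pv {i j a : ℕ} (hi : i < X.c - 1) (hj : j < X.k) (ha : a < X.m) :
    X.gv i j ≠ X.pv a := by
  have hc := X.hc
  rcases X.pv_cases ha with ⟨j', hj', _, he⟩ | ⟨t, ht, _, he⟩ <;> rw [he]
  · rw [Ne, X.gv_eq_gv (by omega) hj (by omega) hj']; omega
  · exact X.gv_ne_qv (by omega) hj ht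


lemma unpack_E1 {e : Sym2 (Fin X.n)} (h : e ∈ X.E1) :
    ∃ i j, (i < X.c - 1 ∧ j < X.k) ∧ s(X.gv i j, X.gv i ((j+1) % X.k)) = e := by
  simpa only [E1, mem_image, mem_product, mem_range, Prod.exists] using h

lemma unpack_E2a {e : Sym2 (Fin X.n)} (h : e ∈ X.E2a) :
    ∃ i j, (i < X.c - 1 ∧ j < X.k) ∧ s(X.gv i j, X.gv (i+1) j) = e := by
  simpa only [E2a, mem_image, mem_product, mem_range, Prod.exists] using h

lemma unpack_E2b {e : Sym2 (Fin X.n)} (h : e ∈ X.E2b) :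
    ∃ i j, (i < X.c - 1 ∧ j < X.k) ∧ s(X.gv i j, X.gv (i+1) ((j+1) % X.k)) = e := by
  simpa only [E2b, mem_image, mem_product, mem_range, Prod.exists] using h

lemma unpack_EP {e : Sym2 (Fin X.n)} (h : e ∈ X.EP) :
    ∃ a, a < X.m ∧ s(X.pv a, X.pv ((a+1) % X.m)) = e := by
  simpa only [EP, mem_image, mem_range] using h

lemma unpack_E5 {e : Sym2 (Fin X.n)} (h : e ∈ X.E5) :
    ∃ t, t < X.r ∧ s(X.qv t, X.gv (X.c-2) t) = e := by
  simpa only [E5, mem_image, mem_range] using h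

lemma unpack_E6 {e : Sym2 (Fin X.n)} (h : e ∈ X.E6) :
    ∃ a, a < X.m - 3 ∧ s(X.pv (X.f (a+1)), X.pv (X.f (a+2))) = e := by
  simpa only [E6, mem_image, mem_range] using h

lemma disj_E1_E2a : Disjoint X.E1 X.E2a := by
  rw [Finset.disjoint_left]
  intro e h1 h2
  obtain ⟨i, j, ⟨hi,hj⟩, he1⟩ := X.unpack_E1 h1
  obtain ⟨i', j', ⟨hi',hj'⟩, he2⟩ := X.unpack_E2a h2
  rw [← he1, Sym2.eq_iff] at he2
  have hk := X.hk; have hc := X.hc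
  have hb : (j+1) % X.k < X.k := Nat.mod_lt _ (by omega)
  rcases he2 with ⟨hA,hB⟩|⟨hA,hB⟩ <;>
    rw [X.gv_eq_gv (by omega) (by omega) (by omega) (by omega)] at hA <;>
    rw [X.gv_eq_gv (by omega) (by omega) (by omega) (by omega)] at hB <;> omega

lemma disj_E1_E2b : Disjoint X.E1 X.E2b := by
  rw [Finset.disjoint_left]
  intro e h1 h2
  obtain ⟨i, j, ⟨hi,hj⟩, he1⟩ := X.unpack_E1 h1
  obtain ⟨i', j', ⟨hi',hj'⟩, he2⟩ := X.unpack_E2b h2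
  rw [← he1, Sym2.eq_iff] at he2
  have hk := X.hk; have hc := X.hc
  have hb : (j+1) % X.k < X.k := Nat.mod_lt _ (by omega)
  have hb' : (j'+1) % X.k < X.k := Nat.mod_lt _ (by omega)
  rcases he2 with ⟨hA,hB⟩|⟨hA,hB⟩ <;>
    rw [X.gv_eq_gv (by omega) (by omega) (by omega) (by omega)] at hA <;>
    rw [X.gv_eq_gv (by omega) (by omega) (by omega) (by omega)] at hB <;> omega

lemma disj_E2a_E2b : Disjoint X.E2a X.E2b := by
  rw [Finset.disjoint_left]
  intro e h1 h2
  obtain ⟨i, j, ⟨hi,hj⟩, he1⟩ := X.unpack_E2a h1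
  obtain ⟨i', j', ⟨hi',hj'⟩, he2⟩ := X.unpack_E2b h2
  rw [← he1, Sym2.eq_iff] at he2
  have hk := X.hk; have hc := X.hc
  have hb' : (j'+1) % X.k < X.k := Nat.mod_lt _ (by omega)
  rcases X.mod_cases hj' with ⟨e2,h2'⟩|⟨e2,h2'⟩ <;> rw [e2] at he2 <;>
  rcases he2 with ⟨hA,hB⟩|⟨hA,hB⟩ <;>
    rw [X.gv_eq_gv (by omega) (by omega) (by omega) (by omega)] at hA <;>
    rw [X.gv_eq_gv (by omega) (by omega) (by omega) (by omega)] at hB <;> omega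

lemma disj_E1_E5 : Disjoint X.E1 X.E5 := by
  rw [Finset.disjoint_left]
  intro e h1 h2
  obtain ⟨i, j, ⟨hi,hj⟩, he1⟩ := X.unpack_E1 h1
  obtain ⟨t, ht, he2⟩ := X.unpack_E5 h2
  rw [← he1, Sym2.eq_iff] at he2
  have hk := X.hk; have hc := X.hc
  have hb : (j+1) % X.k < X.k := Nat.mod_lt _ (by omega)
  rcases he2 with ⟨hA,hB⟩|⟨hA,hB⟩
  · exact X.gv_ne_qv (by omega) (by omega) ht hA.symm
  · exact X.gv_ne_qv (by omega) (by omega) ht hA.symm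

lemma disj_E2a_E5 : Disjoint X.E2a X.E5 := by
  rw [Finset.disjoint_left]
  intro e h1 h2
  obtain ⟨i, j, ⟨hi,hj⟩, he1⟩ := X.unpack_E2a h1
  obtain ⟨t, ht, he2⟩ := X.unpack_E5 h2
  rw [← he1, Sym2.eq_iff] at he2
  have hk := X.hk; have hc := X.hc
  rcases he2 with ⟨hA,hB⟩|⟨hA,hB⟩
  · exact X.gv_ne_qv (by omega) (by omega) ht hA.symm
  · exact X.gv_ne_qv (by omega) (by omega) ht hA.symm

lemma disj_E2b_E5 : Disjoint X.E2b X.E5 := by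
  rw [Finset.disjoint_left]
  intro e h1 h2
  obtain ⟨i, j, ⟨hi,hj⟩, he1⟩ := X.unpack_E2b h1
  obtain ⟨t, ht, he2⟩ := X.unpack_E5 h2
  rw [← he1, Sym2.eq_iff] at he2
  have hk := X.hk; have hc := X.hc
  have hb : (j+1) % X.k < X.k := Nat.mod_lt _ (by omega)
  rcases he2 with ⟨hA,hB⟩|⟨hA,hB⟩
  · exact X.gv_ne_qv (by omega) (by omega) ht hA.symm
  · exact X.gv_ne_qv (by omega) (by omega) ht hA.symm

lemma disj_E1_EP : Disjoint X.E1 X.EP := by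
  rw [Finset.disjoint_left]
  intro e h1 h2
  obtain ⟨i, j, ⟨hi,hj⟩, he1⟩ := X.unpack_E1 h1
  obtain ⟨a, ha, he2⟩ := X.unpack_EP h2
  rw [← he1, Sym2.eq_iff] at he2
  have hm := X.m_pos
  have hb : (a+1) % X.m < X.m := Nat.mod_lt _ (by omega)
  rcases he2 with ⟨hA,_⟩|⟨_,hB⟩
  · exact X.low_ne_pv hi hj ha hA.symm
  · exact X.low_ne_pv hi hj hb hB.symm

lemma disj_E2a_EP : Disjoint X.E2a X.EP := by
  rw [Finset.disjoint_left]
  intro e h1 h2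
  obtain ⟨i, j, ⟨hi,hj⟩, he1⟩ := X.unpack_E2a h1
  obtain ⟨a, ha, he2⟩ := X.unpack_EP h2
  rw [← he1, Sym2.eq_iff] at he2
  have hm := X.m_pos
  have hb : (a+1) % X.m < X.m := Nat.mod_lt _ (by omega)
  rcases he2 with ⟨hA,_⟩|⟨_,hB⟩
  · exact X.low_ne_pv hi hj ha hA.symm
  · exact X.low_ne_pv hi hj hb hB.symm

lemma disj_E2b_EP : Disjoint X.E2b X.EP := by
  rw [Finset.disjoint_left]
  intro e h1 h2
  obtain ⟨i, j, ⟨hi,hj⟩, he1⟩ := X.unpack_E2b h1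
  obtain ⟨a, ha, he2⟩ := X.unpack_EP h2
  rw [← he1, Sym2.eq_iff] at he2
  have hm := X.m_pos
  have hb : (a+1) % X.m < X.m := Nat.mod_lt _ (by omega)
  rcases he2 with ⟨hA,_⟩|⟨_,hB⟩
  · exact X.low_ne_pv hi hj ha hA.symm
  · exact X.low_ne_pv hi hj hb hB.symm

lemma disj_E1_E6 : Disjoint X.E1 X.E6 := by
  rw [Finset.disjoint_left]
  intro e h1 h2
  obtain ⟨i, j, ⟨hi,hj⟩, he1⟩ := X.unpack_E1 h1
  obtain ⟨a, ha, he2⟩ := X.unpack_E6 h2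
  rw [← he1, Sym2.eq_iff] at he2
  have hm := X.m_pos
  rcases he2 with ⟨hA,_⟩|⟨_,hB⟩
  · exact X.low_ne_pv hi hj (X.f_lt (by omega)) hA.symm
  · exact X.low_ne_pv hi hj (X.f_lt (by omega)) hB.symm

lemma disj_E2a_E6 : Disjoint X.E2a X.E6 := by
  rw [Finset.disjoint_left]
  intro e h1 h2
  obtain ⟨i, j, ⟨hi,hj⟩, he1⟩ := X.unpack_E2a h1
  obtain ⟨a, ha, he2⟩ := X.unpack_E6 h2
  rw [← he1, Sym2.eq_iff] at he2
  have hm := X.m_pos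
  rcases he2 with ⟨hA,_⟩|⟨_,hB⟩
  · exact X.low_ne_pv hi hj (X.f_lt (by omega)) hA.symm
  · exact X.low_ne_pv hi hj (X.f_lt (by omega)) hB.symm

lemma disj_E2b_E6 : Disjoint X.E2b X.E6 := by
  rw [Finset.disjoint_left]
  intro e h1 h2
  obtain ⟨i, j, ⟨hi,hj⟩, he1⟩ := X.unpack_E2b h1
  obtain ⟨a, ha, he2⟩ := X.unpack_E6 h2
  rw [← he1, Sym2.eq_iff] at he2
  have hm := X.m_pos
  rcases he2 with ⟨hA,_⟩|⟨_,hB⟩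
  · exact X.low_ne_pv hi hj (X.f_lt (by omega)) hA.symm
  · exact X.low_ne_pv hi hj (X.f_lt (by omega)) hB.symm

lemma disj_EP_E5 : Disjoint X.EP X.E5 := by
  rw [Finset.disjoint_left]
  intro e h1 h2
  obtain ⟨a, ha, he1⟩ := X.unpack_EP h1
  obtain ⟨t, ht, he2⟩ := X.unpack_E5 h2
  rw [← he1, Sym2.eq_iff] at he2
  have hm := X.m_pos; have hc := X.hc; have hr := X.hr
  have hb : (a+1) % X.m < X.m := Nat.mod_lt _ (by omega)
  rcases he2 with ⟨_,hB⟩|⟨_,hB⟩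
  · exact X.low_ne_pv (by omega) (by omega) hb hB
  · exact X.low_ne_pv (by omega) (by omega) ha hB

lemma disj_E6_E5 : Disjoint X.E6 X.E5 := by
  rw [Finset.disjoint_left]
  intro e h1 h2
  obtain ⟨a, ha, he1⟩ := X.unpack_E6 h1
  obtain ⟨t, ht, he2⟩ := X.unpack_E5 h2
  rw [← he1, Sym2.eq_iff] at he2
  have hm := X.m_pos; have hc := X.hc; have hr := X.hr
  rcases he2 with ⟨_,hB⟩|⟨_,hB⟩
  · exact X.low_ne_pv (by omega) (by omega) (X.f_lt (by omega)) hB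
  · exact X.low_ne_pv (by omega) (by omega) (X.f_lt (by omega)) hB

lemma disj_EP_E6 : Disjoint X.EP X.E6 := by
  rw [Finset.disjoint_left]
  intro e h1 h2
  obtain ⟨a, ha, he1⟩ := X.unpack_EP h1
  obtain ⟨b, hb6, he2⟩ := X.unpack_E6 h2
  rw [← he1, Sym2.eq_iff] at he2
  have hm := X.m_pos
  have hb : (a+1) % X.m < X.m := Nat.mod_lt _ (by omega)
  rcases X.mod_cases_m ha with ⟨e1,h1'⟩|⟨e1,h1'⟩ <;> rw [e1] at he2 <;>
  rcases he2 with ⟨hA,hB⟩|⟨hA,hB⟩ <;>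
    rw [X.pv_inj (X.f_lt (by omega)) (by omega)] at hA <;>
    rw [X.pv_inj (X.f_lt (by omega)) (by omega)] at hB <;>
    unfold f at hA hB <;>
    split_ifs at hA hB <;> omega


/-! ### Faces -/

def anchor (a : ℕ) : ℕ := if a < 2*X.r then a/2 else a - X.r

lemma anchor_lt {a : ℕ} (ha : a < X.m) : X.anchor a < X.k := by
  unfold anchor; have := X.hm_eq; have := X.hr; split_ifs <;> omega

def FA : Finset (Finset (Fin X.n)) :=
  ((range (X.c-2)) ×ˢ range X.k).image
    (fun ij => {X.gv ij.1 ij.2, X.gv ij.1 ((ij.2+1) % X.k), X.gv (ij.1+1) ((ij.2+1) % X.k)})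

def FA' : Finset (Finset (Fin X.n)) :=
  ((range (X.c-2)) ×ˢ range X.k).image
    (fun ij => {X.gv ij.1 ij.2, X.gv (ij.1+1) ij.2, X.gv (ij.1+1) ((ij.2+1) % X.k)})

def FB : Finset (Finset (Fin X.n)) :=
  (range X.k).image
    (fun j => {X.gv (X.c-2) j, X.gv (X.c-2) ((j+1) % X.k), X.gv (X.c-1) ((j+1) % X.k)})

def FL : Finset (Finset (Fin X.n)) :=
  (range X.m).image
    (fun a => {X.gv (X.c-2) (X.anchor a), X.pv a, X.pv ((a+1) % X.m)})

def FE : Finset (Finset (Fin X.n)) :=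
  (range (X.m-2)).image
    (fun s => {X.pv (X.f s), X.pv (X.f (s+1)), X.pv (X.f (s+2))})

def FF : Finset (Finset (Fin X.n)) := X.FA ∪ X.FA' ∪ X.FB ∪ X.FL ∪ X.FE


lemma FA_card : X.FA.card = (X.c - 2) * X.k := by
  unfold FA
  rw [Finset.card_image_of_injOn, Finset.card_product, Finset.card_range, Finset.card_range]
  rintro ⟨i,j⟩ hmem ⟨i',j'⟩ hmem' h
  simp only [coe_product, Set.mem_prod, mem_coe, mem_range] at hmem hmem'
  obtain ⟨hi, hj⟩ := hmem; obtain ⟨hi', hj'⟩ := hmem'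
  have hk := X.hk; have hc := X.hc
  have hb : (j+1) % X.k < X.k := Nat.mod_lt _ (by omega)
  have hb' : (j'+1) % X.k < X.k := Nat.mod_lt _ (by omega)
  simp only at h
  have m1 : X.gv i j ∈ ({X.gv i' j', X.gv i' ((j'+1) % X.k), X.gv (i'+1) ((j'+1) % X.k)} : Finset (Fin X.n)) := by
    rw [← h]; simp
  have m1' : X.gv i' j' ∈ ({X.gv i j, X.gv i ((j+1) % X.k), X.gv (i+1) ((j+1) % X.k)} : Finset (Fin X.n)) := by
    rw [h]; simp
  simp only [mem_insert, mem_singleton] at m1 m1'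
  simp only [Prod.mk.injEq]
  rcases X.mod_cases hj with ⟨e1,h1⟩|⟨e1,h1⟩ <;> rcases X.mod_cases hj' with ⟨e2,h2⟩|⟨e2,h2⟩ <;>
    rw [e1] at m1' <;> rw [e2] at m1 <;>
    rcases m1 with hA|hA|hA <;>
    rw [X.gv_eq_gv (by omega) (by omega) (by omega) (by omega)] at hA <;>
    rcases m1' with hB|hB|hB <;>
    rw [X.gv_eq_gv (by omega) (by omega) (by omega) (by omega)] at hB <;>
    omega

lemma FA'_card : X.FA'.card = (X.c - 2) * X.k := by
  unfold FA'
  rw [Finset.card_image_of_injOn, Finset.card_product, Finset.card_range, Finset.card_range]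
  rintro ⟨i,j⟩ hmem ⟨i',j'⟩ hmem' h
  simp only [coe_product, Set.mem_prod, mem_coe, mem_range] at hmem hmem'
  obtain ⟨hi, hj⟩ := hmem; obtain ⟨hi', hj'⟩ := hmem'
  have hk := X.hk; have hc := X.hc
  have hb : (j+1) % X.k < X.k := Nat.mod_lt _ (by omega)
  have hb' : (j'+1) % X.k < X.k := Nat.mod_lt _ (by omega)
  simp only at h
  have m1 : X.gv i j ∈ ({X.gv i' j', X.gv (i'+1) j', X.gv (i'+1) ((j'+1) % X.k)} : Finset (Fin X.n)) := by
    rw [← h]; simp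
  have m1' : X.gv i' j' ∈ ({X.gv i j, X.gv (i+1) j, X.gv (i+1) ((j+1) % X.k)} : Finset (Fin X.n)) := by
    rw [h]; simp
  simp only [mem_insert, mem_singleton] at m1 m1'
  simp only [Prod.mk.injEq]
  rcases X.mod_cases hj with ⟨e1,h1⟩|⟨e1,h1⟩ <;> rcases X.mod_cases hj' with ⟨e2,h2⟩|⟨e2,h2⟩ <;>
    rw [e1] at m1' <;> rw [e2] at m1 <;>
    rcases m1 with hA|hA|hA <;>
    rw [X.gv_eq_gv (by omega) (by omega) (by omega) (by omega)] at hA <;>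
    rcases m1' with hB|hB|hB <;>
    rw [X.gv_eq_gv (by omega) (by omega) (by omega) (by omega)] at hB <;>
    omega

lemma FB_card : X.FB.card = X.k := by
  unfold FB
  rw [Finset.card_image_of_injOn, Finset.card_range]
  intro j hj j' hj' h
  simp only [mem_coe, mem_range] at hj hj'
  have hk := X.hk; have hc := X.hc
  have hb : (j+1) % X.k < X.k := Nat.mod_lt _ (by omega)
  have hb' : (j'+1) % X.k < X.k := Nat.mod_lt _ (by omega)
  simp only at h
  have m1 : X.gv (X.c-2) j ∈ ({X.gv (X.c-2) j', X.gv (X.c-2) ((j'+1) % X.k), X.gv (X.c-1) ((j'+1) % X.k)} : Finset (Fin X.n)) := by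
    rw [← h]; simp
  have m1' : X.gv (X.c-2) j' ∈ ({X.gv (X.c-2) j, X.gv (X.c-2) ((j+1) % X.k), X.gv (X.c-1) ((j+1) % X.k)} : Finset (Fin X.n)) := by
    rw [h]; simp
  simp only [mem_insert, mem_singleton] at m1 m1'
  rcases X.mod_cases hj with ⟨e1,h1⟩|⟨e1,h1⟩ <;> rcases X.mod_cases hj' with ⟨e2,h2⟩|⟨e2,h2⟩ <;>
    rw [e1] at m1' <;> rw [e2] at m1 <;>
    rcases m1 with hA|hA|hA <;>
    rw [X.gv_eq_gv (by omega) (by omega) (by omega) (by omega)] at hA <;>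
    rcases m1' with hB|hB|hB <;>
    rw [X.gv_eq_gv (by omega) (by omega) (by omega) (by omega)] at hB <;>
    omega

lemma FL_card : X.FL.card = X.m := by
  unfold FL
  rw [Finset.card_image_of_injOn, Finset.card_range]
  intro a ha a' ha' h
  simp only [mem_coe, mem_range] at ha ha'
  have hm := X.m_pos; have hc := X.hc
  have hb : (a+1) % X.m < X.m := Nat.mod_lt _ (by omega)
  have hb' : (a'+1) % X.m < X.m := Nat.mod_lt _ (by omega)
  simp only at h
  have m1 : X.pv a ∈ ({X.gv (X.c-2) (X.anchor a'), X.pv a', X.pv ((a'+1) % X.m)} : Finset (Fin X.n)) := by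
    rw [← h]; simp
  have m2 : X.pv ((a+1) % X.m) ∈ ({X.gv (X.c-2) (X.anchor a'), X.pv a', X.pv ((a'+1) % X.m)} : Finset (Fin X.n)) := by
    rw [← h]; simp
  simp only [mem_insert, mem_singleton] at m1 m2
  rcases m1 with hA|hA|hA
  · exact absurd hA.symm (X.low_ne_pv (by omega) (X.anchor_lt ha') ha)
  · rw [X.pv_inj ha ha'] at hA; exact hA
  · rcases m2 with hB|hB|hB
    · exact absurd hB.symm (X.low_ne_pv (by omega) (X.anchor_lt ha') hb)
    · rw [X.pv_inj hb ha'] at hB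
      rw [X.pv_inj ha hb'] at hA
      rcases X.mod_cases_m ha with ⟨e1,h1⟩|⟨e1,h1⟩ <;> rcases X.mod_cases_m ha' with ⟨e2,h2⟩|⟨e2,h2⟩ <;>
        omega
    · rw [X.pv_inj hb hb'] at hB
      rw [X.pv_inj ha hb'] at hA
      rcases X.mod_cases_m ha with ⟨e1,h1⟩|⟨e1,h1⟩ <;> rcases X.mod_cases_m ha' with ⟨e2,h2⟩|⟨e2,h2⟩ <;>
        omega

lemma FE_card : X.FE.card = X.m - 2 := by
  unfold FE
  rw [Finset.card_image_of_injOn, Finset.card_range]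
  intro s hs s' hs' h
  simp only [mem_coe, mem_range] at hs hs'
  have hm := X.m_pos
  simp only at h
  have m1 : X.pv (X.f s) ∈ ({X.pv (X.f s'), X.pv (X.f (s'+1)), X.pv (X.f (s'+2))} : Finset (Fin X.n)) := by
    rw [← h]; simp
  have m2 : X.pv (X.f (s+1)) ∈ ({X.pv (X.f s'), X.pv (X.f (s'+1)), X.pv (X.f (s'+2))} : Finset (Fin X.n)) := by
    rw [← h]; simp
  have m3 : X.pv (X.f (s+2)) ∈ ({X.pv (X.f s'), X.pv (X.f (s'+1)), X.pv (X.f (s'+2))} : Finset (Fin X.n)) := by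
    rw [← h]; simp
  simp only [mem_insert, mem_singleton] at m1 m2 m3
  rcases m1 with hA|hA|hA <;>
    rw [X.pv_inj (X.f_lt (by omega)) (X.f_lt (by omega))] at hA <;>
    have hA' := X.f_inj (by omega) (by omega) hA <;>
  rcases m2 with hB|hB|hB <;>
    rw [X.pv_inj (X.f_lt (by omega)) (X.f_lt (by omega))] at hB <;>
    have hB' := X.f_inj (by omega) (by omega) hB <;>
  rcases m3 with hC|hC|hC <;>
    rw [X.pv_inj (X.f_lt (by omega)) (X.f_lt (by omega))] at hC <;>
    have hC' := X.f_inj (by omega) (by omega) hC <;>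
    omega


lemma unpack_FA {T : Finset (Fin X.n)} (h : T ∈ X.FA) :
    ∃ i j, (i < X.c - 2 ∧ j < X.k) ∧
      ({X.gv i j, X.gv i ((j+1) % X.k), X.gv (i+1) ((j+1) % X.k)} : Finset (Fin X.n)) = T := by
  simpa only [FA, mem_image, mem_product, mem_range, Prod.exists] using h

lemma unpack_FA' {T : Finset (Fin X.n)} (h : T ∈ X.FA') :
    ∃ i j, (i < X.c - 2 ∧ j < X.k) ∧
      ({X.gv i j, X.gv (i+1) j, X.gv (i+1) ((j+1) % X.k)} : Finset (Fin X.n)) = T := by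
  simpa only [FA', mem_image, mem_product, mem_range, Prod.exists] using h

lemma unpack_FB {T : Finset (Fin X.n)} (h : T ∈ X.FB) :
    ∃ j, j < X.k ∧
      ({X.gv (X.c-2) j, X.gv (X.c-2) ((j+1) % X.k), X.gv (X.c-1) ((j+1) % X.k)} : Finset (Fin X.n)) = T := by
  simpa only [FB, mem_image, mem_range] using h

lemma unpack_FL {T : Finset (Fin X.n)} (h : T ∈ X.FL) :
    ∃ a, a < X.m ∧
      ({X.gv (X.c-2) (X.anchor a), X.pv a, X.pv ((a+1) % X.m)} : Finset (Fin X.n)) = T := by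
  simpa only [FL, mem_image, mem_range] using h

lemma unpack_FE {T : Finset (Fin X.n)} (h : T ∈ X.FE) :
    ∃ s, s < X.m - 2 ∧
      ({X.pv (X.f s), X.pv (X.f (s+1)), X.pv (X.f (s+2))} : Finset (Fin X.n)) = T := by
  simpa only [FE, mem_image, mem_range] using h

lemma disj_FA_FA' : Disjoint X.FA X.FA' := by
  rw [Finset.disjoint_left]
  intro T h1 h2
  obtain ⟨i, j, ⟨hi,hj⟩, he1⟩ := X.unpack_FA h1
  obtain ⟨i', j', ⟨hi',hj'⟩, he2⟩ := X.unpack_FA' h2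
  rw [← he1] at he2
  have hk := X.hk; have hc := X.hc
  have hb : (j+1) % X.k < X.k := Nat.mod_lt _ (by omega)
  have hb' : (j'+1) % X.k < X.k := Nat.mod_lt _ (by omega)
  have m1 : X.gv i' j' ∈ ({X.gv i j, X.gv i ((j+1) % X.k), X.gv (i+1) ((j+1) % X.k)} : Finset (Fin X.n)) := by
    rw [← he2]; simp
  have m2 : X.gv (i'+1) j' ∈ ({X.gv i j, X.gv i ((j+1) % X.k), X.gv (i+1) ((j+1) % X.k)} : Finset (Fin X.n)) := by
    rw [← he2]; simp
  have m3 : X.gv (i'+1) ((j'+1) % X.k) ∈ ({X.gv i j, X.gv i ((j+1) % X.k), X.gv (i+1) ((j+1) % X.k)} : Finset (Fin X.n)) := by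
    rw [← he2]; simp
  simp only [mem_insert, mem_singleton] at m1 m2 m3
  rcases X.mod_cases hj with ⟨e1,h1'⟩|⟨e1,h1'⟩ <;> rcases X.mod_cases hj' with ⟨e2,h2'⟩|⟨e2,h2'⟩ <;>
    rw [e1] at m1 m2 m3 <;> rw [e2] at m3 <;>
    rcases m1 with hA|hA|hA <;>
    rw [X.gv_eq_gv (by omega) (by omega) (by omega) (by omega)] at hA <;>
    rcases m2 with hB|hB|hB <;>
    rw [X.gv_eq_gv (by omega) (by omega) (by omega) (by omega)] at hB <;>
    rcases m3 with hC|hC|hC <;>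
    rw [X.gv_eq_gv (by omega) (by omega) (by omega) (by omega)] at hC <;>
    omega

lemma pv_mem_FA {T : Finset (Fin X.n)} (hT : T ∈ X.FA) {a : ℕ} (ha : a < X.m) :
    X.pv a ∉ T := by
  obtain ⟨i, j, ⟨hi,hj⟩, he1⟩ := X.unpack_FA hT
  rw [← he1]
  have hk := X.hk; have hc := X.hc
  have hb : (j+1) % X.k < X.k := Nat.mod_lt _ (by omega)
  simp only [mem_insert, mem_singleton, not_or]
  exact ⟨fun h => X.low_ne_pv (by omega) hj ha h.symm,
    fun h => X.low_ne_pv (by omega) hb ha h.symm,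
    fun h => X.low_ne_pv (by omega) hb ha h.symm⟩

lemma pv_mem_FA' {T : Finset (Fin X.n)} (hT : T ∈ X.FA') {a : ℕ} (ha : a < X.m) :
    X.pv a ∉ T := by
  obtain ⟨i, j, ⟨hi,hj⟩, he1⟩ := X.unpack_FA' hT
  rw [← he1]
  have hk := X.hk; have hc := X.hc
  have hb : (j+1) % X.k < X.k := Nat.mod_lt _ (by omega)
  simp only [mem_insert, mem_singleton, not_or]
  exact ⟨fun h => X.low_ne_pv (by omega) hj ha h.symm,
    fun h => X.low_ne_pv (by omega) hj ha h.symm,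
    fun h => X.low_ne_pv (by omega) hb ha h.symm⟩

lemma disj_FA_FB : Disjoint X.FA X.FB := by
  rw [Finset.disjoint_left]
  intro T h1 h2
  obtain ⟨j', hj', he2⟩ := X.unpack_FB h2
  have hk := X.hk; have hc := X.hc
  have hb' : (j'+1) % X.k < X.k := Nat.mod_lt _ (by omega)
  have : X.gv (X.c-1) ((j'+1) % X.k) ∈ T := by rw [← he2]; simp
  have h3 : X.gv (X.c-1) ((j'+1) % X.k) = X.pv (X.posW ((j'+1) % X.k)) := (X.pv_posW hb').symm
  rw [h3] at this
  exact X.pv_mem_FA h1 (X.posW_lt hb') this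

lemma disj_FA'_FB : Disjoint X.FA' X.FB := by
  rw [Finset.disjoint_left]
  intro T h1 h2
  obtain ⟨j', hj', he2⟩ := X.unpack_FB h2
  have hk := X.hk; have hc := X.hc
  have hb' : (j'+1) % X.k < X.k := Nat.mod_lt _ (by omega)
  have : X.gv (X.c-1) ((j'+1) % X.k) ∈ T := by rw [← he2]; simp
  have h3 : X.gv (X.c-1) ((j'+1) % X.k) = X.pv (X.posW ((j'+1) % X.k)) := (X.pv_posW hb').symm
  rw [h3] at this
  exact X.pv_mem_FA' h1 (X.posW_lt hb') this

lemma disj_FA_FL : Disjoint X.FA X.FL := by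
  rw [Finset.disjoint_left]
  intro T h1 h2
  obtain ⟨a, ha, he2⟩ := X.unpack_FL h2
  have : X.pv a ∈ T := by rw [← he2]; simp
  exact X.pv_mem_FA h1 ha this

lemma disj_FA'_FL : Disjoint X.FA' X.FL := by
  rw [Finset.disjoint_left]
  intro T h1 h2
  obtain ⟨a, ha, he2⟩ := X.unpack_FL h2
  have : X.pv a ∈ T := by rw [← he2]; simp
  exact X.pv_mem_FA' h1 ha this

lemma disj_FA_FE : Disjoint X.FA X.FE := by
  rw [Finset.disjoint_left]
  intro T h1 h2
  obtain ⟨s, hs, he2⟩ := X.unpack_FE h2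
  have hm := X.m_pos
  have : X.pv (X.f s) ∈ T := by rw [← he2]; simp
  exact X.pv_mem_FA h1 (X.f_lt (by omega)) this

lemma disj_FA'_FE : Disjoint X.FA' X.FE := by
  rw [Finset.disjoint_left]
  intro T h1 h2
  obtain ⟨s, hs, he2⟩ := X.unpack_FE h2
  have hm := X.m_pos
  have : X.pv (X.f s) ∈ T := by rw [← he2]; simp
  exact X.pv_mem_FA' h1 (X.f_lt (by omega)) this

lemma disj_FB_FL : Disjoint X.FB X.FL := by
  rw [Finset.disjoint_left]
  intro T h1 h2
  obtain ⟨j, hj, he1⟩ := X.unpack_FB h1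
  obtain ⟨a, ha, he2⟩ := X.unpack_FL h2
  rw [← he1] at he2
  have hk := X.hk; have hc := X.hc; have hm := X.m_pos
  have hb : (j+1) % X.k < X.k := Nat.mod_lt _ (by omega)
  have hbm : (a+1) % X.m < X.m := Nat.mod_lt _ (by omega)
  have m1 : X.pv a ∈ ({X.gv (X.c-2) j, X.gv (X.c-2) ((j+1) % X.k), X.gv (X.c-1) ((j+1) % X.k)} : Finset (Fin X.n)) := by
    rw [← he2]; simp
  have m2 : X.pv ((a+1) % X.m) ∈ ({X.gv (X.c-2) j, X.gv (X.c-2) ((j+1) % X.k), X.gv (X.c-1) ((j+1) % X.k)} : Finset (Fin X.n)) := by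
    rw [← he2]; simp
  simp only [mem_insert, mem_singleton] at m1 m2
  have hwp : X.gv (X.c-1) ((j+1) % X.k) = X.pv (X.posW ((j+1) % X.k)) := (X.pv_posW hb).symm
  rcases m1 with hA|hA|hA
  · exact X.low_ne_pv (by omega) hj ha hA.symm
  · exact X.low_ne_pv (by omega) hb ha hA.symm
  · rcases m2 with hB|hB|hB
    · exact X.low_ne_pv (by omega) hj hbm hB.symm
    · exact X.low_ne_pv (by omega) hb hbm hB.symm
    · rw [hwp, X.pv_inj ha (X.posW_lt hb)] at hA
      rw [hwp, X.pv_inj hbm (X.posW_lt hb)] at hB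
      rcases X.mod_cases_m ha with ⟨e1,h1'⟩|⟨e1,h1'⟩ <;> omega

lemma disj_FB_FE : Disjoint X.FB X.FE := by
  rw [Finset.disjoint_left]
  intro T h1 h2
  obtain ⟨j, hj, he1⟩ := X.unpack_FB h1
  obtain ⟨s, hs, he2⟩ := X.unpack_FE h2
  rw [← he2] at he1
  have hk := X.hk; have hc := X.hc; have hm := X.m_pos
  have m1 : X.gv (X.c-2) j ∈ ({X.pv (X.f s), X.pv (X.f (s+1)), X.pv (X.f (s+2))} : Finset (Fin X.n)) := by
    rw [← he1]; simp
  simp only [mem_insert, mem_singleton] at m1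
  rcases m1 with hA|hA|hA <;>
    exact X.low_ne_pv (by omega) hj (X.f_lt (by omega)) hA

lemma disj_FL_FE : Disjoint X.FL X.FE := by
  rw [Finset.disjoint_left]
  intro T h1 h2
  obtain ⟨a, ha, he1⟩ := X.unpack_FL h1
  obtain ⟨s, hs, he2⟩ := X.unpack_FE h2
  rw [← he2] at he1
  have hk := X.hk; have hc := X.hc; have hm := X.m_pos
  have m1 : X.gv (X.c-2) (X.anchor a) ∈ ({X.pv (X.f s), X.pv (X.f (s+1)), X.pv (X.f (s+2))} : Finset (Fin X.n)) := by
    rw [← he1]; simp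
  simp only [mem_insert, mem_singleton] at m1
  rcases m1 with hA|hA|hA <;>
    exact X.low_ne_pv (by omega) (X.anchor_lt ha) (X.f_lt (by omega)) hA

lemma ckk2 : (X.c - 2) * X.k + X.k = (X.c - 1) * X.k := by
  have hc := X.hc
  have h1 : X.c - 2 + 1 = X.c - 1 := by omega
  calc (X.c - 2) * X.k + X.k = (X.c - 2 + 1) * X.k := by ring
  _ = (X.c - 1) * X.k := by rw [h1]

lemma ED_card : X.ED.card + X.k + 3 = 3 * X.n := by
  unfold ED
  rw [Finset.card_union_of_disjoint, Finset.card_union_of_disjoint,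
    Finset.card_union_of_disjoint, Finset.card_union_of_disjoint,
    Finset.card_union_of_disjoint]
  · rw [X.E1_card, X.E2a_card, X.E2b_card, X.EP_card, X.E5_card, X.E6_card]
    have h1 := X.ckk; have h2 := X.hm_eq; have h3 := X.hn
    have h4 := X.m_pos; have h5 := X.hk; have h6 := X.hc
    omega
  · exact X.disj_E1_E2a
  · exact Finset.disjoint_union_left.mpr ⟨X.disj_E1_E2b, X.disj_E2a_E2b⟩
  · exact Finset.disjoint_union_left.mpr
      ⟨Finset.disjoint_union_left.mpr ⟨X.disj_E1_EP, X.disj_E2a_EP⟩, X.disj_E2b_EP⟩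
  · exact Finset.disjoint_union_left.mpr
      ⟨Finset.disjoint_union_left.mpr
        ⟨Finset.disjoint_union_left.mpr ⟨X.disj_E1_E5, X.disj_E2a_E5⟩, X.disj_E2b_E5⟩, X.disj_EP_E5⟩
  · exact Finset.disjoint_union_left.mpr
      ⟨Finset.disjoint_union_left.mpr
        ⟨Finset.disjoint_union_left.mpr
          ⟨Finset.disjoint_union_left.mpr ⟨X.disj_E1_E6, X.disj_E2a_E6⟩, X.disj_E2b_E6⟩,
            X.disj_EP_E6⟩, X.disj_E6_E5.symm⟩

lemma FF_card : X.FF.card + X.k + 2 = 2 * X.n := by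
  unfold FF
  rw [Finset.card_union_of_disjoint, Finset.card_union_of_disjoint,
    Finset.card_union_of_disjoint, Finset.card_union_of_disjoint]
  · rw [X.FA_card, X.FA'_card, X.FB_card, X.FL_card, X.FE_card]
    have h1 := X.ckk; have h1' := X.ckk2; have h2 := X.hm_eq; have h3 := X.hn
    have h4 := X.m_pos; have h5 := X.hk; have h6 := X.hc
    omega
  · exact X.disj_FA_FA'
  · exact Finset.disjoint_union_left.mpr ⟨X.disj_FA_FB, X.disj_FA'_FB⟩
  · exact Finset.disjoint_union_left.mpr
      ⟨Finset.disjoint_union_left.mpr ⟨X.disj_FA_FL, X.disj_FA'_FL⟩, X.disj_FB_FL⟩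
  · exact Finset.disjoint_union_left.mpr
      ⟨Finset.disjoint_union_left.mpr
        ⟨Finset.disjoint_union_left.mpr ⟨X.disj_FA_FE, X.disj_FA'_FE⟩, X.disj_FB_FE⟩, X.disj_FL_FE⟩


/-! ### membership intro lemmas -/

lemma mk_E1 {i j : ℕ} (hi : i < X.c - 1) (hj : j < X.k) :
    s(X.gv i j, X.gv i ((j+1) % X.k)) ∈ X.ED := by
  simp only [ED, mem_union]
  refine Or.inl (Or.inl (Or.inl (Or.inl (Or.inl ?_))))
  unfold E1
  rw [mem_image]
  exact ⟨(i,j), by rw [mem_product]; simp [mem_range]; omega, rfl⟩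

lemma mk_E2a {i j : ℕ} (hi : i < X.c - 1) (hj : j < X.k) :
    s(X.gv i j, X.gv (i+1) j) ∈ X.ED := by
  simp only [ED, mem_union]
  refine Or.inl (Or.inl (Or.inl (Or.inl (Or.inr ?_))))
  unfold E2a
  rw [mem_image]
  exact ⟨(i,j), by rw [mem_product]; simp [mem_range]; omega, rfl⟩

lemma mk_E2b {i j : ℕ} (hi : i < X.c - 1) (hj : j < X.k) :
    s(X.gv i j, X.gv (i+1) ((j+1) % X.k)) ∈ X.ED := by
  simp only [ED, mem_union]
  refine Or.inl (Or.inl (Or.inl (Or.inr ?_)))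
  unfold E2b
  rw [mem_image]
  exact ⟨(i,j), by rw [mem_product]; simp [mem_range]; omega, rfl⟩

lemma mk_EP {a : ℕ} (ha : a < X.m) :
    s(X.pv a, X.pv ((a+1) % X.m)) ∈ X.ED := by
  simp only [ED, mem_union]
  refine Or.inl (Or.inl (Or.inr ?_))
  unfold EP
  rw [mem_image]
  exact ⟨a, by simp [mem_range]; omega, rfl⟩

lemma mk_E5 {t : ℕ} (ht : t < X.r) :
    s(X.qv t, X.gv (X.c-2) t) ∈ X.ED := by
  simp only [ED, mem_union]
  refine Or.inl (Or.inr ?_)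
  unfold E5
  rw [mem_image]
  exact ⟨t, by simp [mem_range]; omega, rfl⟩

lemma mk_E6 {s : ℕ} (h1 : 1 ≤ s) (h2 : s ≤ X.m - 3) :
    s(X.pv (X.f s), X.pv (X.f (s+1))) ∈ X.ED := by
  simp only [ED, mem_union]
  refine Or.inr ?_
  unfold E6
  rw [mem_image]
  refine ⟨s - 1, by simp [mem_range]; omega, ?_⟩
  have e1 : s - 1 + 1 = s := by omega
  have e2 : s - 1 + 2 = s + 1 := by omega
  rw [e1, e2]

/-- polygon cycle edges in either orientation of position -/
lemma mk_EP' {a b : ℕ} (ha : a < X.m) (hb : b < X.m) (hab : b = (a+1) % X.m ∨ a = (b+1) % X.m) :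
    s(X.pv a, X.pv b) ∈ X.ED := by
  rcases hab with h|h
  · rw [h]; exact X.mk_EP ha
  · rw [h, Sym2.eq_swap]; exact X.mk_EP hb

/-- polygon cycle edges, fully explicit version -/
lemma mk_EP2 {a b : ℕ} (ha : a < X.m) (hb : b < X.m)
    (h : b = a + 1 ∨ a = b + 1 ∨ (a = X.m - 1 ∧ b = 0) ∨ (b = X.m - 1 ∧ a = 0)) :
    s(X.pv a, X.pv b) ∈ X.ED := by
  have hm := X.m_pos
  rcases h with h|h|⟨h1,h2⟩|⟨h1,h2⟩
  · refine X.mk_EP' ha hb (Or.inl ?_)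
    rw [Nat.mod_eq_of_lt (by omega)]; omega
  · refine X.mk_EP' ha hb (Or.inr ?_)
    rw [Nat.mod_eq_of_lt (by omega)]; omega
  · refine X.mk_EP' ha hb (Or.inl ?_)
    subst h1; subst h2
    rw [Nat.sub_add_cancel (by omega), Nat.mod_self]
  · refine X.mk_EP' ha hb (Or.inr ?_)
    subst h1; subst h2
    rw [Nat.sub_add_cancel (by omega), Nat.mod_self]

/-- the comb path edges -/
lemma comb_edge {s : ℕ} (hs : s + 1 ≤ X.m - 1) :
    s(X.pv (X.f s), X.pv (X.f (s+1))) ∈ X.ED := by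
  have hm := X.m_pos
  rcases (by omega : s = 0 ∨ (1 ≤ s ∧ s ≤ X.m - 3) ∨ s = X.m - 2) with h|⟨h1,h2⟩|h
  · subst h
    have e0 : X.f 0 = 0 := by unfold f; norm_num
    have e1 : X.f 1 = X.m - 1 := by unfold f; norm_num
    rw [e0, e1]
    exact X.mk_EP2 (by omega) (by omega) (Or.inr (Or.inr (Or.inr ⟨rfl, rfl⟩)))
  · exact X.mk_E6 h1 h2
  · subst h
    refine X.mk_EP2 (X.f_lt (by omega)) (X.f_lt (by omega)) ?_
    unfold f
    split_ifs <;> omega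

/-- the comb skip edges (f s, f (s+2)) are polygon cycle edges -/
lemma comb_skip {s : ℕ} (hs : s + 2 ≤ X.m - 1) :
    s(X.pv (X.f s), X.pv (X.f (s+2))) ∈ X.ED := by
  have hm := X.m_pos
  refine X.mk_EP2 (X.f_lt (by omega)) (X.f_lt (by omega)) ?_
  unfold f
  split_ifs <;> omega


lemma mk_E2a' {j : ℕ} (hj : j < X.k) : s(X.gv (X.c-2) j, X.gv (X.c-1) j) ∈ X.ED := by
  have hc := X.hc
  have h := X.mk_E2a (i := X.c-2) (j := j) (by omega) hj
  rwa [show X.c - 2 + 1 = X.c - 1 from by omega] at h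

lemma mk_E2b' {j : ℕ} (hj : j < X.k) :
    s(X.gv (X.c-2) j, X.gv (X.c-1) ((j+1) % X.k)) ∈ X.ED := by
  have hc := X.hc
  have h := X.mk_E2b (i := X.c-2) (j := j) (by omega) hj
  rwa [show X.c - 2 + 1 = X.c - 1 from by omega] at h

lemma mk_E5' {t : ℕ} (ht : t < X.r) : s(X.gv (X.c-2) t, X.qv t) ∈ X.ED := by
  rw [Sym2.eq_swap]; exact X.mk_E5 ht

lemma anchor_edge1 {a : ℕ} (ha : a < X.m) :
    s(X.gv (X.c-2) (X.anchor a), X.pv a) ∈ X.ED := by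
  have hm := X.hm_eq; have hr := X.hr
  by_cases h1 : a < 2 * X.r
  · by_cases h2 : a % 2 = 0
    · have e1 : X.pv a = X.gv (X.c-1) (a/2) := by
        unfold pv pc gv; rw [if_pos h1, if_pos h2]
      have e2 : X.anchor a = a/2 := by unfold anchor; rw [if_pos h1]
      rw [e1, e2]
      exact X.mk_E2a' (by omega)
    · have e1 : X.pv a = X.qv (a/2) := by
        unfold pv pc qv; rw [if_pos h1, if_neg h2]
      have e2 : X.anchor a = a/2 := by unfold anchor; rw [if_pos h1]
      rw [e1, e2]
      exact X.mk_E5' (by omega)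
  · have e1 : X.pv a = X.gv (X.c-1) (a - X.r) := by
      unfold pv pc gv; rw [if_neg h1]
    have e2 : X.anchor a = a - X.r := by unfold anchor; rw [if_neg h1]
    rw [e1, e2]
    exact X.mk_E2a' (by omega)

lemma anchor_edge2 {a : ℕ} (ha : a < X.m) :
    s(X.gv (X.c-2) (X.anchor a), X.pv ((a+1) % X.m)) ∈ X.ED := by
  have hm := X.hm_eq; have hr := X.hr; have hk := X.hk
  rcases (by omega : a + 1 < X.m ∨ a = X.m - 1) with hlt|hend
  · have hmod : (a+1) % X.m = a+1 := Nat.mod_eq_of_lt hlt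
    by_cases h1 : a < 2 * X.r
    · by_cases h2 : a % 2 = 0
      · -- next is residual a/2
        have e1 : X.pv ((a+1) % X.m) = X.qv (a/2) := by
          unfold pv pc qv
          rw [hmod, if_pos (by omega), if_neg (by omega)]
          congr 2
          omega
        have e2 : X.anchor a = a/2 := by unfold anchor; rw [if_pos h1]
        rw [e1, e2]
        exact X.mk_E5' (by omega)
      · -- a odd, next is w_{a/2+1}
        have e1 : X.pv ((a+1) % X.m) = X.gv (X.c-1) (a/2 + 1) := by
          unfold pv pc gv
          rw [hmod]
          by_cases h3 : a + 1 < 2 * X.r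
          · rw [if_pos h3, if_pos (by omega)]
            congr 2
            omega
          · rw [if_neg h3]
            congr 2
            omega
        have e2 : X.anchor a = a/2 := by unfold anchor; rw [if_pos h1]
        rw [e1, e2]
        have h4 := X.mk_E2b' (j := a/2) (by omega)
        rwa [Nat.mod_eq_of_lt (by omega : a/2 + 1 < X.k)] at h4
    · have e1 : X.pv ((a+1) % X.m) = X.gv (X.c-1) (a - X.r + 1) := by
        unfold pv pc gv
        rw [hmod, if_neg (by omega)]
        congr 2
        omega
      have e2 : X.anchor a = a - X.r := by unfold anchor; rw [if_neg h1]
      rw [e1, e2]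
      have h4 := X.mk_E2b' (j := a - X.r) (by omega)
      rwa [Nat.mod_eq_of_lt (by omega : a - X.r + 1 < X.k)] at h4
  · have hmod : (a+1) % X.m = 0 := by
      rw [hend, Nat.sub_add_cancel (by omega), Nat.mod_self]
    have e1 : X.pv ((a+1) % X.m) = X.gv (X.c-1) 0 := by
      unfold pv pc gv
      rw [hmod]
      by_cases h3 : 0 < 2 * X.r
      · rw [if_pos h3, if_pos (by omega)]
      · rw [if_neg h3]
        congr 2
        omega
    have e2 : X.anchor a = X.k - 1 := by
      unfold anchor
      rw [if_neg (by omega)]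
      omega
    rw [e1, e2]
    have h4 := X.mk_E2b' (j := X.k - 1) (by omega)
    rwa [Nat.sub_add_cancel (by omega), Nat.mod_self] at h4

/-! ### no loops -/

lemma ED_nodiag : ∀ e ∈ X.ED, ¬ e.IsDiag := by
  intro e he
  have hk := X.hk; have hc := X.hc; have hm := X.m_pos; have hrr := X.hr
  simp only [ED, mem_union] at he
  rcases he with ((((h|h)|h)|h)|h)|h
  · obtain ⟨i, j, ⟨hi,hj⟩, he1⟩ := X.unpack_E1 h
    rw [← he1, Sym2.mk_isDiag_iff]
    have hb : (j+1) % X.k < X.k := Nat.mod_lt _ (by omega)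
    rw [X.gv_eq_gv (by omega) (by omega) (by omega) (by omega)]
    rcases X.mod_cases hj with ⟨e1,h1⟩|⟨e1,h1⟩ <;> omega
  · obtain ⟨i, j, ⟨hi,hj⟩, he1⟩ := X.unpack_E2a h
    rw [← he1, Sym2.mk_isDiag_iff]
    rw [X.gv_eq_gv (by omega) (by omega) (by omega) (by omega)]
    omega
  · obtain ⟨i, j, ⟨hi,hj⟩, he1⟩ := X.unpack_E2b h
    rw [← he1, Sym2.mk_isDiag_iff]
    have hb : (j+1) % X.k < X.k := Nat.mod_lt _ (by omega)
    rw [X.gv_eq_gv (by omega) (by omega) (by omega) (by omega)]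
    omega
  · obtain ⟨a, ha, he1⟩ := X.unpack_EP h
    rw [← he1, Sym2.mk_isDiag_iff]
    have hb : (a+1) % X.m < X.m := Nat.mod_lt _ (by omega)
    rw [X.pv_inj (by omega) (by omega)]
    rcases X.mod_cases_m ha with ⟨e1,h1⟩|⟨e1,h1⟩ <;> omega
  · obtain ⟨t, ht, he1⟩ := X.unpack_E5 h
    rw [← he1, Sym2.mk_isDiag_iff]
    intro hx
    exact X.gv_ne_qv (by omega) (by omega) ht hx.symm
  · obtain ⟨a, ha, he1⟩ := X.unpack_E6 h
    rw [← he1, Sym2.mk_isDiag_iff]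
    intro hx
    rw [X.pv_inj (X.f_lt (by omega)) (X.f_lt (by omega))] at hx
    have := X.f_inj (by omega : a+1 < X.m) (by omega : a+2 < X.m) hx
    omega

lemma ed_ne {x y : Fin X.n} (h : s(x,y) ∈ X.ED) : x ≠ y := by
  intro he
  exact X.ED_nodiag _ h (by rw [he, Sym2.mk_isDiag_iff])

/-- every face is a triangle with all three edges in `ED` -/
lemma face_good {T : Finset (Fin X.n)} (hT : T ∈ X.FF) :
    ∃ x y z : Fin X.n, T = {x,y,z} ∧ s(x,y) ∈ X.ED ∧ s(x,z) ∈ X.ED ∧ s(y,z) ∈ X.ED := by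
  have hk := X.hk; have hc := X.hc; have hm := X.m_pos
  simp only [FF, mem_union] at hT
  rcases hT with (((h|h)|h)|h)|h
  · obtain ⟨i, j, ⟨hi,hj⟩, he1⟩ := X.unpack_FA h
    have hb : (j+1) % X.k < X.k := Nat.mod_lt _ (by omega)
    exact ⟨_, _, _, he1.symm, X.mk_E1 (by omega) hj, X.mk_E2b (by omega) hj,
      X.mk_E2a (by omega) hb⟩
  · obtain ⟨i, j, ⟨hi,hj⟩, he1⟩ := X.unpack_FA' h
    refine ⟨_, _, _, he1.symm, X.mk_E2a (by omega) hj, X.mk_E2b (by omega) hj, ?_⟩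
    exact X.mk_E1 (by omega) hj
  · obtain ⟨j, hj, he1⟩ := X.unpack_FB h
    have hb : (j+1) % X.k < X.k := Nat.mod_lt _ (by omega)
    exact ⟨_, _, _, he1.symm, X.mk_E1 (by omega) hj, X.mk_E2b' hj, X.mk_E2a' hb⟩
  · obtain ⟨a, ha, he1⟩ := X.unpack_FL h
    exact ⟨_, _, _, he1.symm, X.anchor_edge1 ha, X.anchor_edge2 ha, X.mk_EP ha⟩
  · obtain ⟨s, hs, he1⟩ := X.unpack_FE h
    exact ⟨_, _, _, he1.symm, X.comb_edge (by omega), X.comb_skip (by omega),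
      X.comb_edge (by omega)⟩


/-! ### double counting -/

/-- number of faces containing (both endpoints of) an edge -/
def cntE (e : Sym2 (Fin X.n)) : ℕ := (X.FF.filter (fun T => ∀ x ∈ e, x ∈ T)).card

lemma edges_in_face {T : Finset (Fin X.n)} (hT : T ∈ X.FF) :
    (X.ED.filter (fun e => ∀ x ∈ e, x ∈ T)).card = 3 := by
  obtain ⟨x, y, z, rfl, h1, h2, h3⟩ := X.face_good hT
  have hxy := X.ed_ne h1
  have hxz := X.ed_ne h2
  have hyz := X.ed_ne h3
  have : X.ED.filter (fun e => ∀ w ∈ e, w ∈ ({x,y,z} : Finset (Fin X.n))) =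
      {s(x,y), s(x,z), s(y,z)} := by
    apply Finset.ext
    intro e
    simp only [mem_filter, mem_insert, mem_singleton]
    constructor
    · rintro ⟨he, hsub⟩
      induction e with
      | h u v =>
        have hu := hsub u (Sym2.mem_mk_left u v)
        have hv := hsub v (Sym2.mem_mk_right u v)
        have huv : u ≠ v := X.ed_ne he
        rcases hu with rfl|rfl|rfl <;> rcases hv with rfl|rfl|rfl <;>
          simp_all [Sym2.eq_iff] <;> tauto
    · rintro (rfl|rfl|rfl)
      · exact ⟨h1, by intro w hw; simp only [Sym2.mem_iff] at hw; rcases hw with rfl|rfl <;> simp⟩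
      · exact ⟨h2, by intro w hw; simp only [Sym2.mem_iff] at hw; rcases hw with rfl|rfl <;> simp⟩
      · exact ⟨h3, by intro w hw; simp only [Sym2.mem_iff] at hw; rcases hw with rfl|rfl <;> simp⟩
  rw [this]
  have d1 : s(x,y) ≠ s(x,z) := by
    intro h
    rcases Sym2.eq_iff.1 h with ⟨-,h5⟩|⟨h4,-⟩
    · exact hyz h5
    · exact hxz h4
  have d2 : s(x,y) ≠ s(y,z) := by
    intro h
    rcases Sym2.eq_iff.1 h with ⟨h4,-⟩|⟨h4,-⟩
    · exact hxy h4
    · exact hxz h4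
  have d3 : s(x,z) ≠ s(y,z) := by
    intro h
    rcases Sym2.eq_iff.1 h with ⟨h4,-⟩|⟨-,h5⟩
    · exact hxy h4
    · exact hyz h5.symm
  rw [Finset.card_insert_of_notMem (by simp [d1, d2]),
    Finset.card_insert_of_notMem (by simp [d3]), Finset.card_singleton]

lemma sum_cntE : ∑ e ∈ X.ED, X.cntE e = 3 * X.FF.card := by
  unfold cntE
  simp only [Finset.card_filter]
  rw [Finset.sum_comm]
  have : ∀ T ∈ X.FF, (∑ e ∈ X.ED, if ∀ x ∈ e, x ∈ T then 1 else 0) = 3 := by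
    intro T hT
    rw [← Finset.card_filter]
    exact X.edges_in_face hT
  rw [Finset.sum_congr rfl this, Finset.sum_const, smul_eq_mul, Nat.mul_comm]

/-! ### boundary -/

def B : Finset (Sym2 (Fin X.n)) :=
  (range X.k).image (fun j => s(X.gv 0 j, X.gv 0 ((j+1) % X.k)))

lemma B_sub : X.B ⊆ X.ED := by
  intro e he
  simp only [B, mem_image, mem_range] at he
  obtain ⟨j, hj, rfl⟩ := he
  exact X.mk_E1 (by have := X.hc; omega) hj

lemma B_card : X.B.card = X.k := by
  unfold B
  rw [Finset.card_image_of_injOn, Finset.card_range]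
  intro j hj j' hj' h
  simp only [mem_coe, mem_range] at hj hj'
  have hk := X.hk; have hc := X.hc
  have hb : (j+1) % X.k < X.k := Nat.mod_lt _ (by omega)
  have hb' : (j'+1) % X.k < X.k := Nat.mod_lt _ (by omega)
  rw [Sym2.eq_iff] at h
  rcases X.mod_cases hj with ⟨e1,h1⟩|⟨e1,h1⟩ <;> rcases X.mod_cases hj' with ⟨e2,h2⟩|⟨e2,h2⟩ <;>
    rw [e1, e2] at h <;>
    rcases h with ⟨hA,hB⟩|⟨hA,hB⟩ <;>
    rw [X.gv_eq_gv (by omega) (by omega) (by omega) (by omega)] at hA <;>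
    rw [X.gv_eq_gv (by omega) (by omega) (by omega) (by omega)] at hB <;>
    omega


/-! ### face membership intros -/

lemma mkF_FA {i j : ℕ} (hi : i < X.c - 2) (hj : j < X.k) :
    ({X.gv i j, X.gv i ((j+1) % X.k), X.gv (i+1) ((j+1) % X.k)} : Finset (Fin X.n)) ∈ X.FF := by
  simp only [FF, mem_union]
  refine Or.inl (Or.inl (Or.inl (Or.inl ?_)))
  unfold FA
  rw [mem_image]
  exact ⟨(i,j), by rw [mem_product]; simp [mem_range]; omega, rfl⟩

lemma mkF_FA' {i j : ℕ} (hi : i < X.c - 2) (hj : j < X.k) :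
    ({X.gv i j, X.gv (i+1) j, X.gv (i+1) ((j+1) % X.k)} : Finset (Fin X.n)) ∈ X.FF := by
  simp only [FF, mem_union]
  refine Or.inl (Or.inl (Or.inl (Or.inr ?_)))
  unfold FA'
  rw [mem_image]
  exact ⟨(i,j), by rw [mem_product]; simp [mem_range]; omega, rfl⟩

lemma mkF_FB {j : ℕ} (hj : j < X.k) :
    ({X.gv (X.c-2) j, X.gv (X.c-2) ((j+1) % X.k), X.gv (X.c-1) ((j+1) % X.k)} : Finset (Fin X.n)) ∈ X.FF := by
  simp only [FF, mem_union]
  refine Or.inl (Or.inl (Or.inr ?_))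
  unfold FB
  rw [mem_image]
  exact ⟨j, by simp [mem_range]; omega, rfl⟩

lemma mkF_FL {a : ℕ} (ha : a < X.m) :
    ({X.gv (X.c-2) (X.anchor a), X.pv a, X.pv ((a+1) % X.m)} : Finset (Fin X.n)) ∈ X.FF := by
  simp only [FF, mem_union]
  refine Or.inl (Or.inr ?_)
  unfold FL
  rw [mem_image]
  exact ⟨a, by simp [mem_range]; omega, rfl⟩

lemma mkF_FE {s : ℕ} (hs : s < X.m - 2) :
    ({X.pv (X.f s), X.pv (X.f (s+1)), X.pv (X.f (s+2))} : Finset (Fin X.n)) ∈ X.FF := by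
  simp only [FF, mem_union]
  refine Or.inr ?_
  unfold FE
  rw [mem_image]
  exact ⟨s, by simp [mem_range]; omega, rfl⟩

lemma pair_mem {u v : Fin X.n} {T : Finset (Fin X.n)} (hu : u ∈ T) (hv : v ∈ T) :
    ∀ x ∈ s(u,v), x ∈ T := by
  intro x hx
  rcases Sym2.mem_iff.1 hx with rfl|rfl <;> assumption

lemma two_faces {e : Sym2 (Fin X.n)} {T1 T2 : Finset (Fin X.n)}
    (h1 : T1 ∈ X.FF) (h2 : T2 ∈ X.FF) (hne : T1 ≠ T2)
    (m1 : ∀ x ∈ e, x ∈ T1) (m2 : ∀ x ∈ e, x ∈ T2) : 2 ≤ X.cntE e := by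
  unfold cntE
  have hsub : ({T1, T2} : Finset (Finset (Fin X.n))) ⊆
      X.FF.filter (fun T => ∀ x ∈ e, x ∈ T) := by
    intro T hT
    simp only [mem_insert, mem_singleton] at hT
    rcases hT with rfl|rfl <;> rw [mem_filter] <;> exact ⟨by assumption, by assumption⟩
  calc 2 = ({T1, T2} : Finset (Finset (Fin X.n))).card := by
        rw [Finset.card_insert_of_notMem (by simp [hne]), Finset.card_singleton]
  _ ≤ _ := Finset.card_le_card hsub

lemma one_face {e : Sym2 (Fin X.n)} {T1 : Finset (Fin X.n)}
    (h1 : T1 ∈ X.FF) (m1 : ∀ x ∈ e, x ∈ T1) : 1 ≤ X.cntE e := by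
  unfold cntE
  rw [Nat.succ_le_iff, Finset.card_pos]
  exact ⟨T1, by rw [mem_filter]; exact ⟨h1, m1⟩⟩

lemma ne_faces {A B' : Finset (Finset (Fin X.n))} {T1 T2 : Finset (Fin X.n)}
    (hd : Disjoint A B') (h1 : T1 ∈ A) (h2 : T2 ∈ B') : T1 ≠ T2 := by
  intro h
  exact Finset.disjoint_left.1 hd h1 (h ▸ h2)

/-- predecessor column -/
def jp (j : ℕ) : ℕ := if j = 0 then X.k - 1 else j - 1

lemma jp_lt {j : ℕ} (hj : j < X.k) : X.jp j < X.k := by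
  unfold jp; have := X.hk; split_ifs <;> omega

lemma jp_succ {j : ℕ} (hj : j < X.k) : (X.jp j + 1) % X.k = j := by
  unfold jp
  have := X.hk
  split_ifs with h
  · rw [Nat.sub_add_cancel (by omega), Nat.mod_self, h]
  · rw [Nat.sub_add_cancel (by omega), Nat.mod_eq_of_lt hj]

/-- the snake face covering a polygon cycle edge -/
lemma snake_cover {a : ℕ} (ha : a < X.m) : ∃ s, s < X.m - 2 ∧
    (a = X.f s ∨ a = X.f (s+1) ∨ a = X.f (s+2)) ∧
    ((a+1) % X.m = X.f s ∨ (a+1) % X.m = X.f (s+1) ∨ (a+1) % X.m = X.f (s+2)) := by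
  have hm := X.m_pos
  rcases (by omega : a = X.m - 1 ∨ (a + 1 < X.m ∧ 2*a+3 ≤ X.m) ∨
      (a + 1 < X.m ∧ X.m ≤ 2*a) ∨ (a + 1 < X.m ∧ X.m - 2 ≤ 2*a ∧ 2*a ≤ X.m - 1)) with
    h|⟨h1,h2⟩|⟨h1,h2⟩|⟨h1,h2,h3⟩
  · have hmod : (a+1) % X.m = 0 := by
      rw [h, Nat.sub_add_cancel (by omega), Nat.mod_self]
    rw [hmod]
    exact ⟨0, by omega, by unfold f; split_ifs <;> first | omega | simp_all, by unfold f; split_ifs <;> first | omega | simp_all⟩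
  · rw [Nat.mod_eq_of_lt h1]
    exact ⟨2*a, by omega, by unfold f; split_ifs <;> first | omega | simp_all, by unfold f; split_ifs <;> first | omega | simp_all⟩
  · rw [Nat.mod_eq_of_lt h1]
    exact ⟨2*(X.m-2-a)+1, by omega, by unfold f; split_ifs <;> first | omega | simp_all,
      by unfold f; split_ifs <;> first | omega | simp_all⟩
  · rw [Nat.mod_eq_of_lt h1]
    exact ⟨X.m-3, by omega, by unfold f; split_ifs <;> first | omega | simp_all, by unfold f; split_ifs <;> first | omega | simp_all⟩


lemma FA_in_FF {T : Finset (Fin X.n)} (h : T ∈ X.FA) : T ∈ X.FF := by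
  simp only [FF, mem_union]; exact Or.inl (Or.inl (Or.inl (Or.inl h)))
lemma FA'_in_FF {T : Finset (Fin X.n)} (h : T ∈ X.FA') : T ∈ X.FF := by
  simp only [FF, mem_union]; exact Or.inl (Or.inl (Or.inl (Or.inr h)))
lemma FB_in_FF {T : Finset (Fin X.n)} (h : T ∈ X.FB) : T ∈ X.FF := by
  simp only [FF, mem_union]; exact Or.inl (Or.inl (Or.inr h))
lemma FL_in_FF {T : Finset (Fin X.n)} (h : T ∈ X.FL) : T ∈ X.FF := by
  simp only [FF, mem_union]; exact Or.inl (Or.inr h)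
lemma FE_in_FF {T : Finset (Fin X.n)} (h : T ∈ X.FE) : T ∈ X.FF := by
  simp only [FF, mem_union]; exact Or.inr h

lemma mkFA {i j : ℕ} (hi : i < X.c - 2) (hj : j < X.k) :
    ({X.gv i j, X.gv i ((j+1) % X.k), X.gv (i+1) ((j+1) % X.k)} : Finset (Fin X.n)) ∈ X.FA := by
  unfold FA; rw [mem_image]
  exact ⟨(i,j), by rw [mem_product]; simp [mem_range]; omega, rfl⟩

lemma mkFA' {i j : ℕ} (hi : i < X.c - 2) (hj : j < X.k) :
    ({X.gv i j, X.gv (i+1) j, X.gv (i+1) ((j+1) % X.k)} : Finset (Fin X.n)) ∈ X.FA' := by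
  unfold FA'; rw [mem_image]
  exact ⟨(i,j), by rw [mem_product]; simp [mem_range]; omega, rfl⟩

lemma mkFB {j : ℕ} (hj : j < X.k) :
    ({X.gv (X.c-2) j, X.gv (X.c-2) ((j+1) % X.k), X.gv (X.c-1) ((j+1) % X.k)} : Finset (Fin X.n)) ∈ X.FB := by
  unfold FB; rw [mem_image]
  exact ⟨j, by simp [mem_range]; omega, rfl⟩

lemma mkFL {a : ℕ} (ha : a < X.m) :
    ({X.gv (X.c-2) (X.anchor a), X.pv a, X.pv ((a+1) % X.m)} : Finset (Fin X.n)) ∈ X.FL := by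
  unfold FL; rw [mem_image]
  exact ⟨a, by simp [mem_range]; omega, rfl⟩

lemma mkFE {s : ℕ} (hs : s < X.m - 2) :
    ({X.pv (X.f s), X.pv (X.f (s+1)), X.pv (X.f (s+2))} : Finset (Fin X.n)) ∈ X.FE := by
  unfold FE; rw [mem_image]
  exact ⟨s, by simp [mem_range]; omega, rfl⟩

lemma anchor_posW {j : ℕ} (hj : j < X.k) : X.anchor (X.posW j) = j := by
  unfold anchor posW
  have := X.hr
  split_ifs <;> omega

/-- position whose successor edge goes from `w_j`'s anchor to `w_{j+1}` -/
def qq (j : ℕ) : ℕ := if j < X.r then 2*j+1 else j + X.r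

lemma qq_lt {j : ℕ} (hj : j < X.k) : X.qq j < X.m := by
  unfold qq; have := X.hm_eq; have := X.hr; split_ifs <;> omega

lemma anchor_qq {j : ℕ} (hj : j < X.k) : X.anchor (X.qq j) = j := by
  unfold anchor qq
  have := X.hm_eq; have := X.hr
  split_ifs <;> omega

lemma succ_qq {j : ℕ} (hj : j < X.k) : (X.qq j + 1) % X.m = X.posW ((j+1) % X.k) := by
  have hm := X.hm_eq; have hr := X.hr; have hk := X.hk
  rcases (by omega : j < X.r ∨ (X.r ≤ j ∧ j + 1 < X.k) ∨ (X.r ≤ j ∧ j + 1 = X.k)) with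
    h|⟨h,h2⟩|⟨h,h2⟩
  · have e1 : (j+1) % X.k = j+1 := Nat.mod_eq_of_lt (by omega)
    have e2 : X.qq j = 2*j+1 := by unfold qq; rw [if_pos h]
    rw [e1, e2, Nat.mod_eq_of_lt (by omega)]
    unfold posW; split_ifs <;> omega
  · have e1 : (j+1) % X.k = j+1 := Nat.mod_eq_of_lt h2
    have e2 : X.qq j = j + X.r := by unfold qq; rw [if_neg (by omega)]
    rw [e1, e2, Nat.mod_eq_of_lt (by omega)]
    unfold posW; split_ifs <;> omega
  · have e1 : (j+1) % X.k = 0 := by rw [h2, Nat.mod_self]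
    have e2 : X.qq j = j + X.r := by unfold qq; rw [if_neg (by omega)]
    rw [e1, e2, show j + X.r + 1 = X.m from by omega, Nat.mod_self]
    unfold posW; split_ifs <;> omega

lemma lower_bound1 : ∀ e ∈ X.B, 1 ≤ X.cntE e := by
  intro e he
  simp only [B, mem_image, mem_range] at he
  obtain ⟨j, hj, rfl⟩ := he
  have hc := X.hc
  rcases (by omega : X.c = 2 ∨ 3 ≤ X.c) with h2|h3
  · have hface := X.FB_in_FF (X.mkFB hj)
    rw [show X.c - 2 = 0 from by omega] at hface
    exact X.one_face hface (X.pair_mem (by simp) (by simp))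
  · have hface := X.FA_in_FF (X.mkFA (i := 0) (by omega) hj)
    exact X.one_face hface (X.pair_mem (by simp) (by simp))

lemma lower_bound2 : ∀ e ∈ X.ED, e ∉ X.B → 2 ≤ X.cntE e := by
  intro e he hnb
  have hc := X.hc; have hk := X.hk; have hm := X.m_pos; have hrk := X.hr
  simp only [ED, mem_union] at he
  rcases he with ((((h|h)|h)|h)|h)|h
  · -- E1
    obtain ⟨i, j, ⟨hi,hj⟩, he1⟩ := X.unpack_E1 h
    subst he1
    rcases (by omega : i = 0 ∨ 1 ≤ i) with rfl|hi1
    · exact absurd (by simp only [B, mem_image, mem_range]; exact ⟨j, hj, rfl⟩) hnb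
    · have hA := X.mkFA' (i := i-1) (j := j) (by omega) hj
      rw [show i - 1 + 1 = i from by omega] at hA
      rcases (by omega : i < X.c - 2 ∨ i = X.c - 2) with hi2|hi2
      · exact X.two_faces (X.FA'_in_FF hA) (X.FA_in_FF (X.mkFA hi2 hj))
          (X.ne_faces X.disj_FA_FA'.symm hA (X.mkFA hi2 hj))
          (X.pair_mem (by simp) (by simp)) (X.pair_mem (by simp) (by simp))
      · have hB := X.mkFB hj
        rw [← hi2] at hB
        exact X.two_faces (X.FA'_in_FF hA) (X.FB_in_FF hB)
          (X.ne_faces X.disj_FA'_FB hA hB)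
          (X.pair_mem (by simp) (by simp)) (X.pair_mem (by simp) (by simp))
  · -- E2a
    obtain ⟨i, j, ⟨hi,hj⟩, he1⟩ := X.unpack_E2a h
    subst he1
    rcases (by omega : i < X.c - 2 ∨ i = X.c - 2) with hi2|hi2
    · have hA := X.mkFA' hi2 hj
      have hB := X.mkFA (i := i) (j := X.jp j) hi2 (X.jp_lt hj)
      rw [X.jp_succ hj] at hB
      exact X.two_faces (X.FA'_in_FF hA) (X.FA_in_FF hB)
        (X.ne_faces X.disj_FA_FA'.symm hA hB)
        (X.pair_mem (by simp) (by simp)) (X.pair_mem (by simp) (by simp))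
    · have hA := X.mkFB (j := X.jp j) (X.jp_lt hj)
      rw [X.jp_succ hj, ← hi2, show X.c - 1 = i + 1 from by omega] at hA
      have hB := X.mkFL (X.posW_lt hj)
      rw [X.anchor_posW hj, X.pv_posW hj, ← hi2, show X.c - 1 = i + 1 from by omega] at hB
      exact X.two_faces (X.FB_in_FF hA) (X.FL_in_FF hB)
        (X.ne_faces X.disj_FB_FL hA hB)
        (X.pair_mem (by simp) (by simp)) (X.pair_mem (by simp) (by simp))
  · -- E2b
    obtain ⟨i, j, ⟨hi,hj⟩, he1⟩ := X.unpack_E2b h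
    subst he1
    rcases (by omega : i < X.c - 2 ∨ i = X.c - 2) with hi2|hi2
    · exact X.two_faces (X.FA_in_FF (X.mkFA hi2 hj)) (X.FA'_in_FF (X.mkFA' hi2 hj))
        (X.ne_faces X.disj_FA_FA' (X.mkFA hi2 hj) (X.mkFA' hi2 hj))
        (X.pair_mem (by simp) (by simp)) (X.pair_mem (by simp) (by simp))
    · have hb : (j+1) % X.k < X.k := Nat.mod_lt _ (by omega)
      have hA := X.mkFB hj
      rw [← hi2, show X.c - 1 = i + 1 from by omega] at hA
      have hB := X.mkFL (X.qq_lt hj)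
      rw [X.anchor_qq hj, X.succ_qq hj, X.pv_posW hb, ← hi2,
        show X.c - 1 = i + 1 from by omega] at hB
      exact X.two_faces (X.FB_in_FF hA) (X.FL_in_FF hB)
        (X.ne_faces X.disj_FB_FL hA hB)
        (X.pair_mem (by simp) (by simp)) (X.pair_mem (by simp) (by simp))
  · -- EP
    obtain ⟨a, ha, he1⟩ := X.unpack_EP h
    subst he1
    obtain ⟨s, hs, d1, d2⟩ := X.snake_cover ha
    have hA := X.mkFL ha
    have hB := X.mkFE hs
    refine X.two_faces (X.FL_in_FF hA) (X.FE_in_FF hB)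
      (X.ne_faces X.disj_FL_FE hA hB)
      (X.pair_mem (by simp) (by simp)) (X.pair_mem ?_ ?_)
    · rcases d1 with hq|hq|hq <;> rw [hq] <;> simp
    · rcases d2 with hq|hq|hq <;> rw [hq] <;> simp
  · -- E5
    obtain ⟨t, ht, he1⟩ := X.unpack_E5 h
    subst he1
    have hmeq := X.hm_eq
    have h2t : 2*t < X.m := by omega
    have h2t1 : 2*t+1 < X.m := by omega
    have h2t2 : 2*t+2 < X.m := by omega
    have ha1 : X.anchor (2*t) = t := by unfold anchor; rw [if_pos (by omega)]; omega
    have ha2 : X.anchor (2*t+1) = t := by unfold anchor; rw [if_pos (by omega)]; omega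
    have hm1 : (2*t + 1) % X.m = 2*t+1 := Nat.mod_eq_of_lt h2t1
    have hm2 : (2*t+1 + 1) % X.m = 2*t+2 := Nat.mod_eq_of_lt (by omega)
    have hA := X.mkFL h2t
    rw [ha1, hm1, X.pv_res ht] at hA
    have hB := X.mkFL h2t1
    rw [ha2, hm2, X.pv_res ht] at hB
    refine X.two_faces (X.FL_in_FF hA) (X.FL_in_FF hB) ?_
      (X.pair_mem (by simp) (by simp)) (X.pair_mem (by simp) (by simp))
    intro hTT
    have hmem : X.pv (2*t) ∈ ({X.gv (X.c-2) t, X.qv t, X.pv (2*t+2)} : Finset (Fin X.n)) := by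
      rw [← hTT]; simp
    simp only [mem_insert, mem_singleton] at hmem
    rcases hmem with hx|hx|hx
    · exact X.low_ne_pv (by omega) (by omega) h2t hx.symm
    · rw [← X.pv_res ht, X.pv_inj h2t h2t1] at hx
      omega
    · rw [X.pv_inj h2t h2t2] at hx
      omega
  · -- E6
    obtain ⟨a, ha, he1⟩ := X.unpack_E6 h
    subst he1
    have hA := X.mkFE (s := a) (by omega)
    have hB := X.mkFE (s := a+1) (by omega)
    refine X.two_faces (X.FE_in_FF hA) (X.FE_in_FF hB) ?_
      (X.pair_mem (by simp) (by simp))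
      (X.pair_mem (by simp [show a+1+1 = a+2 from rfl]) ?_)
    · intro hTT
      have hmem : X.pv (X.f a) ∈
          ({X.pv (X.f (a+1)), X.pv (X.f (a+1+1)), X.pv (X.f (a+1+2))} : Finset (Fin X.n)) := by
        rw [← hTT]; simp
      simp only [mem_insert, mem_singleton] at hmem
      rcases hmem with hx|hx|hx <;>
        rw [X.pv_inj (X.f_lt (by omega)) (X.f_lt (by omega))] at hx <;>
        have := X.f_inj (by omega : a < X.m) (by omega) hx <;> omega
    · show X.pv (X.f (a+2)) ∈ _
      simp [show a+1+1 = a+2 from rfl]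


/-! ### exact counts -/

lemma cnt_exact : ∀ e ∈ X.ED, X.cntE e = (if e ∈ X.B then 1 else 2) := by
  classical
  have hle : ∀ e ∈ X.ED, (if e ∈ X.B then 1 else 2) ≤ X.cntE e := by
    intro e he
    by_cases hB : e ∈ X.B
    · rw [if_pos hB]; exact X.lower_bound1 e hB
    · rw [if_neg hB]; exact X.lower_bound2 e he hB
  have hfil : X.ED.filter (fun e => e ∈ X.B) = X.B := by
    ext e
    simp only [mem_filter]
    exact ⟨fun h => h.2, fun h => ⟨X.B_sub h, h⟩⟩
  have hsum_lb : ∑ e ∈ X.ED, (if e ∈ X.B then 1 else 2) = 2 * X.ED.card - X.B.card := by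
    rw [← Finset.sum_filter_add_sum_filter_not X.ED (fun e => e ∈ X.B)]
    have h1 : ∑ e ∈ X.ED.filter (fun e => e ∈ X.B), (if e ∈ X.B then 1 else 2) =
        X.B.card := by
      rw [Finset.sum_congr rfl (fun e he => by
        rw [if_pos (Finset.mem_filter.1 he).2]), Finset.sum_const, hfil, smul_eq_mul,
        Nat.mul_one]
    have h2 : ∑ e ∈ X.ED.filter (fun e => ¬ e ∈ X.B), (if e ∈ X.B then 1 else 2) =
        2 * (X.ED.card - X.B.card) := by
      rw [Finset.sum_congr rfl (fun e he => by
        rw [if_neg (Finset.mem_filter.1 he).2]), Finset.sum_const, smul_eq_mul]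
      have : (X.ED.filter (fun e => ¬ e ∈ X.B)).card = X.ED.card - X.B.card := by
        rw [Finset.filter_not, Finset.card_sdiff_of_subset]
        · rw [hfil]
        · rw [hfil] at *
          exact X.B_sub
      rw [this, Nat.mul_comm]
    rw [h1, h2]
    have hBle : X.B.card ≤ X.ED.card := Finset.card_le_card X.B_sub
    omega
  have hkey : ∑ e ∈ X.ED, X.cntE e = ∑ e ∈ X.ED, (if e ∈ X.B then 1 else 2) := by
    rw [X.sum_cntE, hsum_lb]
    have h1 := X.ED_card
    have h2 := X.FF_card
    have h3 := X.B_card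
    have h4 := X.npos
    omega
  intro e he
  have := (Finset.sum_eq_sum_iff_of_le hle).1 hkey.symm e he
  omega


/-! ### structure fields -/

lemma faces_card3 : ∀ T ∈ X.FF, T.card = 3 := by
  intro T hT
  obtain ⟨x, y, z, rfl, h1, h2, h3⟩ := X.face_good hT
  have hxy := X.ed_ne h1
  have hxz := X.ed_ne h2
  have hyz := X.ed_ne h3
  rw [Finset.card_insert_of_notMem (by simp [hxy, hxz]),
    Finset.card_insert_of_notMem (by simp [hyz]), Finset.card_singleton]

lemma faces_clique : ∀ T ∈ X.FF, ∀ u ∈ T, ∀ v ∈ T, u ≠ v → X.G.Adj u v := by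
  intro T hT u hu v hv huv
  obtain ⟨x, y, z, rfl, h1, h2, h3⟩ := X.face_good hT
  rw [X.adj_iff]
  refine ⟨?_, huv⟩
  simp only [mem_insert, mem_singleton] at hu hv
  rcases hu with rfl|rfl|rfl <;> rcases hv with rfl|rfl|rfl <;>
    first
      | exact absurd rfl huv
      | assumption
      | (rw [Sym2.eq_swap]; assumption)

lemma edgeSet_eq : X.G.edgeSet = ↑X.ED := by
  unfold G
  rw [SimpleGraph.edgeSet_fromEdgeSet]
  ext e
  simp only [Set.mem_diff, Finset.mem_coe, Set.mem_setOf_eq]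
  exact ⟨fun h => h.1, fun h => ⟨h, X.ED_nodiag e h⟩⟩

lemma edge_ncard : X.G.edgeSet.ncard = X.ED.card := by
  rw [X.edgeSet_eq, Set.ncard_coe_finset]

/-- classification of all vertices -/
lemma vertex_classify (v : Fin X.n) :
    (∃ i j, i < X.c ∧ j < X.k ∧ v = X.gv i j) ∨ (∃ t, t < X.r ∧ v = X.qv t) := by
  have hk := X.hk; have hc := X.hc; have hn := X.hn
  have hv := v.isLt
  by_cases h : (v : ℕ) < X.c * X.k
  · left
    refine ⟨(v : ℕ) / X.k, (v : ℕ) % X.k, ?_, Nat.mod_lt _ (by omega), ?_⟩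
    · rw [Nat.div_lt_iff_lt_mul (by omega)]
      exact h
    · apply Fin.ext
      unfold gv cast g
      simp only
      have : (v:ℕ) / X.k * X.k + (v:ℕ) % X.k = (v:ℕ) := by
        rw [Nat.mul_comm]
        exact Nat.div_add_mod _ _
      rw [this, Nat.mod_eq_of_lt hv]
  · right
    refine ⟨(v : ℕ) - X.c * X.k, by omega, ?_⟩
    apply Fin.ext
    unfold qv cast q
    simp only
    rw [show X.c * X.k + ((v:ℕ) - X.c * X.k) = (v:ℕ) from by omega, Nat.mod_eq_of_lt hv]

lemma adj_of_mem {x y : Fin X.n} (h : s(x,y) ∈ X.ED) : X.G.Adj x y :=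
  (X.adj_iff).2 ⟨h, X.ed_ne h⟩

lemma reach_up {i j : ℕ} (hi : i < X.c) (hj : j < X.k) :
    X.G.Reachable (X.gv i j) (X.gv 0 j) := by
  induction i with
  | zero => exact SimpleGraph.Reachable.refl _
  | succ i ih =>
    have h1 : X.G.Adj (X.gv i j) (X.gv (i+1) j) :=
      X.adj_of_mem (X.mk_E2a (by omega) hj)
    exact (h1.symm.reachable).trans (ih (by omega))

lemma reach_row0 {j : ℕ} (hj : j < X.k) :
    X.G.Reachable (X.gv 0 j) (X.gv 0 0) := by
  induction j with
  | zero => exact SimpleGraph.Reachable.refl _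
  | succ j ih =>
    have hk := X.hk; have hc := X.hc
    have h1 : X.G.Adj (X.gv 0 j) (X.gv 0 (j+1)) := by
      have := X.adj_of_mem (X.mk_E1 (i := 0) (by omega) (j := j) (by omega))
      rwa [Nat.mod_eq_of_lt hj] at this
    exact (h1.symm.reachable).trans (ih (by omega))

lemma connected : X.G.Connected := by
  have hk := X.hk; have hc := X.hc
  rw [SimpleGraph.connected_iff]
  constructor
  · intro u v
    have key : ∀ w : Fin X.n, X.G.Reachable w (X.gv 0 0) := by
      intro w
      rcases X.vertex_classify w with ⟨i, j, hi, hj, rfl⟩ | ⟨t, ht, rfl⟩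
      · exact (X.reach_up hi hj).trans (X.reach_row0 hj)
      · have h1 : X.G.Adj (X.qv t) (X.gv (X.c-2) t) := X.adj_of_mem (X.mk_E5 ht)
        refine (h1.reachable).trans ?_
        exact (X.reach_up (by omega) (by have := X.hr; omega)).trans
          (X.reach_row0 (by have := X.hr; omega))
    exact (key u).trans (key v).symm
  · exact ⟨X.cast 0⟩

lemma cnt_pair (u v : Fin X.n) :
    X.cntE s(u,v) = (X.FF.filter (fun T => u ∈ T ∧ v ∈ T)).card := by
  unfold cntE
  congr 1
  apply Finset.filter_congr
  intro T _
  constructor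
  · intro h
    exact ⟨h u (Sym2.mem_mk_left u v), h v (Sym2.mem_mk_right u v)⟩
  · intro h x hx
    rcases Sym2.mem_iff.1 hx with rfl|rfl
    · exact h.1
    · exact h.2


/-! ### degree bound -/

lemma pred_unique {j j' : ℕ} (hj : j < X.k) (hj' : j' < X.k) (h : (j'+1) % X.k = j) :
    j' = X.jp j := by
  unfold jp
  have hk := X.hk
  rcases X.mod_cases hj' with ⟨e1,h1⟩|⟨e1,h1⟩ <;> rw [e1] at h <;> split_ifs <;> omega

def pp (b : ℕ) : ℕ := if b = 0 then X.m - 1 else b - 1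

lemma pp_lt {b : ℕ} (hb : b < X.m) : X.pp b < X.m := by
  unfold pp; have := X.m_pos; split_ifs <;> omega

lemma pred_unique_m {a b : ℕ} (ha : a < X.m) (hb : b < X.m) (h : (a+1) % X.m = b) :
    a = X.pp b := by
  unfold pp
  have hm := X.m_pos
  rcases X.mod_cases_m ha with ⟨e1,h1⟩|⟨e1,h1⟩ <;> rw [e1] at h <;> split_ifs <;> omega

lemma card7 {α : Type*} [DecidableEq α] (a b c d e f g : α) :
    ({a,b,c,d,e,f,g} : Finset α).card ≤ 7 := by
  calc ({a,b,c,d,e,f,g} : Finset α).card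
      ≤ ({b,c,d,e,f,g} : Finset α).card + 1 := Finset.card_insert_le _ _
  _ ≤ (({c,d,e,f,g} : Finset α).card + 1) + 1 :=
      Nat.add_le_add_right (Finset.card_insert_le _ _) 1
  _ ≤ ((({d,e,f,g} : Finset α).card + 1) + 1) + 1 :=
      Nat.add_le_add_right (Nat.add_le_add_right (Finset.card_insert_le _ _) 1) 1
  _ ≤ (((({e,f,g} : Finset α).card + 1) + 1) + 1) + 1 :=
      Nat.add_le_add_right (Nat.add_le_add_right
        (Nat.add_le_add_right (Finset.card_insert_le _ _) 1) 1) 1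
  _ ≤ ((((({f,g} : Finset α).card + 1) + 1) + 1) + 1) + 1 :=
      Nat.add_le_add_right (Nat.add_le_add_right (Nat.add_le_add_right
        (Nat.add_le_add_right (Finset.card_insert_le _ _) 1) 1) 1) 1
  _ ≤ (((((({g} : Finset α).card + 1) + 1) + 1) + 1) + 1) + 1 :=
      Nat.add_le_add_right (Nat.add_le_add_right (Nat.add_le_add_right
        (Nat.add_le_add_right (Nat.add_le_add_right (Finset.card_insert_le _ _) 1) 1) 1) 1) 1
  _ = 7 := by rw [Finset.card_singleton]

lemma nbr_low {i j : ℕ} {u : Fin X.n} (hi : i < X.c - 1) (hj : j < X.k)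
    (h : X.G.Adj (X.gv i j) u) :
    u ∈ ({X.gv i (X.jp j), X.gv i ((j+1) % X.k), X.gv (i-1) j, X.gv (i-1) (X.jp j),
      X.gv (i+1) j, X.gv (i+1) ((j+1) % X.k), X.qv j} : Finset (Fin X.n)) := by
  have hk := X.hk; have hc := X.hc; have hm := X.m_pos; have hr := X.hr
  have he := (X.adj_iff.1 h).1
  simp only [ED, mem_union] at he
  simp only [mem_insert, mem_singleton]
  rcases he with ((((h'|h')|h')|h')|h')|h'
  · -- E1
    obtain ⟨i', j', ⟨hi',hj'⟩, he1⟩ := X.unpack_E1 h'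
    have hb' : (j'+1) % X.k < X.k := Nat.mod_lt _ (by omega)
    rw [Sym2.eq_iff] at he1
    rcases he1 with ⟨hA,hB⟩|⟨hA,hB⟩
    · rw [X.gv_eq_gv (by omega) (by omega) (by omega) (by omega)] at hA
      obtain ⟨rfl, rfl⟩ := hA
      tauto
    · rw [X.gv_eq_gv (by omega) (by omega) (by omega) (by omega)] at hB
      obtain ⟨rfl, hB2⟩ := hB
      have := X.pred_unique hj hj' hB2
      subst this
      tauto
  · -- E2a
    obtain ⟨i', j', ⟨hi',hj'⟩, he1⟩ := X.unpack_E2a h'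
    rw [Sym2.eq_iff] at he1
    rcases he1 with ⟨hA,hB⟩|⟨hA,hB⟩
    · rw [X.gv_eq_gv (by omega) (by omega) (by omega) (by omega)] at hA
      obtain ⟨rfl, rfl⟩ := hA
      tauto
    · rw [X.gv_eq_gv (by omega) (by omega) (by omega) (by omega)] at hB
      obtain ⟨hB1, rfl⟩ := hB
      have : i' = i - 1 := by omega
      subst this
      tauto
  · -- E2b
    obtain ⟨i', j', ⟨hi',hj'⟩, he1⟩ := X.unpack_E2b h'
    have hb' : (j'+1) % X.k < X.k := Nat.mod_lt _ (by omega)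
    rw [Sym2.eq_iff] at he1
    rcases he1 with ⟨hA,hB⟩|⟨hA,hB⟩
    · rw [X.gv_eq_gv (by omega) (by omega) (by omega) (by omega)] at hA
      obtain ⟨rfl, rfl⟩ := hA
      tauto
    · rw [X.gv_eq_gv (by omega) (by omega) (by omega) (by omega)] at hB
      obtain ⟨hB1, hB2⟩ := hB
      have h1 : i' = i - 1 := by omega
      have h2 := X.pred_unique hj hj' hB2
      subst h1; subst h2
      tauto
  · -- EP
    obtain ⟨a, ha, he1⟩ := X.unpack_EP h'
    have hbm : (a+1) % X.m < X.m := Nat.mod_lt _ (by omega)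
    rw [Sym2.eq_iff] at he1
    rcases he1 with ⟨hA,hB⟩|⟨hA,hB⟩
    · exact absurd hA.symm (X.low_ne_pv hi hj ha)
    · exact absurd hB.symm (X.low_ne_pv hi hj hbm)
  · -- E5
    obtain ⟨t, ht, he1⟩ := X.unpack_E5 h'
    rw [Sym2.eq_iff] at he1
    rcases he1 with ⟨hA,hB⟩|⟨hA,hB⟩
    · exact absurd hA (Ne.symm (X.gv_ne_qv (by omega) (by omega) (by omega)))
    · rw [X.gv_eq_gv (by omega) (by omega) (by omega) (by omega)] at hB
      obtain ⟨hB1, rfl⟩ := hB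
      tauto
  · -- E6
    obtain ⟨a, ha, he1⟩ := X.unpack_E6 h'
    rw [Sym2.eq_iff] at he1
    rcases he1 with ⟨hA,hB⟩|⟨hA,hB⟩
    · exact absurd hA.symm (X.low_ne_pv hi hj (X.f_lt (by omega)))
    · exact absurd hB.symm (X.low_ne_pv hi hj (X.f_lt (by omega)))

lemma nbr_high {j : ℕ} {u : Fin X.n} (hj : j < X.k)
    (h : X.G.Adj (X.gv (X.c-1) j) u) :
    u ∈ ({X.gv (X.c-2) j, X.gv (X.c-2) (X.jp j), X.pv ((X.posW j + 1) % X.m),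
      X.pv (X.pp (X.posW j)), X.pv (X.m - 1 - X.posW j), X.pv (X.m - X.posW j),
      X.pv (X.m - X.posW j)} : Finset (Fin X.n)) := by
  have hk := X.hk; have hc := X.hc; have hm := X.m_pos; have hr := X.hr
  have hpw := X.posW_lt hj
  have he := (X.adj_iff.1 h).1
  simp only [ED, mem_union] at he
  simp only [mem_insert, mem_singleton]
  rcases he with ((((h'|h')|h')|h')|h')|h'
  · obtain ⟨i', j', ⟨hi',hj'⟩, he1⟩ := X.unpack_E1 h'
    have hb' : (j'+1) % X.k < X.k := Nat.mod_lt _ (by omega)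
    rw [Sym2.eq_iff] at he1
    rcases he1 with ⟨hA,hB⟩|⟨hA,hB⟩
    · rw [X.gv_eq_gv (by omega) (by omega) (by omega) (by omega)] at hA
      omega
    · rw [X.gv_eq_gv (by omega) (by omega) (by omega) (by omega)] at hB
      omega
  · obtain ⟨i', j', ⟨hi',hj'⟩, he1⟩ := X.unpack_E2a h'
    rw [Sym2.eq_iff] at he1
    rcases he1 with ⟨hA,hB⟩|⟨hA,hB⟩
    · rw [X.gv_eq_gv (by omega) (by omega) (by omega) (by omega)] at hA
      omega
    · rw [X.gv_eq_gv (by omega) (by omega) (by omega) (by omega)] at hB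
      obtain ⟨hB1, rfl⟩ := hB
      have : i' = X.c - 2 := by omega
      subst this
      tauto
  · obtain ⟨i', j', ⟨hi',hj'⟩, he1⟩ := X.unpack_E2b h'
    have hb' : (j'+1) % X.k < X.k := Nat.mod_lt _ (by omega)
    rw [Sym2.eq_iff] at he1
    rcases he1 with ⟨hA,hB⟩|⟨hA,hB⟩
    · rw [X.gv_eq_gv (by omega) (by omega) (by omega) (by omega)] at hA
      omega
    · rw [X.gv_eq_gv (by omega) (by omega) (by omega) (by omega)] at hB
      obtain ⟨hB1, hB2⟩ := hB
      have h1 : i' = X.c - 2 := by omega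
      have h2 := X.pred_unique hj hj' hB2
      subst h1; subst h2
      tauto
  · obtain ⟨a, ha, he1⟩ := X.unpack_EP h'
    have hbm : (a+1) % X.m < X.m := Nat.mod_lt _ (by omega)
    rw [Sym2.eq_iff] at he1
    rcases he1 with ⟨hA,hB⟩|⟨hA,hB⟩
    · rw [← X.pv_posW hj, X.pv_inj ha hpw] at hA
      subst hA
      tauto
    · rw [← X.pv_posW hj, X.pv_inj hbm hpw] at hB
      have := X.pred_unique_m ha hpw hB
      subst this
      tauto
  · obtain ⟨t, ht, he1⟩ := X.unpack_E5 h'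
    rw [Sym2.eq_iff] at he1
    rcases he1 with ⟨hA,hB⟩|⟨hA,hB⟩
    · exact absurd hA (Ne.symm (X.gv_ne_qv (by omega) (by omega) (by omega)))
    · rw [X.gv_eq_gv (by omega) (by omega) (by omega) (by omega)] at hB
      omega
  · obtain ⟨a, ha, he1⟩ := X.unpack_E6 h'
    rw [Sym2.eq_iff] at he1
    rcases he1 with ⟨hA,hB⟩|⟨hA,hB⟩
    · rw [← X.pv_posW hj, X.pv_inj (X.f_lt (by omega)) hpw] at hA
      have hgoal : X.f (a+2) = X.m - 1 - X.posW j ∨ X.f (a+2) = X.m - X.posW j := by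
        unfold f at hA ⊢
        split_ifs at hA ⊢ <;> omega
      rcases hgoal with hg|hg <;> rw [hg] at hB <;> tauto
    · rw [← X.pv_posW hj, X.pv_inj (X.f_lt (by omega)) hpw] at hB
      have hgoal : X.f (a+1) = X.m - 1 - X.posW j ∨ X.f (a+1) = X.m - X.posW j := by
        unfold f at hB ⊢
        split_ifs at hB ⊢ <;> omega
      rcases hgoal with hg|hg <;> rw [hg] at hA <;> tauto

lemma nbr_res {t : ℕ} {u : Fin X.n} (ht : t < X.r)
    (h : X.G.Adj (X.qv t) u) :
    u ∈ ({X.gv (X.c-2) t, X.pv (2*t), X.pv ((2*t+2) % X.m),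
      X.pv (X.m - 1 - (2*t+1)), X.pv (X.m - (2*t+1)), X.pv (X.m - (2*t+1)),
      X.pv (X.m - (2*t+1))} : Finset (Fin X.n)) := by
  have hk := X.hk; have hc := X.hc; have hm := X.m_pos; have hr := X.hr
  have hmeq := X.hm_eq
  have h2t1 : 2*t+1 < X.m := by omega
  have he := (X.adj_iff.1 h).1
  simp only [ED, mem_union] at he
  simp only [mem_insert, mem_singleton]
  rcases he with ((((h'|h')|h')|h')|h')|h'
  · obtain ⟨i', j', ⟨hi',hj'⟩, he1⟩ := X.unpack_E1 h'
    have hb' : (j'+1) % X.k < X.k := Nat.mod_lt _ (by omega)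
    rw [Sym2.eq_iff] at he1
    rcases he1 with ⟨hA,hB⟩|⟨hA,hB⟩
    · exact absurd hA (X.gv_ne_qv (by omega) (by omega) (by omega))
    · exact absurd hB (X.gv_ne_qv (by omega) (by omega) (by omega))
  · obtain ⟨i', j', ⟨hi',hj'⟩, he1⟩ := X.unpack_E2a h'
    rw [Sym2.eq_iff] at he1
    rcases he1 with ⟨hA,hB⟩|⟨hA,hB⟩
    · exact absurd hA (X.gv_ne_qv (by omega) (by omega) (by omega))
    · exact absurd hB (X.gv_ne_qv (by omega) (by omega) (by omega))
  · obtain ⟨i', j', ⟨hi',hj'⟩, he1⟩ := X.unpack_E2b h'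
    have hb' : (j'+1) % X.k < X.k := Nat.mod_lt _ (by omega)
    rw [Sym2.eq_iff] at he1
    rcases he1 with ⟨hA,hB⟩|⟨hA,hB⟩
    · exact absurd hA (X.gv_ne_qv (by omega) (by omega) (by omega))
    · exact absurd hB (X.gv_ne_qv (by omega) (by omega) (by omega))
  · obtain ⟨a, ha, he1⟩ := X.unpack_EP h'
    have hbm : (a+1) % X.m < X.m := Nat.mod_lt _ (by omega)
    rw [Sym2.eq_iff] at he1
    rcases he1 with ⟨hA,hB⟩|⟨hA,hB⟩
    · rw [← X.pv_res ht, X.pv_inj ha h2t1] at hA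
      subst hA
      rw [show 2*t+1+1 = 2*t+2 from rfl]
      tauto
    · rw [← X.pv_res ht, X.pv_inj hbm h2t1] at hB
      have h3 := X.pred_unique_m ha h2t1 hB
      have h4 : X.pp (2*t+1) = 2*t := by unfold pp; rw [if_neg (by omega)]; omega
      rw [h4] at h3
      subst h3
      tauto
  · obtain ⟨t', ht', he1⟩ := X.unpack_E5 h'
    rw [Sym2.eq_iff] at he1
    rcases he1 with ⟨hA,hB⟩|⟨hA,hB⟩
    · rw [X.qv_eq_qv (by omega) (by omega)] at hA
      subst hA
      tauto
    · exact absurd hB (X.gv_ne_qv (by omega) (by omega) (by omega))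
  · obtain ⟨a, ha, he1⟩ := X.unpack_E6 h'
    rw [Sym2.eq_iff] at he1
    rcases he1 with ⟨hA,hB⟩|⟨hA,hB⟩
    · rw [← X.pv_res ht, X.pv_inj (X.f_lt (by omega)) h2t1] at hA
      have hgoal : X.f (a+2) = X.m - 1 - (2*t+1) ∨ X.f (a+2) = X.m - (2*t+1) := by
        unfold f at hA ⊢
        split_ifs at hA ⊢ <;> omega
      rcases hgoal with hg|hg <;> rw [hg] at hB <;> tauto
    · rw [← X.pv_res ht, X.pv_inj (X.f_lt (by omega)) h2t1] at hB
      have hgoal : X.f (a+1) = X.m - 1 - (2*t+1) ∨ X.f (a+1) = X.m - (2*t+1) := by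
        unfold f at hB ⊢
        split_ifs at hB ⊢ <;> omega
      rcases hgoal with hg|hg <;> rw [hg] at hA <;> tauto

lemma deg_le (v : Fin X.n) : (X.G.neighborSet v).ncard ≤ 7 := by
  have hk := X.hk; have hc := X.hc; have hr := X.hr
  rcases X.vertex_classify v with ⟨i, j, hi, hj, rfl⟩ | ⟨t, ht, rfl⟩
  · rcases (by omega : i < X.c - 1 ∨ i = X.c - 1) with hi1|hi1
    · have hsub : X.G.neighborSet (X.gv i j) ⊆
          ↑({X.gv i (X.jp j), X.gv i ((j+1) % X.k), X.gv (i-1) j, X.gv (i-1) (X.jp j),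
            X.gv (i+1) j, X.gv (i+1) ((j+1) % X.k), X.qv j} : Finset (Fin X.n)) := by
        intro u hu
        rw [Finset.mem_coe]
        exact X.nbr_low hi1 hj hu
      calc (X.G.neighborSet (X.gv i j)).ncard
          ≤ _ := Set.ncard_le_ncard hsub (Finset.finite_toSet _)
      _ = _ := Set.ncard_coe_finset _
      _ ≤ 7 := card7 _ _ _ _ _ _ _
    · subst hi1
      have hsub : X.G.neighborSet (X.gv (X.c-1) j) ⊆
          ↑({X.gv (X.c-2) j, X.gv (X.c-2) (X.jp j), X.pv ((X.posW j + 1) % X.m),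
            X.pv (X.pp (X.posW j)), X.pv (X.m - 1 - X.posW j), X.pv (X.m - X.posW j),
            X.pv (X.m - X.posW j)} : Finset (Fin X.n)) := by
        intro u hu
        rw [Finset.mem_coe]
        exact X.nbr_high hj hu
      calc (X.G.neighborSet (X.gv (X.c-1) j)).ncard
          ≤ _ := Set.ncard_le_ncard hsub (Finset.finite_toSet _)
      _ = _ := Set.ncard_coe_finset _
      _ ≤ 7 := card7 _ _ _ _ _ _ _
  · have hsub : X.G.neighborSet (X.qv t) ⊆
        ↑({X.gv (X.c-2) t, X.pv (2*t), X.pv ((2*t+2) % X.m),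
          X.pv (X.m - 1 - (2*t+1)), X.pv (X.m - (2*t+1)), X.pv (X.m - (2*t+1)),
          X.pv (X.m - (2*t+1))} : Finset (Fin X.n)) := by
      intro u hu
      rw [Finset.mem_coe]
      exact X.nbr_res ht hu
    calc (X.G.neighborSet (X.qv t)).ncard
        ≤ _ := Set.ncard_le_ncard hsub (Finset.finite_toSet _)
    _ = _ := Set.ncard_coe_finset _
    _ ≤ 7 := card7 _ _ _ _ _ _ _


/-! ### boundary interface -/

def bnd (z : ZMod X.k) : Fin X.n := X.gv 0 z.val

lemma kpos : 0 < X.k := by have := X.hk; omega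

lemma val_succ (z : ZMod X.k) : (z + 1).val = (z.val + 1) % X.k := by
  haveI : NeZero X.k := ⟨by have := X.hk; omega⟩
  haveI : Fact (1 < X.k) := ⟨by have := X.hk; omega⟩
  rw [ZMod.val_add, ZMod.val_one]

lemma bnd_inj : Function.Injective X.bnd := by
  haveI : NeZero X.k := ⟨by have := X.hk; omega⟩
  intro a b h
  unfold bnd at h
  rw [X.gv_eq_gv (by have := X.hc; omega) (ZMod.val_lt a) (by have := X.hc; omega)
    (ZMod.val_lt b)] at h
  exact ZMod.val_injective _ h.2

lemma bnd_adj (z : ZMod X.k) : X.G.Adj (X.bnd z) (X.bnd (z + 1)) := by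
  haveI : NeZero X.k := ⟨by have := X.hk; omega⟩
  unfold bnd
  rw [X.val_succ]
  exact X.adj_of_mem (X.mk_E1 (by have := X.hc; omega) (ZMod.val_lt z))

lemma edge_two : ∀ u v : Fin X.n, X.G.Adj u v →
    (¬ ∃ i : ZMod X.k, ({u, v} : Finset (Fin X.n)) = {X.bnd i, X.bnd (i + 1)}) →
    (X.FF.filter (fun T => u ∈ T ∧ v ∈ T)).card = 2 := by
  haveI : NeZero X.k := ⟨by have := X.hk; omega⟩
  intro u v hadj hnb
  have he : s(u,v) ∈ X.ED := (X.adj_iff.1 hadj).1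
  have hB : s(u,v) ∉ X.B := by
    intro hB
    simp only [B, mem_image, mem_range] at hB
    obtain ⟨j, hj, heq⟩ := hB
    apply hnb
    refine ⟨(j : ZMod X.k), ?_⟩
    have hb1 : X.bnd (j : ZMod X.k) = X.gv 0 j := by
      unfold bnd
      rw [ZMod.val_cast_of_lt hj]
    have hb2 : X.bnd ((j : ZMod X.k) + 1) = X.gv 0 ((j+1) % X.k) := by
      unfold bnd
      rw [X.val_succ, ZMod.val_cast_of_lt hj]
    rw [hb1, hb2]
    rw [Sym2.eq_iff] at heq
    rcases heq with ⟨h1, h2⟩|⟨h1, h2⟩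
    · rw [← h1, ← h2]
    · rw [← h1, ← h2]
      exact Finset.pair_comm _ _
  have := X.cnt_exact s(u,v) he
  rw [if_neg hB] at this
  rw [← X.cnt_pair]
  exact this

lemma bnd_one : ∀ i : ZMod X.k,
    (X.FF.filter (fun T => X.bnd i ∈ T ∧ X.bnd (i + 1) ∈ T)).card = 1 := by
  haveI : NeZero X.k := ⟨by have := X.hk; omega⟩
  intro i
  have hmem : s(X.bnd i, X.bnd (i+1)) ∈ X.B := by
    simp only [B, mem_image, mem_range]
    refine ⟨i.val, ZMod.val_lt i, ?_⟩
    unfold bnd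
    rw [X.val_succ]
  have := X.cnt_exact _ (X.B_sub hmem)
  rw [if_pos hmem] at this
  rw [← X.cnt_pair]
  exact this

lemma euler : (X.n : ℤ) - (X.G.edgeSet.ncard : ℤ) + ((X.FF.card : ℤ) + 1) = 2 := by
  rw [X.edge_ncard]
  have h1 := X.ED_card
  have h2 := X.FF_card
  have h3 := X.npos
  omega

end Ctx
end NCT

/-- For `n ≥ 2k`, the nested-cycle triangulation `T(n,k)` (built from
`c = ⌊n/k⌋` nested `k`-cycles, the outermost being the boundary, with annuli between
consecutive cycles triangulated evenly, `r = n - ck` residual vertices subdividing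
evenly-spread edges of the innermost `k`-cycle, and the inner cycle triangulated by a
comb path) has maximum degree at most `7`: there is an `(n,k)`-triangulation with the
nested-cycle structure all of whose degrees are at most `7`. -/
theorem stmt_14 (n k : ℕ) (h3 : 3 ≤ k) (h2k : 2 * k ≤ n) :
    ∃ (t : PolyTri n k) (cyc : ℕ → ZMod k → Fin n),
      (∀ j, cyc 0 j = t.boundary j) ∧
      (∀ i, i < n / k → Function.Injective (cyc i)) ∧
      (∀ i i', i < n / k → i' < n / k → i ≠ i' →
        Disjoint (Set.range (cyc i)) (Set.range (cyc i'))) ∧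
      (∀ i (j : ZMod k), i + 1 < n / k → t.G.Adj (cyc i j) (cyc i (j + 1))) ∧
      (∀ i (j : ZMod k), i + 1 < n / k →
        t.G.Adj (cyc i j) (cyc (i + 1) j) ∧ t.G.Adj (cyc i j) (cyc (i + 1) (j + 1))) ∧
      (∀ v : Fin n, (t.G.neighborSet v).ncard ≤ 7) := by
  classical
  haveI : NeZero k := ⟨by omega⟩
  have hk0 : 0 < k := by omega
  have hc2 : 2 ≤ n / k := by
    rw [Nat.le_div_iff_mul_le hk0]
    omega
  set X : NCT.Ctx := ⟨n, k, n / k, n % k, h3, hc2, Nat.mod_lt _ hk0,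
    by rw [Nat.mul_comm]; exact (Nat.div_add_mod n k).symm⟩ with hX
  have hXc : X.c = n / k := rfl
  have hXk : X.k = k := rfl
  have hval : ∀ z : ZMod k, z.val < X.k := fun z => by rw [hXk]; exact ZMod.val_lt z
  refine ⟨⟨X.G, X.bnd, X.bnd_inj, X.bnd_adj, X.FF, X.faces_card3, X.faces_clique,
    X.edge_two, X.bnd_one, X.connected, X.euler⟩,
    fun i z => X.gv i z.val, ?_, ?_, ?_, ?_, ?_, ?_⟩
  · intro j
    rfl
  · intro i hi a b h
    have h' : X.gv i a.val = X.gv i b.val := h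
    rw [X.gv_eq_gv (by omega) (hval a) (by omega) (hval b)] at h'
    exact ZMod.val_injective _ h'.2
  · intro i i' hi hi' hne
    rw [Set.disjoint_left]
    rintro x ⟨a, rfl⟩ ⟨b, hb⟩
    have hb' : X.gv i' b.val = X.gv i a.val := hb
    rw [X.gv_eq_gv (by omega) (hval b) (by omega) (hval a)] at hb'
    exact hne hb'.1.symm
  · intro i z hi
    show X.G.Adj (X.gv i z.val) (X.gv i (z+1).val)
    rw [X.val_succ]
    exact X.adj_of_mem (X.mk_E1 (by omega) (hval z))
  · intro i z hi
    constructor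
    · exact X.adj_of_mem (X.mk_E2a (by omega) (hval z))
    · show X.G.Adj (X.gv i z.val) (X.gv (i+1) (z+1).val)
      rw [X.val_succ]
      exact X.adj_of_mem (X.mk_E2b (by omega) (hval z))
  · exact X.deg_le
end

section
/- Let w ≥ 0 and h ≥ 2 be integers, c ≥ 2 an integer with h ≤ c, and 0 ≤ r/k < 1 a real. Then (w + h − 1/3)/((w+1)h + (w+2)(r/k) + 1) ≥ 1/(c + r/k). Equivalently, ((w+1)/(w+h−1/3))·h + 1/(w+h−1/3) ≤ c + ((h − 7/3)/(w+h−1/3))·(r/k). -/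
/-- For integers `w ≥ 0`, `h ≥ 2`, `c ≥ 2` with `h ≤ c`, and a real
`0 ≤ ρ < 1` (standing for `r/k`):
`(w + h - 1/3)/((w+1)h + (w+2)ρ + 1) ≥ 1/(c + ρ)`, and equivalently
`((w+1)/(w+h-1/3))·h + 1/(w+h-1/3) ≤ c + ((h - 7/3)/(w+h-1/3))·ρ`. -/
theorem stmt_16 (w h c : ℕ) (hh : 2 ≤ h) (hc : 2 ≤ c) (hhc : h ≤ c)
    (ρ : ℝ) (hρ0 : 0 ≤ ρ) (hρ1 : ρ < 1) :
    ((w : ℝ) + h - 1 / 3) / (((w : ℝ) + 1) * h + ((w : ℝ) + 2) * ρ + 1)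
        ≥ 1 / ((c : ℝ) + ρ) ∧
    (((w : ℝ) + 1) / ((w : ℝ) + h - 1 / 3)) * h + 1 / ((w : ℝ) + h - 1 / 3)
        ≤ (c : ℝ) + (((h : ℝ) - 7 / 3) / ((w : ℝ) + h - 1 / 3)) * ρ := by
  have hW : (0:ℝ) ≤ w := Nat.cast_nonneg w
  have hH : (2:ℝ) ≤ h := by exact_mod_cast hh
  have hC : (2:ℝ) ≤ c := by exact_mod_cast hc
  have hHC : (h:ℝ) ≤ c := by exact_mod_cast hhc
  have hD : (0:ℝ) < (w:ℝ) + h - 1/3 := by nlinarith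
  have hB : (0:ℝ) < ((w : ℝ) + 1) * h + ((w : ℝ) + 2) * ρ + 1 := by nlinarith
  have hCρ : (0:ℝ) < (c:ℝ) + ρ := by nlinarith
  have key : ((w : ℝ) + 1) * h + ((w : ℝ) + 2) * ρ + 1 ≤ ((w:ℝ) + h - 1/3) * ((c:ℝ) + ρ) := by
    rcases le_or_gt 3 (h:ℝ) with h3 | h3
    · nlinarith [mul_nonneg (sub_nonneg.2 hHC) hD.le, mul_nonneg (sub_nonneg.2 h3) hρ0]
    · have h2 : (h:ℝ) = 2 := by
        have h3' : h < 3 := by exact_mod_cast h3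
        have : h = 2 := le_antisymm (Nat.lt_succ_iff.mp h3') hh
        exact_mod_cast this
      nlinarith [mul_nonneg (sub_nonneg.2 hC) (sub_nonneg.2 hρ1.le)]
  constructor
  · rw [ge_iff_le, div_le_div_iff₀ hCρ hB]
    nlinarith [key]
  · have key2 : ((w:ℝ)+1)*h + 1 ≤ ((c:ℝ)*((w:ℝ)+h-1/3) + ((h:ℝ)-7/3)*ρ) := by nlinarith [key]
    calc (((w : ℝ) + 1) / ((w : ℝ) + h - 1 / 3)) * h + 1 / ((w : ℝ) + h - 1 / 3)
        = (((w:ℝ)+1)*h + 1) / ((w : ℝ) + h - 1 / 3) := by ring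
      _ ≤ ((c:ℝ)*((w:ℝ)+h-1/3) + ((h:ℝ)-7/3)*ρ) / ((w : ℝ) + h - 1 / 3) := by
          gcongr
      _ = (c : ℝ) + (((h : ℝ) - 7 / 3) / ((w : ℝ) + h - 1 / 3)) * ρ := by
          rw [add_div, mul_div_assoc, div_self hD.ne', mul_one,
            div_mul_eq_mul_div, mul_div_assoc]
end
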